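/- arXiv:1106.2917 — 7 statements merged into one kernel-verified Lean document; each statement's English description precedes it below -/
import Mathlib

section
/- Let K be a compact Hausdorff space, let (fₙ) be a sequence in C(K) which generates a copy of c₀, let ε > 0, and let (aₙ) be a sequence of clopen subsets of K such that ‖fₙ·χ_{aₙ}‖ > ε for every n, where χ_{aₙ} is the characteristic function of aₙ. Then there is an infinite set M ⊆ ℕ such that the sequence (fₙ·χ_{aₙ})_{n∈M} generates a copy of c₀. -/
open Topology Filter

noncomputable section

set_option maxHeartbeats 1000000
set_option synthInstance.maxHeartbeats 400000

/-- A sequence generates a copy of `c₀` if it is equivalent to the standard basis of `c₀`. -/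
def GeneratesC0 {X : Type*} [NormedAddCommGroup X] [NormedSpace ℝ X] (f : ℕ → X) : Prop :=
  ∃ c C : ℝ, 0 < c ∧ c ≤ C ∧ ∀ α : ℕ →₀ ℝ,
    c * (⨆ m, |α m|) ≤ ‖α.sum fun m a => a • f m‖ ∧
      ‖α.sum fun m a => a • f m‖ ≤ C * (⨆ m, |α m|)

/-! The upper `c₀`-estimate for `(fₙ)`, tested on sign vectors, gives `∑ₙ |fₙ z| ≤ C` at every
point `z`, hence `∑ₙ |gₙ z| ≤ C` since `|gₙ| ≤ |fₙ|`. Pick `xₙ` with `|gₙ xₙ| > ε`. Rosenthal's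
lemma for the matrix `|g_k x_n|`, whose rows sum to at most `C`, gives a subsequence along which
`∑_{k ≠ n} |g_k x_n| ≤ ε / 2`. Evaluating `∑ α_k g_k` at `x_i`, where `|α_i|` is maximal, yields
the lower estimate `(ε / 2) max |α_k|`; the pointwise bound yields the upper one `C max |α_k|`. -/

open Finset

theorem Filter.exists_strictMono_forall_lt_of_eventually {U : Filter ℕ} [U.NeBot]
    (hU : U ≤ atTop) {P : ℕ → Prop} {R : ℕ → ℕ → Prop} (hP : ∀ᶠ n in U, P n)
    (hR : ∀ m, ∀ᶠ n in U, R m n) :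
    ∃ φ : ℕ → ℕ, StrictMono φ ∧ (∀ n, P (φ n)) ∧ ∀ m n, m < n → R (φ m) (φ n) := by
  have hfin : ∀ t : Set ℕ, t.Finite → ∃ n, P n ∧ ∀ m ∈ t, m < n ∧ R m n := fun t ht =>
    (hP.and <| ht.eventually_all.2 fun m _ =>
      Eventually.and (hU (eventually_gt_atTop m)) (hR m)).exists
  obtain ⟨φ, hφ⟩ := Set.seq_of_forall_finite_exists hfin
  have hlt : ∀ m n, m < n → φ m < φ n ∧ R (φ m) (φ n) := fun m n hmn =>
    (hφ n).2 (φ m) ⟨m, hmn, rfl⟩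
  exact ⟨φ, fun m n hmn => (hlt m n hmn).1, fun n => (hφ n).1, fun m n hmn => (hlt m n hmn).2⟩

theorem Summable.exists_sum_tail_le {f : ℕ → ℝ} (hf : Summable f) {δ : ℝ}
    (hδ : 0 < δ) : ∃ T, ∀ t : Finset ℕ, (∀ j ∈ t, T ≤ j) → ∑ j ∈ t, f j ≤ δ := by
  obtain ⟨s, hs⟩ := hf.vanishing (Metric.ball_mem_nhds 0 hδ)
  refine ⟨s.sup id + 1, fun t ht => ?_⟩
  have hdisj : Disjoint t s := disjoint_left.2 fun j hjt hjs =>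
    (ht j hjt).not_gt (Nat.lt_succ_of_le (le_sup (f := id) hjs))
  have hsmall := hs t hdisj
  rw [Metric.mem_ball, dist_zero_right, Real.norm_eq_abs] at hsmall
  exact (le_abs_self _).trans hsmall.le

theorem Ultrafilter.exists_summable_tendsto {ι : Type*} (U : Ultrafilter ι) {r : ι → ℕ → ℝ}
    (hr : ∀ n k, 0 ≤ r n k) {C : ℝ} (hC : ∀ n (s : Finset ℕ), ∑ k ∈ s, r n k ≤ C) :
    ∃ ρ : ℕ → ℝ, Summable ρ ∧ ∀ k, Tendsto (fun n => r n k) U (𝓝 (ρ k)) := by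
  have hlim : ∀ k, ∃ y, Tendsto (fun n => r n k) U (𝓝 y) := fun k => by
    have hmem : ↑(U.map fun n => r n k) ≤ 𝓟 (Set.Icc 0 C) :=
      tendsto_principal.2 (.of_forall fun n => ⟨hr n k, by simpa using hC n {k}⟩)
    obtain ⟨y, -, hy⟩ := isCompact_Icc.ultrafilter_le_nhds _ hmem
    exact ⟨y, hy⟩
  choose ρ hρ using hlim
  have hρ0 : ∀ k, 0 ≤ ρ k := fun k => ge_of_tendsto' (hρ k) fun n => hr n k
  have hρC : ∀ s : Finset ℕ, ∑ k ∈ s, ρ k ≤ C := fun s =>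
    le_of_tendsto' (tendsto_finsetSum s fun k _ => hρ k) fun n => hC n s
  exact ⟨ρ, summable_of_sum_le hρ0 hρC, hρ⟩

/-- Rosenthal's lemma. -/
theorem exists_strictMono_sum_offDiag_le {r : ℕ → ℕ → ℝ} (hr : ∀ n k, 0 ≤ r n k) {C : ℝ}
    (hC : ∀ n (s : Finset ℕ), ∑ k ∈ s, r n k ≤ C) {δ : ℝ} (hδ : 0 < δ) :
    ∃ φ : ℕ → ℕ, StrictMono φ ∧ ∀ i (s : Finset ℕ), i ∉ s → ∑ j ∈ s, r (φ i) (φ j) ≤ δ := by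
  have hU : (hyperfilter ℕ : Filter ℕ) ≤ atTop := Nat.cofinite_eq_atTop ▸ hyperfilter_le_cofinite
  -- Along a free ultrafilter the rows converge to a summable `ρ`. All chosen indices lie in the
  -- `δ / 2`-tail of `ρ + 2⁻ᵐ`; a later row lies below `ρ m + 2⁻ᵐ` on each earlier column `m`,
  -- and a later column lies in the `δ / 2`-tail of each earlier row.
  obtain ⟨ρ, hρ, hlim⟩ := (hyperfilter ℕ).exists_summable_tendsto hr hC
  obtain ⟨T₀, hT₀⟩ := (hρ.add summable_geometric_two).exists_sum_tail_le (half_pos hδ)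
  choose T hT using fun n =>
    (summable_of_sum_le (hr n) (hC n)).exists_sum_tail_le (half_pos hδ)
  have hR : ∀ m, ∀ᶠ n in hyperfilter ℕ, r n m ≤ ρ m + (1 / 2) ^ m ∧ T m ≤ n := fun m =>
    ((hlim m).eventually (ge_mem_nhds (lt_add_of_pos_right _ (by positivity)))).and
      (hU (eventually_ge_atTop (T m)))
  obtain ⟨φ, hφ, hφT₀, hφR⟩ :=
    exists_strictMono_forall_lt_of_eventually hU (hU (eventually_ge_atTop T₀)) hR
  refine ⟨φ, hφ, fun i s hi => ?_⟩
  let φe : ℕ ↪ ℕ := ⟨φ, hφ.injective⟩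
  have hback : ∑ j ∈ s with j < i, r (φ i) (φ j) ≤ δ / 2 := calc
    _ ≤ ∑ j ∈ s with j < i, (ρ (φ j) + (1 / 2) ^ φ j) :=
      sum_le_sum fun j hj => (hφR j i (mem_filter.1 hj).2).1
    _ = ∑ k ∈ (s.filter (· < i)).map φe, (ρ k + (1 / 2) ^ k) :=
      (sum_map _ φe fun k => ρ k + (1 / 2) ^ k).symm
    _ ≤ δ / 2 := hT₀ _ <| by
      simp only [Finset.mem_map]
      rintro _ ⟨j, -, rfl⟩
      exact hφT₀ j
  have hfwd : ∑ j ∈ s with ¬ j < i, r (φ i) (φ j) ≤ δ / 2 := by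
    refine (sum_map _ φe (r (φ i))).symm.trans_le (hT _ _ ?_)
    simp only [Finset.mem_map, mem_filter, not_lt]
    rintro _ ⟨j, ⟨hj, hij⟩, rfl⟩
    exact (hφR i j (hij.lt_of_ne (ne_of_mem_of_not_mem hj hi).symm)).2
  linarith [sum_filter_add_sum_filter_not s (· < i) fun j => r (φ i) (φ j)]

namespace Finsupp

variable {ι : Type*}

theorem finite_range_abs (α : ι →₀ ℝ) : (Set.range fun m => |α m|).Finite :=
  Set.range_comp abs α ▸ α.finite_range.image abs

theorem abs_le_iSup_abs (α : ι →₀ ℝ) (m : ι) : |α m| ≤ ⨆ m, |α m| :=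
  le_ciSup α.finite_range_abs.bddAbove m

theorem exists_abs_eq_iSup_abs [Nonempty ι] (α : ι →₀ ℝ) : ∃ i, |α i| = ⨆ m, |α m| :=
  (Set.range_nonempty _).csSup_mem α.finite_range_abs

end Finsupp

namespace ContinuousMap

variable {K : Type*} [TopologicalSpace K]

theorem finsuppSum_smul_apply {ι : Type*} (α : ι →₀ ℝ) (u : ι → C(K, ℝ)) (z : K) :
    (α.sum fun m a => a • u m) z = α.sum fun m a => a * u m z := by
  simp [Finsupp.sum]

variable [CompactSpace K]

theorem sum_abs_apply_le_of_norm_finsuppSum_le {u : ℕ → C(K, ℝ)} {C : ℝ} (hC : 0 ≤ C)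
    (hu : ∀ α : ℕ →₀ ℝ, ‖α.sum fun m a => a • u m‖ ≤ C * ⨆ m, |α m|) (z : K)
    (s : Finset ℕ) : ∑ k ∈ s, |u k z| ≤ C := by
  classical
  let α : ℕ →₀ ℝ := Finsupp.indicator s fun k _ => (SignType.sign (u k z) : ℝ)
  have hα : ∀ k, α k = if k ∈ s then (SignType.sign (u k z) : ℝ) else 0 := fun k => by
    simp [α, Finsupp.indicator_apply]
  have hαle : ⨆ m, |α m| ≤ 1 := ciSup_le fun k => by
    rw [hα]
    split_ifs
    · rcases SignType.sign (u k z) with _ | _ | _ <;> simp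
    · simp
  calc ∑ k ∈ s, |u k z| = (α.sum fun m a => a • u m) z := by
        rw [finsuppSum_smul_apply, Finsupp.sum_of_support_subset _
          (Finsupp.support_indicator_subset _ _) _ fun _ _ => zero_mul _]
        exact sum_congr rfl fun k hk => by rw [hα, if_pos hk, sign_mul_self]
    _ ≤ ‖α.sum fun m a => a • u m‖ := apply_le_norm _ z
    _ ≤ C * ⨆ m, |α m| := hu α
    _ ≤ C := mul_le_of_le_one_right hC hαle

theorem norm_finsuppSum_le_of_sum_abs_apply_le {u : ℕ → C(K, ℝ)} {C : ℝ} (hC : 0 ≤ C)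
    (hu : ∀ z (s : Finset ℕ), ∑ k ∈ s, |u k z| ≤ C) (α : ℕ →₀ ℝ) :
    ‖α.sum fun m a => a • u m‖ ≤ C * ⨆ m, |α m| := by
  have hM : 0 ≤ ⨆ m, |α m| := (abs_nonneg (α 0)).trans (α.abs_le_iSup_abs 0)
  refine (norm_le _ (mul_nonneg hC hM)).2 fun z => ?_
  rw [Real.norm_eq_abs, finsuppSum_smul_apply]
  calc |∑ k ∈ α.support, α k * u k z| ≤ ∑ k ∈ α.support, |α k| * |u k z| :=
        (abs_sum_le_sum_abs _ _).trans_eq (sum_congr rfl fun _ _ => abs_mul _ _)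
    _ ≤ ∑ k ∈ α.support, (⨆ m, |α m|) * |u k z| :=
        sum_le_sum fun k _ => mul_le_mul_of_nonneg_right (α.abs_le_iSup_abs k) (abs_nonneg _)
    _ ≤ (⨆ m, |α m|) * C := by rw [← mul_sum]; exact mul_le_mul_of_nonneg_left (hu z _) hM
    _ = C * ⨆ m, |α m| := mul_comm _ _

theorem le_norm_finsuppSum_of_sum_abs_apply_le {u : ℕ → C(K, ℝ)} {x : ℕ → K} {ε δ : ℝ}
    (hdiag : ∀ n, ε ≤ |u n (x n)|) (hoff : ∀ n (s : Finset ℕ), n ∉ s → ∑ k ∈ s, |u k (x n)| ≤ δ)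
    (α : ℕ →₀ ℝ) : (ε - δ) * ⨆ m, |α m| ≤ ‖α.sum fun m a => a • u m‖ := by
  classical
  obtain ⟨i, hi⟩ := α.exists_abs_eq_iSup_abs
  set M := ⨆ m, |α m|
  have hM : 0 ≤ M := hi ▸ abs_nonneg _
  let t := (insert i α.support).erase i
  have hsplit :
      (α.sum fun m a => a • u m) (x i) = α i * u i (x i) + ∑ k ∈ t, α k * u k (x i) := by
    rw [finsuppSum_smul_apply, Finsupp.sum_of_support_subset _ (subset_insert i _) _
      fun _ _ => zero_mul _, ← add_sum_erase _ _ (mem_insert_self i _)]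
  have hrest : |∑ k ∈ t, α k * u k (x i)| ≤ M * δ := calc
    _ ≤ ∑ k ∈ t, |α k| * |u k (x i)| :=
        (abs_sum_le_sum_abs _ _).trans_eq (sum_congr rfl fun _ _ => abs_mul _ _)
    _ ≤ ∑ k ∈ t, M * |u k (x i)| :=
        sum_le_sum fun k _ => mul_le_mul_of_nonneg_right (α.abs_le_iSup_abs k) (abs_nonneg _)
    _ ≤ M * δ := by
        rw [← mul_sum]
        exact mul_le_mul_of_nonneg_left (hoff i t (notMem_erase i _)) hM
  calc (ε - δ) * M ≤ |α i * u i (x i)| - |∑ k ∈ t, α k * u k (x i)| := by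
        rw [abs_mul, hi]; nlinarith [hdiag i]
    _ ≤ |(α.sum fun m a => a • u m) (x i)| := hsplit ▸ abs_sub_abs_le_abs_add _ _
    _ ≤ ‖α.sum fun m a => a • u m‖ := by
        simpa only [Real.norm_eq_abs] using (α.sum fun m a => a • u m).norm_coe_le_norm (x i)

theorem generatesC0_of_sum_abs_apply_le {u : ℕ → C(K, ℝ)} {x : ℕ → K} {C ε δ : ℝ}
    (hu : ∀ z (s : Finset ℕ), ∑ k ∈ s, |u k z| ≤ C) (hdiag : ∀ n, ε ≤ |u n (x n)|)
    (hoff : ∀ n (s : Finset ℕ), n ∉ s → ∑ k ∈ s, |u k (x n)| ≤ δ) (hδε : δ < ε) :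
    GeneratesC0 u := by
  have hδ : 0 ≤ δ := by simpa using hoff 0 ∅ (notMem_empty 0)
  have hεC : ε ≤ C := (hdiag 0).trans (by simpa using hu (x 0) {0})
  refine ⟨ε - δ, C, sub_pos.2 hδε, by linarith, fun α => ⟨?_, ?_⟩⟩
  · exact le_norm_finsuppSum_of_sum_abs_apply_le hdiag hoff α
  · exact norm_finsuppSum_le_of_sum_abs_apply_le (by linarith) hu α

end ContinuousMap

open ContinuousMap in
theorem generatesC0_of_restrictions_general (K : Type*) [TopologicalSpace K] [CompactSpace K]
    (f : ℕ → C(K, ℝ)) (hf : GeneratesC0 f) (ε : ℝ) (hε : 0 < ε)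
    (a : ℕ → Set K)
    (g : ℕ → C(K, ℝ))
    (hg : ∀ n x, g n x = f n x * Set.indicator (a n) (fun _ => (1 : ℝ)) x)
    (hnorm : ∀ n, ε < ‖g n‖) :
    ∃ φ : ℕ → ℕ, StrictMono φ ∧ GeneratesC0 (fun k => g (φ k)) := by
  obtain ⟨c, C, hc, hcC, hfC⟩ := hf
  have hgf : ∀ n z, |g n z| ≤ |f n z| := fun n z => by
    rw [hg, abs_mul]
    exact mul_le_of_le_one_right (abs_nonneg _) (by by_cases z ∈ a n <;> simp [*])
  have hgC : ∀ z (s : Finset ℕ), ∑ k ∈ s, |g k z| ≤ C := fun z s =>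
    (sum_le_sum fun k _ => hgf k z).trans <|
      sum_abs_apply_le_of_norm_finsuppSum_le (hc.le.trans hcC) (fun α => (hfC α).2) z s
  have hpeak : ∀ n, ∃ z, ε < |g n z| := fun n => by
    by_contra! h
    exact (hnorm n).not_ge ((norm_le _ hε.le).2 h)
  choose x hx using hpeak
  obtain ⟨φ, hφ, hoff⟩ := exists_strictMono_sum_offDiag_le
    (fun n k => abs_nonneg (g k (x n))) (fun n => hgC (x n)) (half_pos hε)
  have hgφC : ∀ z (s : Finset ℕ), ∑ k ∈ s, |g (φ k) z| ≤ C := fun z s =>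
    (sum_map s ⟨φ, hφ.injective⟩ fun k => |g k z|).symm.trans_le (hgC z _)
  exact ⟨φ, hφ, generatesC0_of_sum_abs_apply_le (x := x ∘ φ) hgφC (fun n => (hx (φ n)).le) hoff
    (half_lt_self hε)⟩

/-- If `(fₙ)` generates a copy of `c₀`, `aₙ` are clopen sets and `‖fₙ·χ_{aₙ}‖ > ε`, then some
infinite subsequence of `(fₙ·χ_{aₙ})` generates a copy of `c₀`. -/
theorem generatesC0_of_restrictions (K : Type*) [TopologicalSpace K] [CompactSpace K]
    [T2Space K] (f : ℕ → C(K, ℝ)) (hf : GeneratesC0 f) (ε : ℝ) (hε : 0 < ε)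
    (a : ℕ → Set K) (ha : ∀ n, IsClopen (a n))
    (g : ℕ → C(K, ℝ))
    (hg : ∀ n x, g n x = f n x * Set.indicator (a n) (fun _ => (1 : ℝ)) x)
    (hnorm : ∀ n, ε < ‖g n‖) :
    ∃ φ : ℕ → ℕ, StrictMono φ ∧ GeneratesC0 (fun k => g (φ k)) :=
  generatesC0_of_restrictions_general K f hf ε hε a g hg hnorm
end
end

section
/- Let K be a compact Hausdorff space, let (fₙ) be a bounded sequence of non-negative pairwise disjoint functions in C(K) (i.e. fₙ·fₘ = 0 for n ≠ m), let (ζₙ) be a bounded sequence of bounded linear functionals on C(K), and let ε > 0. Then there is an infinite set M ⊆ ℕ such that for every subset M' ⊆ M for which the family {fₙ : n ∈ M'} has a least upper bound f_{M'} in the lattice C(K) (with the pointwise order), one has |ζ_k(f_{M'}) − ζ_k(f_k)| < ε for every k ∈ M' and |ζ_k(f_{M'})| < ε for every k ∈ M \ M'. -/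
open Topology Filter Set

noncomputable section

set_option maxHeartbeats 1000000
set_option synthInstance.maxHeartbeats 400000


/-- Combinatorial Rosenthal lemma. -/
lemma rosenthal_comb (β : ℕ → Set ℕ → ℝ) (B ε : ℝ) (hε : 0 < ε)
    (hsuper : ∀ k, ∀ S T : Set ℕ, Disjoint S T → β k S + β k T ≤ β k (S ∪ T))
    (hnonneg : ∀ k S, 0 ≤ β k S)
    (hbound : ∀ k S, β k S ≤ B) :
    ∃ M : Set ℕ, M.Infinite ∧ ∀ k ∈ M, β k (M \ {k}) < ε := by
  by_contra hcon
  push_neg at hcon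
  -- hcon : ∀ M, M.Infinite → ∃ k ∈ M, ε ≤ β k (M \ {k})
  have key : ∀ r : ℕ, ∃ (R : Set ℕ) (D : ℕ → Set ℕ), R.Infinite ∧
      ∀ k ∈ R, Disjoint (D k) R ∧ (r : ℝ) * ε ≤ β k (D k) := by
    intro r
    induction r with
    | zero =>
      exact ⟨Set.univ, fun _ => ∅, Set.infinite_univ,
        fun k _ => ⟨disjoint_bot_left, by simpa using hnonneg k ∅⟩⟩
    | succ r ih =>
      obtain ⟨R, D, hR, hinv⟩ := ih
      -- enumerate R
      set e : ℕ → ℕ := Nat.nth (· ∈ R) with he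
      have hRset : {n | n ∈ R}.Infinite := hR
      have hemem : ∀ j, e j ∈ R := fun j => Nat.nth_mem_of_infinite hRset j
      have heinj : Function.Injective e := Nat.nth_injective hRset
      -- partition into infinitely many infinite pieces
      set P : ℕ → Set ℕ := fun i => Set.range (fun j => e (Nat.pair i j)) with hP
      have hPsub : ∀ i, P i ⊆ R := by
        rintro i x ⟨j, rfl⟩; exact hemem _
      have hPinj : ∀ i, Function.Injective (fun j => e (Nat.pair i j)) := by
        intro i j₁ j₂ h
        have := heinj h
        have := Nat.pair_eq_pair.mp this
        exact this.2
      have hPinf : ∀ i, (P i).Infinite :=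
        fun i => Set.infinite_range_of_injective (hPinj i)
      have hPdisj : ∀ i i', i ≠ i' → Disjoint (P i) (P i') := by
        intro i i' hne
        rw [Set.disjoint_left]
        rintro x ⟨j, rfl⟩ ⟨j', hj'⟩
        have h2 := heinj hj'
        exact hne (Nat.pair_eq_pair.mp h2).1.symm
      -- choose bad elements
      have hchoice : ∀ i, ∃ k ∈ P i, ε ≤ β k (P i \ {k}) := fun i => hcon (P i) (hPinf i)
      choose κ hκmem hκbad using hchoice
      have hκinj : Function.Injective κ := by
        intro i i' h
        by_contra hne
        exact (hPdisj i i' hne).ne_of_mem (hκmem i) (hκmem i') h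
      classical
      refine ⟨Set.range κ, fun m => if h : ∃ i, κ i = m then D m ∪ (P h.choose \ {m}) else ∅,
        Set.infinite_range_of_injective hκinj, ?_⟩
      rintro m ⟨i₀, rfl⟩
      have hex : ∃ i, κ i = κ i₀ := ⟨i₀, rfl⟩
      simp only [dif_pos hex]
      set i := hex.choose with hi
      have hκi : κ i = κ i₀ := hex.choose_spec
      have hmemR : κ i₀ ∈ R := hPsub i (hκi ▸ hκmem i)
      obtain ⟨hDdisj, hDbd⟩ := hinv _ hmemR
      have hPiR : P i \ {κ i₀} ⊆ R := fun x hx => hPsub i hx.1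
      have hdisj2 : Disjoint (D (κ i₀)) (P i \ {κ i₀}) :=
        hDdisj.mono_right hPiR
      constructor
      · rw [Set.disjoint_left]
        rintro x hx ⟨i', rfl⟩
        rcases hx with hx | hx
        · exact (hDdisj.ne_of_mem hx (hPsub i' (hκmem i'))) rfl
        · -- x = κ i' ∈ P i \ {κ i₀}
          have : i' = i := by
            by_contra hne
            exact (hPdisj i' i hne).ne_of_mem (hκmem i') hx.1 rfl
          subst this
          exact hx.2 (by simp [hκi])
      · have := hsuper (κ i₀) _ _ hdisj2
        have hb : ε ≤ β (κ i₀) (P i \ {κ i₀}) := by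
          have := hκbad i; rwa [hκi] at this
        push_cast
        nlinarith [hnonneg (κ i₀) (D (κ i₀))]
  obtain ⟨r, hr⟩ := exists_nat_ge (B / ε)
  obtain ⟨R, D, hR, hinv⟩ := key (r + 1)
  obtain ⟨k, hk⟩ := hR.nonempty
  have h1 := (hinv k hk).2
  have h2 := hbound k (D k)
  have hB : B ≤ r * ε := (div_le_iff₀ hε).mp hr
  push_cast at h1
  nlinarith

/-- Rosenthal-type stabilization: given a bounded pairwise disjoint sequence of non-negative
functions `(fₙ)` in `C(K)`, a bounded sequence of functionals `(ζₙ)` and `ε > 0`, there is an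
infinite `M ⊆ ℕ` such that whenever `M' ⊆ M` and `sup_{n ∈ M'} fₙ` exists in the lattice
`C(K)`, the functionals `ζ_k` almost do not see the difference between `f_{M'}` and `f_k`. -/
theorem rosenthal_supremum_stabilization (K : Type*) [TopologicalSpace K] [CompactSpace K]
    [T2Space K] (f : ℕ → C(K, ℝ))
    (hbdd : ∃ C : ℝ, ∀ n, ‖f n‖ ≤ C)
    (hpos : ∀ n, 0 ≤ f n)
    (hdisj : ∀ n m, n ≠ m → f n * f m = 0)
    (ζ : ℕ → C(K, ℝ) →L[ℝ] ℝ)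
    (hζ : ∃ C : ℝ, ∀ n, ‖ζ n‖ ≤ C)
    (ε : ℝ) (hε : 0 < ε) :
    ∃ M : Set ℕ, M.Infinite ∧
      ∀ M' : Set ℕ, M' ⊆ M → ∀ g : C(K, ℝ), IsLUB {h : C(K, ℝ) | ∃ n ∈ M', h = f n} g →
        (∀ k ∈ M', |ζ k g - ζ k (f k)| < ε) ∧ (∀ k ∈ M \ M', |ζ k g| < ε) := by
  rcases isEmpty_or_nonempty K with hK | hK
  · -- trivial case: K empty, all continuous maps are equal
    haveI : Subsingleton C(K, ℝ) := ⟨fun a b => ContinuousMap.ext fun x => (IsEmpty.false x).elim⟩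
    refine ⟨Set.univ, Set.infinite_univ, fun M' _ g _ => ⟨fun k _ => ?_, fun k _ => ?_⟩⟩
    · rw [Subsingleton.elim g (f k)]; simpa using hε
    · rw [Subsingleton.elim g 0]; simpa using hε
  obtain ⟨C, hC⟩ := hbdd
  have hC0 : 0 ≤ C := le_trans (norm_nonneg _) (hC 0)
  obtain ⟨D, hD⟩ := hζ
  -- the supports
  set U : ℕ → Set K := fun n => {x | f n x ≠ 0} with hU
  have hUopen : ∀ n, IsOpen (U n) :=
    fun n => isOpen_compl_singleton.preimage (f n).continuous
  have hUdisj : ∀ n m, n ≠ m → ∀ x, x ∈ U n → x ∉ U m := by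
    intro n m hnm x hxn hxm
    have := congrArg (fun h : C(K, ℝ) => h x) (hdisj n m hnm)
    simp only [ContinuousMap.mul_apply, ContinuousMap.zero_apply] at this
    rcases mul_eq_zero.mp this with h | h
    · exact hxn h
    · exact hxm h
  set J : Set ℕ → Set K := fun S => closure (⋃ n ∈ S, U n) with hJ
  set O : Set ℕ → Set K := fun S => interior (J S) with hO
  have hJmono : ∀ S T : Set ℕ, S ⊆ T → J S ⊆ J T := by
    intro S T hST
    exact closure_mono (Set.biUnion_subset_biUnion_left hST)
  have hOmono : ∀ S T : Set ℕ, S ⊆ T → O S ⊆ O T :=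
    fun S T hST => interior_mono (hJmono S T hST)
  have hUJ : ∀ m (S : Set ℕ), m ∉ S → ∀ x ∈ U m, x ∉ J S := by
    intro m S hm x hx hxJ
    have hsub : (⋃ n ∈ S, U n) ⊆ (U m)ᶜ := by
      rintro y hy
      simp only [Set.mem_iUnion] at hy
      obtain ⟨n, hn, hyn⟩ := hy
      exact hUdisj n m (fun h => hm (h ▸ hn)) y hyn
    have := closure_minimal hsub (hUopen m).isClosed_compl hxJ
    exact this hx
  have hOdisj : ∀ S T : Set ℕ, Disjoint S T → ∀ x, x ∈ O S → x ∉ O T := by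
    intro S T hST x hxS hxT
    -- interior (J S) is open and disjoint from every U m, m ∈ T
    have hdisjU : ∀ m ∈ T, ∀ y ∈ O S, y ∉ U m := by
      intro m hm y hyS hym
      have hmS : m ∉ S := fun h => (Set.disjoint_left.mp hST h) hm
      exact hUJ m S hmS y hym (interior_subset hyS)
    -- hence O S is disjoint from ⋃_{m ∈ T} U m, and being open, from its closure
    have hsub : (⋃ m ∈ T, U m) ⊆ (O S)ᶜ := by
      rintro y hy hyS
      simp only [Set.mem_iUnion] at hy
      obtain ⟨m, hm, hym⟩ := hy
      exact hdisjU m hm y hyS hym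
    have hJT : J T ⊆ (O S)ᶜ :=
      closure_minimal hsub (isOpen_interior).isClosed_compl
    exact hJT (interior_subset hxT) hxS
  -- the functional quantity
  set A : ℕ → Set ℕ → Set ℝ := fun k S =>
    {r | ∃ h : C(K, ℝ), ‖h‖ ≤ 1 ∧ (∀ x, x ∉ O S → h x = 0) ∧ r = ζ k h} with hA
  have hA0 : ∀ k S, (0 : ℝ) ∈ A k S := by
    intro k S
    exact ⟨0, by simp, fun x _ => rfl, by simp⟩
  have hAbd : ∀ k S, ∀ r ∈ A k S, r ≤ D := by
    rintro k S r ⟨h, hh1, _, rfl⟩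
    calc ζ k h ≤ |ζ k h| := le_abs_self _
    _ ≤ ‖ζ k‖ * ‖h‖ := (ζ k).le_opNorm h
    _ ≤ D * 1 := by
        exact mul_le_mul (hD k) hh1 (norm_nonneg _) (le_trans (norm_nonneg (ζ k)) (hD k))
    _ = D := mul_one D
  have hAbdd : ∀ k S, BddAbove (A k S) := fun k S => ⟨D, fun r hr => hAbd k S r hr⟩
  set α : ℕ → Set ℕ → ℝ := fun k S => sSup (A k S) with hα
  have hαle : ∀ k S, ∀ r ∈ A k S, r ≤ α k S := fun k S r hr => le_csSup (hAbdd k S) hr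
  have hαabs : ∀ k S (h : C(K, ℝ)), ‖h‖ ≤ 1 → (∀ x, x ∉ O S → h x = 0) →
      |ζ k h| ≤ α k S := by
    intro k S h hh1 hh2
    rcases abs_cases (ζ k h) with ⟨heq, _⟩ | ⟨heq, _⟩
    · rw [heq]; exact hαle k S _ ⟨h, hh1, hh2, rfl⟩
    · rw [heq]
      refine hαle k S _ ⟨-h, by simpa using hh1, fun x hx => by simp [hh2 x hx], by simp⟩
  have hαnonneg : ∀ k S, 0 ≤ α k S := fun k S => hαle k S 0 (hA0 k S)
  have hαbound : ∀ k S, α k S ≤ D := fun k S => csSup_le ⟨0, hA0 k S⟩ (hAbd k S)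
  have hαsuper : ∀ k (S T : Set ℕ), Disjoint S T → α k S + α k T ≤ α k (S ∪ T) := by
    intro k S T hST
    have hmem : ∀ a ∈ A k S, ∀ b ∈ A k T, a + b ∈ A k (S ∪ T) := by
      rintro a ⟨h₁, h₁1, h₁2, rfl⟩ b ⟨h₂, h₂1, h₂2, rfl⟩
      refine ⟨h₁ + h₂, ?_, ?_, by simp⟩
      · rw [ContinuousMap.norm_le _ zero_le_one]
        intro x
        by_cases hx : x ∈ O S
        · have hx' : x ∉ O T := hOdisj S T hST x hx
          have := h₂2 x hx'
          simp only [ContinuousMap.add_apply, this, add_zero]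
          calc ‖h₁ x‖ ≤ ‖h₁‖ := (h₁).norm_coe_le_norm x
          _ ≤ 1 := h₁1
        · have := h₁2 x hx
          simp only [ContinuousMap.add_apply, this, zero_add]
          calc ‖h₂ x‖ ≤ ‖h₂‖ := (h₂).norm_coe_le_norm x
          _ ≤ 1 := h₂1
      · intro x hx
        have hxS : x ∉ O S := fun h => hx (hOmono S (S ∪ T) Set.subset_union_left h)
        have hxT : x ∉ O T := fun h => hx (hOmono T (S ∪ T) Set.subset_union_right h)
        simp [h₁2 x hxS, h₂2 x hxT]
    have h1 : ∀ a ∈ A k S, a ≤ α k (S ∪ T) - α k T := by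
      intro a ha
      have h2 : ∀ b ∈ A k T, b ≤ α k (S ∪ T) - a := by
        intro b hb
        have := hαle k (S ∪ T) _ (hmem a ha b hb)
        linarith
      have := csSup_le ⟨0, hA0 k T⟩ h2
      linarith
    have := csSup_le ⟨0, hA0 k S⟩ h1
    linarith
  -- Rosenthal
  have hε' : 0 < ε / (C + 1) := div_pos hε (by linarith)
  obtain ⟨M, hMinf, hM⟩ := rosenthal_comb α D (ε / (C + 1)) hε' hαsuper hαnonneg hαbound
  refine ⟨M, hMinf, ?_⟩
  intro M' hM'M g hg
  -- basic facts about g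
  obtain ⟨x₀⟩ := hK
  have hMne : M'.Nonempty := by
    by_contra hne
    rw [Set.not_nonempty_iff_eq_empty] at hne
    subst hne
    have hub : g - 1 ∈ upperBounds {h : C(K, ℝ) | ∃ n ∈ (∅ : Set ℕ), h = f n} := by
      rintro h ⟨n, hn, rfl⟩; exact absurd hn (Set.notMem_empty n)
    have := hg.2 hub
    have := ContinuousMap.le_def.mp this x₀
    simp at this
    linarith
  have hub : ∀ n ∈ M', f n ≤ g := fun n hn => hg.1 ⟨n, hn, rfl⟩
  have hg0 : ∀ x, 0 ≤ g x := by
    obtain ⟨n₀, hn₀⟩ := hMne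
    intro x
    exact le_trans (hpos n₀ x) (ContinuousMap.le_def.mp (hub n₀ hn₀) x)
  have hgC : ∀ x, g x ≤ C := by
    have hubC : ContinuousMap.const K C ∈ upperBounds {h : C(K, ℝ) | ∃ n ∈ M', h = f n} := by
      rintro h ⟨n, hn, rfl⟩
      rw [ContinuousMap.le_def]
      intro x
      calc f n x ≤ ‖f n x‖ := le_abs_self _
      _ ≤ ‖f n‖ := (f n).norm_coe_le_norm x
      _ ≤ C := hC n
    intro x
    exact ContinuousMap.le_def.mp (hg.2 hubC) x
  -- the pressing lemma
  have hpress : ∀ (V : Set K) (c : ℝ), IsOpen V → 0 < c →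
      (∀ n ∈ M', ∀ x ∈ V, f n x + c ≤ g x) → V = ∅ := by
    intro V c hV hc hcond
    by_contra hVne
    rw [← Set.not_nonempty_iff_eq_empty, not_not] at hVne
    obtain ⟨y₀, hy₀⟩ := hVne
    obtain ⟨φ, hφ0, hφ1, hφ01⟩ := exists_continuous_zero_one_of_isClosed
      (isClosed_singleton (x := y₀)) (hV.isClosed_compl)
      (by rwa [Set.disjoint_singleton_left, Set.notMem_compl_iff])
    -- h' := g - c • (1 - φ)
    set h' : C(K, ℝ) := g - c • ((1 : C(K, ℝ)) - φ) with hh'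
    have hub' : h' ∈ upperBounds {h : C(K, ℝ) | ∃ n ∈ M', h = f n} := by
      rintro h ⟨n, hn, rfl⟩
      rw [ContinuousMap.le_def]
      intro x
      by_cases hx : x ∈ V
      · have h1 : (1 : ℝ) - φ x ≤ 1 := by
          have := (hφ01 x).1; linarith
        have h2 : c * (1 - φ x) ≤ c := by nlinarith
        have := hcond n hn x hx
        simp only [hh', ContinuousMap.sub_apply, ContinuousMap.smul_apply,
          ContinuousMap.one_apply, smul_eq_mul]
        linarith
      · have : φ x = 1 := hφ1 hx
        simp only [hh', ContinuousMap.sub_apply, ContinuousMap.smul_apply,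
          ContinuousMap.one_apply, this]
        simp only [sub_self, mul_zero, smul_eq_mul, sub_zero]
        exact ContinuousMap.le_def.mp (hub n hn) x
    have hle := ContinuousMap.le_def.mp (hg.2 hub') y₀
    have : φ y₀ = 0 := hφ0 rfl
    simp only [hh', ContinuousMap.sub_apply, ContinuousMap.smul_apply,
      ContinuousMap.one_apply, this, smul_eq_mul] at hle
    linarith
  -- g vanishes off J M'
  have hgJ : ∀ x, x ∉ J M' → g x = 0 := by
    intro x hx
    by_contra hgx
    have hgx' : 0 < g x := lt_of_le_of_ne (hg0 x) (Ne.symm hgx)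
    set V : Set K := {y | g x / 2 < g y} ∩ (J M')ᶜ with hV
    have hVopen : IsOpen V :=
      (isOpen_lt continuous_const g.continuous).inter (isClosed_closure).isOpen_compl
    have hcond : ∀ n ∈ M', ∀ y ∈ V, f n y + g x / 2 ≤ g y := by
      intro n hn y hy
      have hyU : y ∉ U n := by
        intro hyU
        exact hy.2 (subset_closure (Set.mem_biUnion hn hyU))
      have : f n y = 0 := not_not.mp hyU
      rw [this, zero_add]
      exact le_of_lt hy.1
    have := hpress V (g x / 2) hVopen (by linarith) hcond
    have hxV : x ∈ V := ⟨by simp; linarith, hx⟩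
    rw [this] at hxV
    exact hxV
  -- g = f k on closure (U k), for k ∈ M'
  have hgU : ∀ k ∈ M', ∀ x ∈ closure (U k), g x = f k x := by
    intro k hk
    have honU : ∀ x ∈ U k, g x = f k x := by
      intro x hx
      by_contra hgx
      have hlek : f k x ≤ g x := ContinuousMap.le_def.mp (hub k hk) x
      have hgx' : 0 < g x - f k x := lt_of_le_of_ne (by linarith) (by intro h; exact hgx (by linarith))
      set c := g x - f k x with hc
      set V : Set K := {y | f k y + c / 2 < g y} ∩ U k with hV
      have hVopen : IsOpen V :=
        (isOpen_lt ((f k).continuous.add continuous_const) g.continuous).inter (hUopen k)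
      have hcond : ∀ n ∈ M', ∀ y ∈ V, f n y + c / 2 ≤ g y := by
        intro n hn y hy
        by_cases hnk : n = k
        · subst hnk; exact le_of_lt hy.1
        · have hyU : y ∉ U n := hUdisj k n (fun h => hnk h.symm) y hy.2
          have h0 : f n y = 0 := not_not.mp hyU
          have h1 : f k y + c / 2 < g y := hy.1
          have h2 : 0 ≤ f k y := hpos k y
          linarith
      have := hpress V (c / 2) hVopen (by linarith) hcond
      have hxV : x ∈ V := ⟨by simp; linarith, hx⟩
      rw [this] at hxV
      exact hxV
    intro x hx
    have hcl : closure (U k) ⊆ {y | g y = f k y} := by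
      apply closure_minimal _ (isClosed_eq g.continuous (f k).continuous)
      exact honU
    exact hcl hx
  -- g vanishes off interior (J M')
  have hgO : ∀ x, x ∉ O M' → g x = 0 := by
    intro x hx
    have hcl : closure ((J M')ᶜ) ⊆ {y | g y = 0} := by
      apply closure_minimal _ (isClosed_eq g.continuous continuous_const)
      exact hgJ
    apply hcl
    rw [closure_compl]
    exact hx
  constructor
  · -- k ∈ M'
    intro k hk
    have hkM : k ∈ M := hM'M hk
    -- g - f k vanishes off O (M' \ {k})
    have hvan : ∀ x, x ∉ O (M' \ {k}) → g x - f k x = 0 := by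
      intro x hx
      by_cases hxk : x ∈ closure (U k)
      · rw [hgU k hk x hxk]; ring
      · have hfk : f k x = 0 := by
          by_contra h
          exact hxk (subset_closure h)
        rw [hfk, sub_zero]
        by_cases hxJ : x ∈ O M'
        · -- then x ∈ O (M' \ {k}), contradiction
          exfalso
          apply hx
          have hWopen : IsOpen (O M' \ closure (U k)) :=
            isOpen_interior.sdiff isClosed_closure
          have hWsub : O M' \ closure (U k) ⊆ J (M' \ {k}) := by
            rintro y ⟨hy1, hy2⟩
            have hyJ : y ∈ J M' := interior_subset hy1
            have hsplit : (⋃ n ∈ M', U n) ⊆ U k ∪ ⋃ n ∈ M' \ {k}, U n := by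
              rintro z hz
              simp only [Set.mem_iUnion] at hz
              obtain ⟨n, hn, hzn⟩ := hz
              by_cases hnk : n = k
              · subst hnk; exact Or.inl hzn
              · exact Or.inr (Set.mem_biUnion ⟨hn, hnk⟩ hzn)
            have : J M' ⊆ closure (U k ∪ ⋃ n ∈ M' \ {k}, U n) := closure_mono hsplit
            have := this hyJ
            rw [closure_union] at this
            rcases this with h | h
            · exact absurd h hy2
            · exact h
          exact interior_maximal hWsub hWopen |>.trans (interior_mono Set.Subset.rfl) ⟨hxJ, hxk⟩
        · exact hgO x hxJ
    -- apply the functional bound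
    set h : C(K, ℝ) := (C + 1)⁻¹ • (g - f k) with hh
    have hC1 : (0 : ℝ) < C + 1 := by linarith
    have hhnorm : ‖h‖ ≤ 1 := by
      rw [ContinuousMap.norm_le _ zero_le_one]
      intro x
      have h1 : 0 ≤ g x - f k x :=
        sub_nonneg.mpr (ContinuousMap.le_def.mp (hub k hk) x)
      have h2 : g x - f k x ≤ C := by
        have h3 : (0:ℝ) ≤ f k x := hpos k x
        have := hgC x; linarith
      simp only [hh, ContinuousMap.smul_apply, ContinuousMap.sub_apply, smul_eq_mul]
      rw [Real.norm_eq_abs, abs_mul, abs_of_pos (inv_pos.mpr hC1), abs_of_nonneg h1]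
      rw [inv_mul_le_iff₀ hC1, mul_one]
      linarith
    have hhvan : ∀ x, x ∉ O (M \ {k}) → h x = 0 := by
      intro x hx
      have : x ∉ O (M' \ {k}) :=
        fun hmem => hx (hOmono _ _ (Set.diff_subset_diff_left hM'M) hmem)
      have hz := hvan x this
      simp only [hh, ContinuousMap.smul_apply, ContinuousMap.sub_apply, smul_eq_mul]
      rw [hz, mul_zero]
    have hbound2 := hαabs k (M \ {k}) h hhnorm hhvan
    have hros := hM k hkM
    have heval : ζ k g - ζ k (f k) = (C + 1) * ζ k h := by
      have : (C + 1) • h = g - f k := by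
        rw [hh, smul_smul, mul_inv_cancel₀ (ne_of_gt hC1), one_smul]
      rw [← map_sub, ← this, map_smul, smul_eq_mul]
    rw [heval, abs_mul, abs_of_pos hC1]
    calc (C + 1) * |ζ k h| ≤ (C + 1) * α k (M \ {k}) := by
          apply mul_le_mul_of_nonneg_left hbound2 (le_of_lt hC1)
    _ < (C + 1) * (ε / (C + 1)) := by
          apply mul_lt_mul_of_pos_left hros hC1
    _ = ε := by field_simp
  · -- k ∈ M \ M'
    rintro k ⟨hkM, hkM'⟩
    have hsub : M' ⊆ M \ {k} := fun n hn => ⟨hM'M hn, fun h => hkM' (h ▸ hn)⟩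
    set h : C(K, ℝ) := (C + 1)⁻¹ • g with hh
    have hC1 : (0 : ℝ) < C + 1 := by linarith
    have hhnorm : ‖h‖ ≤ 1 := by
      rw [ContinuousMap.norm_le _ zero_le_one]
      intro x
      simp only [hh, ContinuousMap.smul_apply, smul_eq_mul]
      rw [Real.norm_eq_abs, abs_mul, abs_of_pos (inv_pos.mpr hC1), abs_of_nonneg (hg0 x)]
      rw [inv_mul_le_iff₀ hC1, mul_one]
      have := hgC x; linarith
    have hhvan : ∀ x, x ∉ O (M \ {k}) → h x = 0 := by
      intro x hx
      have : x ∉ O M' := fun hmem => hx (hOmono _ _ hsub hmem)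
      simp [hh, hgO x this]
    have hbound2 := hαabs k (M \ {k}) h hhnorm hhvan
    have hros := hM k hkM
    have heval : ζ k g = (C + 1) * ζ k h := by
      have : (C + 1) • h = g := by
        rw [hh, smul_smul, mul_inv_cancel₀ (ne_of_gt hC1), one_smul]
      rw [← this, map_smul, smul_eq_mul]
    rw [heval, abs_mul, abs_of_pos hC1]
    calc (C + 1) * |ζ k h| ≤ (C + 1) * α k (M \ {k}) := by
          apply mul_le_mul_of_nonneg_left hbound2 (le_of_lt hC1)
    _ < (C + 1) * (ε / (C + 1)) := by
          apply mul_lt_mul_of_pos_left hros hC1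
    _ = ε := by field_simp
end
end

section
/- Let K be a totally disconnected compact Hausdorff space, let C be a Boolean subalgebra of the algebra of clopen subsets of K (containing ∅ and K), and let Z be the closed linear span in C(K) of the characteristic functions χ_b with b ∈ C. For x, y ∈ K write x ⋈ y if for every b ∈ C one has x ∈ b ⇔ y ∈ b. Then for every f ∈ C(K), the distance from f to the subspace Z equals (1/2)·sup{ |f(x) − f(y)| : x, y ∈ K, x ⋈ y }. -/
open Topology Filter Metric

noncomputable section

set_option maxHeartbeats 1000000
set_option synthInstance.maxHeartbeats 400000

/-- For a totally disconnected compact Hausdorff `K`, a Boolean subalgebra `C` of clopen sets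
and `Z` the closed linear span of the characteristic functions of members of `C`, the distance
from `f ∈ C(K)` to `Z` is half the supremum of `|f(x) - f(y)|` over pairs `x ⋈ y`, where
`x ⋈ y` means that no member of `C` separates `x` from `y`. -/
theorem dist_to_span_eq_half_sup (K : Type*) [TopologicalSpace K] [CompactSpace K]
    [T2Space K] [TotallyDisconnectedSpace K]
    (C : Set (Set K)) (hclopen : ∀ b ∈ C, IsClopen b)
    (hempty : (∅ : Set K) ∈ C) (huniv : (Set.univ : Set K) ∈ C)
    (hunion : ∀ b ∈ C, ∀ c ∈ C, b ∪ c ∈ C) (hcompl : ∀ b ∈ C, bᶜ ∈ C)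
    (Z : Set C(K, ℝ))
    (hZ : Z = closure ((Submodule.span ℝ
      {g : C(K, ℝ) | ∃ b ∈ C, ∀ x, g x = Set.indicator b (fun _ => (1 : ℝ)) x} : Submodule ℝ C(K, ℝ)) : Set C(K, ℝ)))
    (f : C(K, ℝ)) :
    Metric.infDist f Z =
      (1 / 2) * sSup {d : ℝ | ∃ x y : K, (∀ b ∈ C, x ∈ b ↔ y ∈ b) ∧ d = |f x - f y|} := by
  classical
  set S := {d : ℝ | ∃ x y : K, (∀ b ∈ C, x ∈ b ↔ y ∈ b) ∧ d = |f x - f y|} with hS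
  have hinter : ∀ b ∈ C, ∀ c ∈ C, b ∩ c ∈ C := by
    intro b hb c hc
    have := hcompl _ (hunion _ (hcompl b hb) _ (hcompl c hc))
    simpa [Set.compl_union, compl_compl] using this
  have h0Z : (0 : C(K, ℝ)) ∈ Z := by
    rw [hZ]; exact subset_closure (Submodule.zero_mem _)
  rcases isEmpty_or_nonempty K with hK | hK
  · have hfZ : f ∈ Z := by
      have : f = 0 := ContinuousMap.ext fun x => (hK.false x).elim
      rw [this]; exact h0Z
    have hSempty : S = ∅ := by
      ext d
      simp only [hS, Set.mem_setOf_eq, Set.mem_empty_iff_false, iff_false]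
      rintro ⟨x, -, -⟩
      exact hK.false x
    rw [Metric.infDist_zero_of_mem hfZ, hSempty, Real.sSup_empty]
    ring
  · obtain ⟨x0⟩ := hK
    have h0S : (0 : ℝ) ∈ S := ⟨x0, x0, fun b _ => Iff.rfl, by simp⟩
    have hSne : S.Nonempty := ⟨0, h0S⟩
    have hbdd : BddAbove S := by
      refine ⟨2 * ‖f‖, ?_⟩
      rintro d ⟨x, y, -, rfl⟩
      have h1 : |f x| ≤ ‖f‖ := f.norm_coe_le_norm x
      have h2 : |f y| ≤ ‖f‖ := f.norm_coe_le_norm y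
      calc |f x - f y| ≤ |f x| + |f y| := abs_sub _ _
        _ ≤ 2 * ‖f‖ := by linarith
    have hD0 : 0 ≤ sSup S := le_csSup hbdd h0S
    -- every element of Z is constant on ⋈-classes
    have hconst : ∀ g ∈ Z, ∀ x y : K, (∀ b ∈ C, x ∈ b ↔ y ∈ b) → g x = g y := by
      intro g hgZ x y hxy
      rw [hZ] at hgZ
      have hclosed : IsClosed {h : C(K, ℝ) | h x = h y} :=
        isClosed_eq (continuous_eval_const x) (continuous_eval_const y)
      refine hclosed.closure_subset_iff.mpr ?_ hgZ
      intro h hh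
      induction hh using Submodule.span_induction with
      | mem g hg =>
        obtain ⟨b, hb, hgb⟩ := hg
        show g x = g y
        rw [hgb x, hgb y]
        by_cases hx : x ∈ b
        · rw [Set.indicator_of_mem hx, Set.indicator_of_mem ((hxy b hb).1 hx)]
        · rw [Set.indicator_of_notMem hx,
            Set.indicator_of_notMem (fun hy => hx ((hxy b hb).2 hy))]
      | zero => rfl
      | add a b _ _ ha hb => show (a + b) x = (a + b) y; simp only [ContinuousMap.add_apply]; rw [ha, hb]
      | smul r a _ ha => show (r • a) x = (r • a) y; simp only [ContinuousMap.smul_apply]; rw [ha]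
    -- lower bound
    have hlow : (1 / 2) * sSup S ≤ Metric.infDist f Z := by
      have hle : sSup S ≤ 2 * Metric.infDist f Z := by
        apply csSup_le hSne
        rintro d ⟨x, y, hxy, rfl⟩
        by_contra hcon
        push_neg at hcon
        have hlt : Metric.infDist f Z < |f x - f y| / 2 := by linarith
        obtain ⟨g, hgZ, hg⟩ := (Metric.infDist_lt_iff ⟨0, h0Z⟩).1 hlt
        have hgxy : g x = g y := hconst g hgZ x y hxy
        have h1 : |f x - g x| ≤ dist f g := by
          have := ContinuousMap.dist_apply_le_dist (f := f) (g := g) x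
          rwa [Real.dist_eq] at this
        have h2 : |g y - f y| ≤ dist f g := by
          have := ContinuousMap.dist_apply_le_dist (f := f) (g := g) y
          rw [Real.dist_eq] at this
          rwa [abs_sub_comm]
        have : |f x - f y| ≤ 2 * dist f g := by
          calc |f x - f y| = |(f x - g x) + (g y - f y)| := by rw [hgxy]; ring_nf
            _ ≤ |f x - g x| + |g y - f y| := abs_add_le _ _
            _ ≤ 2 * dist f g := by linarith
        linarith
      linarith [Metric.infDist_nonneg (x := f) (s := Z)]
    -- upper bound
    have hup : Metric.infDist f Z ≤ (1 / 2) * sSup S := by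
      have main : ∀ ε : ℝ, 0 < ε → Metric.infDist f Z ≤ (1 / 2) * sSup S + ε := by
        intro ε hε
        set D := sSup S with hD
        -- Step 1: local approximation
        have step1 : ∀ x : K, ∃ (b : Set K) (c : ℝ), b ∈ C ∧ x ∈ b ∧
            ∀ z ∈ b, |f z - c| ≤ D / 2 + ε := by
          intro x
          set A : Set K := {y | ∀ b ∈ C, x ∈ b ↔ y ∈ b} with hA
          have hxA : x ∈ A := fun b _ => Iff.rfl
          have hAeq : A = ⋂₀ {b | b ∈ C ∧ x ∈ b} := by
            apply Set.Subset.antisymm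
            · rintro y hy b ⟨hbC, hxb⟩
              exact (hy b hbC).1 hxb
            · intro y hy b hbC
              constructor
              · intro hxb
                exact hy b ⟨hbC, hxb⟩
              · intro hyb
                by_contra hxb
                exact hy bᶜ ⟨hcompl b hbC, hxb⟩ hyb
          have hAclosed : IsClosed A := by
            rw [hAeq]
            exact isClosed_sInter fun b hb => (hclopen b hb.1).isClosed
          have hAcomp : IsCompact A := hAclosed.isCompact
          have hAne : A.Nonempty := ⟨x, hxA⟩
          obtain ⟨zM, hzM, hzMmax⟩ := hAcomp.exists_isMaxOn hAne f.continuous.continuousOn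
          obtain ⟨zm, hzm, hzmmin⟩ := hAcomp.exists_isMinOn hAne f.continuous.continuousOn
          set m := f zm with hm
          set M := f zM with hM
          have hmM : m ≤ M := hzmmin hzM
          have hMm : M - m ≤ D := by
            apply le_csSup hbdd
            refine ⟨zM, zm, fun b hb => ((hzM b hb).symm.trans (hzm b hb)), ?_⟩
            rw [abs_of_nonneg (by linarith)]
          set U := f ⁻¹' (Set.Ioo (m - ε) (M + ε)) with hU
          have hUopen : IsOpen U := isOpen_Ioo.preimage f.continuous
          have hAU : A ⊆ U := by
            intro y hy
            have h1 : m ≤ f y := hzmmin hy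
            have h2 : f y ≤ M := hzMmax hy
            exact ⟨by linarith, by linarith⟩
          obtain ⟨u, hu⟩ := (hUopen.isClosed_compl.isCompact).elim_finite_subfamily_closed
            (fun i : {b // b ∈ C ∧ x ∈ b} => (i : Set K))
            (fun i => (hclopen i i.2.1).isClosed)
            (by
              rw [Set.eq_empty_iff_forall_notMem]
              rintro y ⟨hyU, hyI⟩
              apply hyU
              apply hAU
              rw [hAeq, Set.sInter_eq_iInter]
              exact hyI)
          have hBall : ∀ v : Finset {b // b ∈ C ∧ x ∈ b},
              (⋂ i ∈ v, (i : Set K)) ∈ C ∧ x ∈ ⋂ i ∈ v, (i : Set K) := by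
            intro v
            induction v using Finset.induction_on with
            | empty => simpa using huniv
            | @insert a v ha ih =>
              rw [Finset.set_biInter_insert]
              exact ⟨hinter _ a.2.1 _ ih.1, a.2.2, ih.2⟩
          have hB := hBall u
          have hBU : (⋂ i ∈ u, (i : Set K)) ⊆ U := by
            intro z hz
            by_contra hzU
            have : z ∈ (Uᶜ ∩ ⋂ i ∈ u, (i : Set K)) := ⟨hzU, hz⟩
            rw [hu] at this
            exact this
          refine ⟨_, (m + M) / 2, hB.1, hB.2, ?_⟩
          intro z hz
          obtain ⟨h1, h2⟩ := hBU hz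
          rw [abs_le]
          constructor <;> linarith
        choose b c hbC hxb hfb using step1
        obtain ⟨t, ht⟩ := IsCompact.elim_finite_subcover isCompact_univ (fun x => b x)
          (fun x => (hclopen _ (hbC x)).isOpen) (fun z _ => Set.mem_iUnion.mpr ⟨z, hxb z⟩)
        have hbu : ∀ u : Finset K, (⋃ x ∈ u, b x) ∈ C := by
          intro u
          induction u using Finset.induction_on with
          | empty => simpa using hempty
          | @insert a u ha ih =>
            rw [Finset.set_biUnion_insert]
            exact hunion _ (hbC a) _ ih
        set M0 : Submodule ℝ C(K, ℝ) := Submodule.span ℝ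
          {g : C(K, ℝ) | ∃ b ∈ C, ∀ x, g x = Set.indicator b (fun _ => (1 : ℝ)) x} with hM0
        have hgen : ∀ p ∈ C, ∃ χ : C(K, ℝ), χ ∈ M0 ∧
            ∀ z, χ z = Set.indicator p (fun _ => (1 : ℝ)) z := by
          intro p hp
          refine ⟨⟨Set.indicator p fun _ => 1, ?_⟩, ?_, fun z => rfl⟩
          · exact continuous_indicator (by simp [hclopen p hp]) continuous_const.continuousOn
          · exact Submodule.subset_span ⟨p, hp, fun z => rfl⟩
        have key : ∀ u : Finset K, ∃ g : C(K, ℝ), g ∈ M0 ∧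
            (∀ z ∈ ⋃ x ∈ u, b x, |f z - g z| ≤ D / 2 + ε) ∧
            (∀ z, z ∉ (⋃ x ∈ u, b x) → g z = 0) := by
          intro u
          induction u using Finset.induction_on with
          | empty => exact ⟨0, Submodule.zero_mem _, by simp, fun z _ => rfl⟩
          | @insert a u ha ih =>
            obtain ⟨g, hgM, hg1, hg2⟩ := ih
            have hp : (b a ∩ (⋃ x ∈ u, b x)ᶜ) ∈ C := hinter _ (hbC a) _ (hcompl _ (hbu u))
            obtain ⟨χ, hχM, hχ⟩ := hgen _ hp
            refine ⟨g + c a • χ, Submodule.add_mem _ hgM (Submodule.smul_mem _ _ hχM), ?_, ?_⟩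
            · intro z hz
              rw [Finset.set_biUnion_insert, Set.mem_union] at hz
              by_cases hzU : z ∈ ⋃ x ∈ u, b x
              · have hχz : χ z = 0 := by
                  rw [hχ]
                  exact Set.indicator_of_notMem (fun h => h.2 hzU) _
                simp only [ContinuousMap.add_apply, ContinuousMap.smul_apply, hχz, smul_eq_mul,
                  mul_zero, add_zero]
                exact hg1 z hzU
              · have hzba : z ∈ b a := hz.resolve_right hzU
                have hχz : χ z = 1 := by
                  rw [hχ]
                  exact Set.indicator_of_mem (Set.mem_inter hzba hzU) _
                simp only [ContinuousMap.add_apply, ContinuousMap.smul_apply, hχz, smul_eq_mul,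
                  mul_one, hg2 z hzU, zero_add]
                exact hfb a z hzba
            · intro z hz
              rw [Finset.set_biUnion_insert, Set.mem_union] at hz
              push_neg at hz
              have hχz : χ z = 0 := by
                rw [hχ]
                exact Set.indicator_of_notMem (fun h => hz.1 h.1) _
              simp only [ContinuousMap.add_apply, ContinuousMap.smul_apply, hχz, smul_eq_mul,
                mul_zero, add_zero]
              exact hg2 z hz.2
        obtain ⟨g, hgM, hg1, -⟩ := key t
        have hgZ : g ∈ Z := by
          rw [hZ]
          exact subset_closure hgM
        have hfg : dist f g ≤ D / 2 + ε := by
          rw [ContinuousMap.dist_le (by linarith)]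
          intro z
          rw [Real.dist_eq]
          exact hg1 z (ht (Set.mem_univ z))
        calc Metric.infDist f Z ≤ dist f g := Metric.infDist_le_dist_of_mem hgZ
          _ ≤ D / 2 + ε := hfg
          _ = (1 / 2) * D + ε := by ring
      exact le_of_forall_pos_le_add main
    exact le_antisymm hup hlow
end
end

section
/- Under the Setup: let (gₙ) be a sequence of pairwise disjoint (gₙ·gₘ = 0 for n ≠ m) norm-one functions in C(K), let (xₙ) be a sequence of points which is dense in K, and for each n let θₙ be a bounded linear functional on C(K) with ‖θₙ‖ = 1 and θₙ(z) = 0 for all z ∈ Z. Then: (a) Λ(f) := (f(xₙ)·1_K)_{n∈ℕ} defines a bounded linear operator Λ : C(K) → X₊; (b) for every (fₙ) ∈ X₊ the series Σₙ θₙ(fₙ)·gₙ converges in C(K), and Θ((fₙ)) := Σₙ θₙ(fₙ)·gₙ defines a bounded linear operator Θ : X₊ → C(K) whose range is a subspace of C(K) isomorphic to c₀; consequently X₊ contains a complemented subspace isomorphic to c₀ and X₊ is not a Grothendieck space. -/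
open Filter Metric Topology BoundedContinuousFunction

set_option maxHeartbeats 1000000
set_option synthInstance.maxHeartbeats 400000

noncomputable section

/-- A bounded linear operator is weakly compact if the norm-closure of the image of the
closed unit ball is compact in the weak topology. -/
def IsWeaklyCompactOp {E F : Type*} [NormedAddCommGroup E] [NormedSpace ℝ E]
    [NormedAddCommGroup F] [NormedSpace ℝ F] (T : E →L[ℝ] F) : Prop :=
  IsCompact (toWeakSpace ℝ F '' closure (T '' Metric.closedBall 0 1))

/-- The closed linear span of the characteristic functions of the members of a family
`Cal` of (clopen) subsets of `K`. -/
def Zspan (K : Type*) [TopologicalSpace K] [CompactSpace K] (Cal : Set (Set K)) :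
    Submodule ℝ C(K, ℝ) :=
  (Submodule.span ℝ {g : C(K, ℝ) | ∃ b ∈ Cal, ∀ x, g x = Set.indicator b (fun _ => (1 : ℝ)) x}).topologicalClosure

section aux

variable {E : Type*} [NormedAddCommGroup E] [NormedSpace ℝ E]

lemma infDist_add_le' (Z : Submodule ℝ E) (x y : E) :
    Metric.infDist (x + y) (Z : Set E) ≤
      Metric.infDist x (Z : Set E) + Metric.infDist y (Z : Set E) := by
  have hne : (Z : Set E).Nonempty := ⟨0, Z.zero_mem⟩
  by_contra h
  push_neg at h
  set ε := (Metric.infDist (x + y) (Z : Set E) -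
    (Metric.infDist x (Z : Set E) + Metric.infDist y (Z : Set E))) with hε
  have hεpos : 0 < ε := by simp [hε]; linarith
  obtain ⟨z, hz, hxz⟩ := (Metric.infDist_lt_iff hne).mp
    (lt_add_of_pos_right (Metric.infDist x (Z : Set E)) (half_pos hεpos))
  obtain ⟨w, hw, hyw⟩ := (Metric.infDist_lt_iff hne).mp
    (lt_add_of_pos_right (Metric.infDist y (Z : Set E)) (half_pos hεpos))
  have hle : Metric.infDist (x + y) (Z : Set E) ≤ dist (x + y) (z + w) :=
    Metric.infDist_le_dist_of_mem (Z.add_mem hz hw)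
  have htri : dist (x + y) (z + w) ≤ dist x z + dist y w := by
    simpa [dist_eq_norm, add_sub_add_comm] using norm_add_le (x - z) (y - w)
  linarith

lemma infDist_smul_le' (c : ℝ) (Z : Submodule ℝ E) (x : E) :
    Metric.infDist (c • x) (Z : Set E) ≤ (|c| + 1) * Metric.infDist x (Z : Set E) := by
  have hne : (Z : Set E).Nonempty := ⟨0, Z.zero_mem⟩
  by_contra h
  push_neg at h
  have h0 : 0 ≤ Metric.infDist x (Z : Set E) := Metric.infDist_nonneg
  have hεpos : 0 < (Metric.infDist (c • x) (Z : Set E) -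
      (|c| + 1) * Metric.infDist x (Z : Set E)) / (|c| + 1) := by
    have : (0:ℝ) < |c| + 1 := by positivity
    apply div_pos _ this
    linarith
  obtain ⟨z, hz, hxz⟩ := (Metric.infDist_lt_iff hne).mp
    (lt_add_of_pos_right (Metric.infDist x (Z : Set E)) hεpos)
  have hle : Metric.infDist (c • x) (Z : Set E) ≤ dist (c • x) (c • z) :=
    Metric.infDist_le_dist_of_mem (Z.smul_mem c hz)
  have heq : dist (c • x) (c • z) = |c| * dist x z := by
    simp [dist_eq_norm, ← smul_sub, norm_smul, Real.norm_eq_abs]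
  have hc1 : |c| ≤ |c| + 1 := by linarith
  have habs : (0:ℝ) ≤ |c| := abs_nonneg c
  have hd : (0:ℝ) ≤ dist x z := dist_nonneg
  have : Metric.infDist (c • x) (Z : Set E) ≤ (|c| + 1) * dist x z := by
    calc Metric.infDist (c • x) (Z : Set E) ≤ |c| * dist x z := hle.trans_eq heq
    _ ≤ (|c| + 1) * dist x z := by nlinarith
  have hxz' : dist x z < Metric.infDist x (Z : Set E) +
      (Metric.infDist (c • x) (Z : Set E) - (|c| + 1) * Metric.infDist x (Z : Set E)) / (|c| + 1) := hxz
  have hpos : (0:ℝ) < |c| + 1 := by positivity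
  rw [mul_comm] at this
  have := this.trans_lt (mul_lt_mul_of_pos_right hxz' hpos)
  rw [add_mul, div_mul_cancel₀] at this
  · linarith
  · positivity

end aux

/-- The Banach space `X₊` of all bounded sequences `(fₙ)` in `C(K,ℝ)` with
`dist (fₙ, Z) → 0`, realized as a submodule of the space of bounded functions `ℕ →ᵇ C(K,ℝ)`. -/
def Xplus (K : Type*) [TopologicalSpace K] [CompactSpace K] (Cal : Set (Set K)) :
    Submodule ℝ (lp (fun _ : ℕ => C(K, ℝ)) ⊤) where
  carrier := {f | Tendsto (fun n => Metric.infDist (f n) ((Zspan K Cal : Submodule ℝ C(K, ℝ)) : Set C(K, ℝ))) atTop (𝓝 0)}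
  zero_mem' := by
    have h : (fun n : ℕ => Metric.infDist ((0 : lp (fun _ : ℕ => C(K, ℝ)) ⊤) n)
        ((Zspan K Cal : Submodule ℝ C(K,ℝ)) : Set C(K, ℝ))) = fun _ => (0:ℝ) := by
      funext n
      simp only [lp.coeFn_zero, Pi.zero_apply]
      exact Metric.infDist_zero_of_mem (Zspan K Cal).zero_mem
    simp only [Set.mem_setOf_eq, h]
    exact tendsto_const_nhds
  add_mem' := by
    intro f g hf hg
    simp only [Set.mem_setOf_eq] at hf hg ⊢
    have h0 : ∀ n, (0:ℝ) ≤ Metric.infDist ((f + g) n) ((Zspan K Cal : Submodule ℝ C(K,ℝ)) : Set C(K, ℝ)) :=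
      fun n => Metric.infDist_nonneg
    refine squeeze_zero h0 (fun n => ?_) (by simpa using hf.add hg)
    simpa using infDist_add_le' (Zspan K Cal) (f n) (g n)
  smul_mem' := by
    intro c f hf
    simp only [Set.mem_setOf_eq] at hf ⊢
    have h0 : ∀ n, (0:ℝ) ≤ Metric.infDist ((c • f) n) ((Zspan K Cal : Submodule ℝ C(K,ℝ)) : Set C(K, ℝ)) :=
      fun n => Metric.infDist_nonneg
    exact squeeze_zero h0
      (fun n => by simpa using infDist_smul_le' c (Zspan K Cal) (f n))
      (by simpa using hf.const_mul (|c| + 1))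

/-- The subspace `Y₊ = {(fₙ) ∈ X₊ : f₀ vanishes on K₁}`. -/
def Yplus (K : Type*) [TopologicalSpace K] [CompactSpace K] (Cal : Set (Set K))
    (K₁ : Set K) : Submodule ℝ ↥(Xplus K Cal) where
  carrier := {f | ∀ x ∈ K₁, ((f : lp (fun _ : ℕ => C(K, ℝ)) ⊤) 0) x = 0}
  zero_mem' := by intro x hx; simp
  add_mem' := by
    intro f g hf hg x hx
    have := hf x hx
    have := hg x hx
    simp_all
  smul_mem' := by
    intro c f hf x hx
    have := hf x hx
    simp_all

/-- The space `X₀` of sequences in `C(K,ℝ)` converging to `0` in norm. -/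
def Xzero (K : Type*) [TopologicalSpace K] [CompactSpace K] :
    Submodule ℝ (lp (fun _ : ℕ => C(K, ℝ)) ⊤) where
  carrier := {f | Tendsto (fun n => ‖f n‖) atTop (𝓝 0)}
  zero_mem' := by
    simp only [Set.mem_setOf_eq, lp.coeFn_zero, Pi.zero_apply, norm_zero]
    exact tendsto_const_nhds
  add_mem' := by
    intro f g hf hg
    simp only [Set.mem_setOf_eq] at hf hg ⊢
    refine squeeze_zero (fun n => norm_nonneg _) (fun n => ?_) (by simpa using hf.add hg)
    simpa using norm_add_le (f n) (g n)
  smul_mem' := by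
    intro c f hf
    simp only [Set.mem_setOf_eq] at hf ⊢
    refine squeeze_zero (fun n => norm_nonneg _) (fun n => ?_) (by simpa using hf.const_mul ‖c‖)
    simp [norm_smul]


/-- A Banach space is a Grothendieck space if every weak*-null sequence in its dual is weakly
null. -/
def IsGrothendieckSpace (X : Type*) [NormedAddCommGroup X] [NormedSpace ℝ X] : Prop :=
  ∀ φ : ℕ → (X →L[ℝ] ℝ), (∀ v : X, Tendsto (fun n => φ n v) atTop (𝓝 0)) →
    ∀ Ψ : (X →L[ℝ] ℝ) →L[ℝ] ℝ, Tendsto (fun n => Ψ (φ n)) atTop (𝓝 0)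


/-!
Each `θₙ` has norm one and vanishes on `Z`, so `|θₙ(f)| ≤ dist(f, Z)`; hence `F ↦ (θₙ(Fₙ))ₙ` is a
bounded operator `X₊ → c₀`. Choosing `kₙ` with `θₙ(kₙ) = 1` and `‖kₙ‖ ≤ 2`, the map
`a ↦ (aₙ kₙ)ₙ` is a bounded right inverse `c₀ → X₊`, so `c₀` is a retract of `X₊`: this gives the
complemented copy of `c₀`, and since the Grothendieck property passes to retracts and fails for
`c₀`, `X₊` is not Grothendieck. Because the `gₙ` are disjointly supported unit vectors,
`a ↦ ∑ aₙ gₙ` embeds `c₀` isometrically into `C(K)`, and `Θ` is this embedding composed with the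
coefficient map, so its range is the image of the embedding. Finally `Λ` takes values in `X₊`
because the constant function `1` lies in `Z`.
-/

open ZeroAtInfty

theorem IsGrothendieckSpace.of_comp_eq_id {X Y : Type*} [NormedAddCommGroup X] [NormedSpace ℝ X]
    [NormedAddCommGroup Y] [NormedSpace ℝ Y] (hX : IsGrothendieckSpace X)
    (T : X →L[ℝ] Y) (J : Y →L[ℝ] X) (hTJ : T ∘L J = .id ℝ Y) : IsGrothendieckSpace Y := by
  intro φ hφ Ψ
  have hφT := hX (fun n => φ n ∘L T) (fun v => hφ (T v))
    (Ψ ∘L (ContinuousLinearMap.compL ℝ Y X ℝ).flip J)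
  simpa [ContinuousLinearMap.comp_assoc, hTJ] using hφT

section Retract

variable {X E F : Type*} [NormedAddCommGroup X] [NormedSpace ℝ X] [NormedAddCommGroup E]
  [NormedSpace ℝ E] [NormedAddCommGroup F] [NormedSpace ℝ F]

theorem exists_idempotent_range_equiv_of_comp_eq_id (T : X →L[ℝ] E) (J : E →L[ℝ] X)
    (hTJ : T ∘L J = .id ℝ E) :
    ∃ P : X →L[ℝ] X, P ∘L P = P ∧ Nonempty (LinearMap.range (P : X →ₗ[ℝ] X) ≃L[ℝ] E) := by
  have hTJa : ∀ v, T (J v) = v := fun v => congrArg (· v) hTJ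
  refine ⟨J ∘L T, ContinuousLinearMap.ext fun x => by simp [hTJa], ?_⟩
  have hmem : ∀ v, J v ∈ LinearMap.range ((J ∘L T : X →L[ℝ] X) : X →ₗ[ℝ] X) :=
    fun v => ⟨J v, by simp [hTJa]⟩
  refine ⟨ContinuousLinearEquiv.equivOfInverse (T ∘L Submodule.subtypeL _)
    (J.codRestrict _ hmem) (fun ⟨x, y, hy⟩ => ?_) (fun v => hTJa v)⟩
  subst hy
  ext
  exact congrArg J (hTJa (T y))

theorem nonempty_range_comp_equiv_of_surjective (S : E →ₗᵢ[ℝ] F) (T : X →L[ℝ] E)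
    (hT : Function.Surjective T) :
    Nonempty
      (LinearMap.range ((S.toContinuousLinearMap ∘L T : X →L[ℝ] F) : X →ₗ[ℝ] F) ≃L[ℝ] E) := by
  have hrange : LinearMap.range ((S.toContinuousLinearMap ∘L T : X →L[ℝ] F) : X →ₗ[ℝ] F) =
      LinearMap.range S.toLinearMap :=
    LinearMap.range_comp_of_range_eq_top _ (LinearMap.range_eq_top.2 hT)
  exact ⟨((LinearIsometryEquiv.ofEq _ _ hrange).trans S.equivRange.symm).toContinuousLinearEquiv⟩

end Retract

theorem ContinuousLinearMap.exists_apply_eq_one_norm_le_two {E : Type*} [NormedAddCommGroup E]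
    [NormedSpace ℝ E] (φ : E →L[ℝ] ℝ) (hφ : ‖φ‖ = 1) : ∃ k, φ k = 1 ∧ ‖k‖ ≤ 2 := by
  obtain ⟨h, hh, hφh⟩ :=
    φ.exists_lt_apply_of_lt_opNorm (show (1 / 2 : ℝ) < ‖φ‖ by rw [hφ]; norm_num)
  have hφh0 : φ h ≠ 0 := norm_pos_iff.1 ((by norm_num : (0 : ℝ) < 1 / 2).trans hφh)
  refine ⟨(φ h)⁻¹ • h, by simp [hφh0], ?_⟩
  rw [norm_smul, norm_inv]
  calc ‖φ h‖⁻¹ * ‖h‖ ≤ 2 * 1 := by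
        gcongr
        exact inv_le_of_inv_le₀ two_pos (by linarith)
      _ = 2 := mul_one 2

theorem abs_apply_le_infDist {E : Type*} [NormedAddCommGroup E] [NormedSpace ℝ E]
    {Z : Submodule ℝ E} {φ : E →L[ℝ] ℝ} (hφ : ‖φ‖ ≤ 1) (hφZ : ∀ z ∈ Z, φ z = 0) (f : E) :
    |φ f| ≤ infDist f (Z : Set E) := by
  refine (le_infDist ⟨0, Z.zero_mem⟩).2 fun z hz => ?_
  calc |φ f| = |φ (f - z)| := by rw [map_sub, hφZ z hz, sub_zero]
    _ ≤ ‖φ‖ * ‖f - z‖ := φ.le_opNorm _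
    _ ≤ dist f z := by rw [dist_eq_norm]; exact mul_le_of_le_one_left (norm_nonneg _) hφ

namespace ZeroAtInftyContinuousMap

variable {E : Type*} [NormedAddCommGroup E] [NormedSpace ℝ E]

theorem tendsto_atTop_zero (a : C₀(ℕ, ℝ)) : Tendsto a atTop (𝓝 0) := by
  simpa [cocompact_eq_atTop] using a.zero_at_infty'

theorem abs_apply_le_norm (a : C₀(ℕ, ℝ)) (n : ℕ) : |a n| ≤ ‖a‖ := by
  rw [← norm_toBCF_eq_norm]
  exact a.toBCF.norm_coe_le_norm n

theorem norm_le_of_forall_abs_le (a : C₀(ℕ, ℝ)) {C : ℝ} (hC : 0 ≤ C) (h : ∀ n, |a n| ≤ C) :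
    ‖a‖ ≤ C := by
  rw [← norm_toBCF_eq_norm, BoundedContinuousFunction.norm_le hC]
  exact h

def evalCLM (n : ℕ) : C₀(ℕ, ℝ) →L[ℝ] ℝ :=
  LinearMap.mkContinuous
    { toFun := fun a => a n
      map_add' := fun _ _ => rfl
      map_smul' := fun _ _ => rfl }
    1 fun a => by simpa using abs_apply_le_norm a n

@[simp]
theorem evalCLM_apply (n : ℕ) (a : C₀(ℕ, ℝ)) : evalCLM n a = a n := rfl

theorem norm_evalCLM_le (n : ℕ) : ‖evalCLM n‖ ≤ 1 :=
  LinearMap.mkContinuous_norm_le _ zero_le_one _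

def mkCLM (L : ℕ → E →L[ℝ] ℝ) (C : ℝ) (hL : ∀ n, ‖L n‖ ≤ C)
    (hL0 : ∀ v, Tendsto (fun n => L n v) atTop (𝓝 0)) : E →L[ℝ] C₀(ℕ, ℝ) :=
  LinearMap.mkContinuous
    { toFun := fun v =>
        { toFun := fun n => L n v
          continuous_toFun := continuous_of_discreteTopology
          zero_at_infty' := by simpa [cocompact_eq_atTop] using hL0 v }
      map_add' := fun v w => by ext n; simp
      map_smul' := fun c v => by ext n; simp }
    C fun v => by
      have hC : 0 ≤ C := (norm_nonneg (L 0)).trans (hL 0)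
      exact norm_le_of_forall_abs_le _ (mul_nonneg hC (norm_nonneg v)) fun n =>
        (L n).le_of_opNorm_le (hL n) v

@[simp]
theorem mkCLM_apply (L : ℕ → E →L[ℝ] ℝ) (C : ℝ) (hL) (hL0) (v : E) (n : ℕ) :
    mkCLM L C hL hL0 v n = L n v := rfl

def single (m : ℕ) : C₀(ℕ, ℝ) where
  toFun n := if n = m then 1 else 0
  continuous_toFun := continuous_of_discreteTopology
  zero_at_infty' := by
    rw [cocompact_eq_atTop]
    refine tendsto_const_nhds.congr' ?_
    filter_upwards [eventually_gt_atTop m] with n hn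
    simp [hn.ne']

@[simp]
theorem single_apply (m n : ℕ) : single m n = if n = m then 1 else 0 := rfl

theorem sum_abs_apply_single_le (ψ : C₀(ℕ, ℝ) →L[ℝ] ℝ) (s : Finset ℕ) :
    ∑ m ∈ s, |ψ (single m)| ≤ ‖ψ‖ := by
  set v := ∑ m ∈ s, (SignType.sign (ψ (single m)) : ℝ) • single m
  have hv : ‖v‖ ≤ 1 := by
    refine norm_le_of_forall_abs_le v zero_le_one fun n => ?_
    rw [← evalCLM_apply, map_sum]
    simp only [map_smul, evalCLM_apply, single_apply, smul_eq_mul, mul_ite, mul_one, mul_zero,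
      Finset.sum_ite_eq]
    split_ifs
    · cases SignType.sign (ψ (single n)) <;> simp
    · simp
  calc ∑ m ∈ s, |ψ (single m)| = ψ v := by simp [v, map_sum, sign_mul_self]
    _ ≤ ‖ψ‖ * ‖v‖ := (le_abs_self _).trans (ψ.le_opNorm v)
    _ ≤ ‖ψ‖ := mul_le_of_le_one_right (norm_nonneg ψ) hv

theorem summable_abs_apply_single (ψ : C₀(ℕ, ℝ) →L[ℝ] ℝ) :
    Summable fun m => |ψ (single m)| :=
  summable_of_sum_le (fun _ => abs_nonneg _) (sum_abs_apply_single_le ψ)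

/-- The constant sequence `1`, viewed in `ℓ∞ = c₀**`. -/
def sumSingleCLM : (C₀(ℕ, ℝ) →L[ℝ] ℝ) →L[ℝ] ℝ :=
  LinearMap.mkContinuous
    { toFun := fun ψ => ∑' m, ψ (single m)
      map_add' := fun ψ χ =>
        (summable_abs_apply_single ψ).of_abs.tsum_add (summable_abs_apply_single χ).of_abs
      map_smul' := fun c ψ => tsum_mul_left }
    1 fun ψ => by
      rw [one_mul]
      exact (norm_tsum_le_tsum_norm (summable_abs_apply_single ψ)).trans
        (Real.tsum_le_of_sum_le (fun _ => norm_nonneg _) (sum_abs_apply_single_le ψ))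

theorem not_isGrothendieckSpace : ¬ IsGrothendieckSpace C₀(ℕ, ℝ) := by
  intro h
  have hnull := h evalCLM (fun a => tendsto_atTop_zero a) sumSingleCLM
  have hone : ∀ n, sumSingleCLM (evalCLM n) = 1 := fun n => by
    simp [sumSingleCLM, single_apply]
  simp [hone] at hnull

end ZeroAtInftyContinuousMap

namespace ContinuousMap

variable {K : Type*} [TopologicalSpace K] [CompactSpace K]

theorem exists_norm_apply_eq_norm {E : Type*} [Nonempty K] [NormedAddCommGroup E] (f : C(K, E)) :
    ∃ y, ‖f y‖ = ‖f‖ := by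
  obtain ⟨y, -, hy⟩ :=
    isCompact_univ.exists_isMaxOn Set.univ_nonempty f.continuous.norm.continuousOn
  exact ⟨y, le_antisymm (f.norm_coe_le_norm y)
    ((f.norm_le (norm_nonneg _)).2 fun z => hy (Set.mem_univ z))⟩

theorem norm_evalCLM_le (y : K) : ‖(evalCLM ℝ y : C(K, ℝ) →L[ℝ] ℝ)‖ ≤ 1 :=
  ContinuousLinearMap.opNorm_le_bound _ zero_le_one fun f => by
    rw [one_mul]
    exact f.norm_coe_le_norm y

end ContinuousMap

section DisjointSupports

variable {K : Type*} [TopologicalSpace K] {g : ℕ → C(K, ℝ)}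

theorem apply_eq_zero_of_apply_ne_zero (hg : Pairwise fun n m => g n * g m = 0) {n m : ℕ}
    (hnm : n ≠ m) {y : K} (hy : g m y ≠ 0) : g n y = 0 := by
  simpa [hy] using congrArg (· y) (hg hnm)

theorem exists_forall_ne_apply_eq_zero (hg : Pairwise fun n m => g n * g m = 0) (y : K) :
    ∃ m, ∀ n ≠ m, g n y = 0 := by
  by_cases h : ∃ m, g m y ≠ 0
  · obtain ⟨m, hm⟩ := h
    exact ⟨m, fun n hnm => apply_eq_zero_of_apply_ne_zero hg hnm hm⟩
  · push Not at h
    exact ⟨0, fun n _ => h n⟩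

theorem sum_smul_apply_eq (a : ℕ → ℝ) (s : Finset ℕ) {y : K} {m : ℕ}
    (hm : ∀ n ≠ m, g n y = 0) :
    (∑ n ∈ s, a n • g n) y = if m ∈ s then a m * g m y else 0 := by
  rw [ContinuousMap.sum_apply, ← Finset.sum_ite_eq' s m fun n => a n * g n y]
  refine Finset.sum_congr rfl fun n _ => ?_
  split_ifs with hnm
  · simp [hnm]
  · simp [hm n hnm]

theorem tsum_smul_apply_eq {a : ℕ → ℝ} (hs : Summable fun n => a n • g n) {y : K} {m : ℕ}
    (hm : ∀ n ≠ m, g n y = 0) : (∑' n, a n • g n) y = a m * g m y := by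
  rw [← ContinuousMap.evalCLM_apply ℝ y, (ContinuousMap.evalCLM ℝ y).map_tsum hs]
  exact tsum_eq_single m fun n hn => by simp [hm n hn]

variable [CompactSpace K]

theorem norm_sum_smul_le (hg : Pairwise fun n m => g n * g m = 0) (hg1 : ∀ n, ‖g n‖ ≤ 1)
    {a : ℕ → ℝ} {s : Finset ℕ} {b : ℝ} (hb : 0 ≤ b) (ha : ∀ n ∈ s, |a n| ≤ b) :
    ‖∑ n ∈ s, a n • g n‖ ≤ b := by
  refine (ContinuousMap.norm_le _ hb).2 fun y => ?_
  obtain ⟨m, hm⟩ := exists_forall_ne_apply_eq_zero hg y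
  rw [sum_smul_apply_eq a s hm]
  split_ifs with hms
  · rw [Real.norm_eq_abs, abs_mul]
    calc |a m| * |g m y| ≤ b * 1 :=
          mul_le_mul (ha m hms) (((g m).norm_coe_le_norm y).trans (hg1 m)) (abs_nonneg _) hb
      _ = b := mul_one b
  · simpa using hb

theorem summable_smul_of_tendsto_zero (hg : Pairwise fun n m => g n * g m = 0)
    (hg1 : ∀ n, ‖g n‖ ≤ 1) {a : ℕ → ℝ} (ha : Tendsto a atTop (𝓝 0)) :
    Summable fun n => a n • g n := by
  refine summable_iff_vanishing_norm.2 fun ε hε => ?_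
  obtain ⟨N, hN⟩ := (Metric.tendsto_atTop.1 ha) (ε / 2) (half_pos hε)
  refine ⟨Finset.range N, fun t ht => ?_⟩
  refine (norm_sum_smul_le hg hg1 (half_pos hε).le fun n hn => ?_).trans_lt (half_lt_self hε)
  have hNn : N ≤ n := not_lt.1 fun h => Finset.disjoint_left.1 ht hn (Finset.mem_range.2 h)
  simpa using (hN n hNn).le

theorem norm_tsum_smul_eq (hg : Pairwise fun n m => g n * g m = 0) (hg1 : ∀ n, ‖g n‖ = 1)
    (a : C₀(ℕ, ℝ)) : ‖∑' n, a n • g n‖ = ‖a‖ := by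
  have hs := summable_smul_of_tendsto_zero hg (fun n => (hg1 n).le) a.tendsto_atTop_zero
  refine le_antisymm ((ContinuousMap.norm_le _ (norm_nonneg a)).2 fun y => ?_)
    (a.norm_le_of_forall_abs_le (norm_nonneg _) fun m => ?_)
  · obtain ⟨m, hm⟩ := exists_forall_ne_apply_eq_zero hg y
    rw [tsum_smul_apply_eq hs hm, norm_mul, Real.norm_eq_abs]
    calc |a m| * ‖g m y‖ ≤ ‖a‖ * 1 :=
          mul_le_mul (a.abs_apply_le_norm m) (((g m).norm_coe_le_norm y).trans (hg1 m).le)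
            (norm_nonneg _) (norm_nonneg a)
      _ = ‖a‖ := mul_one _
  · obtain ⟨y₀, -⟩ := DFunLike.ne_iff.1 (show g m ≠ 0 by simp [← norm_ne_zero_iff, hg1 m])
    have : Nonempty K := ⟨y₀⟩
    obtain ⟨y, hy⟩ := (g m).exists_norm_apply_eq_norm
    have hgy : g m y ≠ 0 := by simp [← norm_ne_zero_iff, hy, hg1 m]
    calc |a m| = ‖(∑' n, a n • g n) y‖ := by
          rw [tsum_smul_apply_eq hs fun n hnm => apply_eq_zero_of_apply_ne_zero hg hnm hgy,
            norm_mul, hy, hg1 m, mul_one, Real.norm_eq_abs]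
      _ ≤ ‖∑' n, a n • g n‖ := ContinuousMap.norm_coe_le_norm _ y

def disjointSeriesIsometry (hg : Pairwise fun n m => g n * g m = 0) (hg1 : ∀ n, ‖g n‖ = 1) :
    C₀(ℕ, ℝ) →ₗᵢ[ℝ] C(K, ℝ) where
  toFun a := ∑' n, a n • g n
  map_add' a b := by
    simp only [ZeroAtInftyContinuousMap.coe_add, Pi.add_apply, add_smul]
    exact (summable_smul_of_tendsto_zero hg (fun n => (hg1 n).le) a.tendsto_atTop_zero).tsum_add
      (summable_smul_of_tendsto_zero hg (fun n => (hg1 n).le) b.tendsto_atTop_zero)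
  map_smul' c a := by
    simp only [ZeroAtInftyContinuousMap.coe_smul, Pi.smul_apply, smul_eq_mul, mul_smul,
      RingHom.id_apply]
    exact (summable_smul_of_tendsto_zero hg (fun n => (hg1 n).le)
      a.tendsto_atTop_zero).tsum_const_smul c
  norm_map' := norm_tsum_smul_eq hg hg1

end DisjointSupports

theorem map_univ_of_map_union_of_map_compl {α : Type*} {B : Set (Set α)} {j : Set α → Set α}
    (hBuniv : Set.univ ∈ B) (hBcompl : ∀ b ∈ B, bᶜ ∈ B)
    (hjunion : ∀ b ∈ B, ∀ c ∈ B, j (b ∪ c) = j b ∪ j c) (hjcompl : ∀ b ∈ B, j bᶜ = (j b)ᶜ) :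
    j Set.univ = Set.univ := by
  have := hjunion _ hBuniv _ (hBcompl _ hBuniv)
  rwa [Set.union_compl_self, hjcompl _ hBuniv, Set.union_compl_self] at this

theorem one_mem_Zspan {K : Type*} [TopologicalSpace K] [CompactSpace K] {Cal : Set (Set K)}
    (h : Set.univ ∈ Cal) : (1 : C(K, ℝ)) ∈ Zspan K Cal :=
  Submodule.le_topologicalClosure _ (Submodule.subset_span ⟨Set.univ, h, fun y => by simp⟩)

namespace Xplus

variable {K : Type*} [TopologicalSpace K] [CompactSpace K] {Cal : Set (Set K)}
  {E : Type*} [NormedAddCommGroup E] [NormedSpace ℝ E]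

def coord (n : ℕ) : Xplus K Cal →L[ℝ] C(K, ℝ) :=
  (lp.evalCLM ℝ (fun _ : ℕ => C(K, ℝ)) ⊤ n).comp (Xplus K Cal).subtypeL

theorem norm_coord_le (n : ℕ) : ‖(coord n : Xplus K Cal →L[ℝ] C(K, ℝ))‖ ≤ 1 :=
  ContinuousLinearMap.opNorm_le_bound _ zero_le_one fun F => by
    rw [one_mul]
    exact lp.norm_apply_le_norm ENNReal.top_ne_zero (F : lp (fun _ : ℕ => C(K, ℝ)) ⊤) n

theorem tendsto_infDist_coord (F : Xplus K Cal) :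
    Tendsto (fun n => infDist (coord n F) (Zspan K Cal : Set C(K, ℝ))) atTop (𝓝 0) := F.2

def mkCLM (L : ℕ → E →L[ℝ] C(K, ℝ)) (C : ℝ) (hL : ∀ n, ‖L n‖ ≤ C)
    (hLZ : ∀ v, Tendsto (fun n => infDist (L n v) (Zspan K Cal : Set C(K, ℝ))) atTop (𝓝 0)) :
    E →L[ℝ] Xplus K Cal :=
  LinearMap.mkContinuous
    { toFun := fun v =>
        ⟨⟨fun n => L n v, memℓp_infty ⟨C * ‖v‖, by
          rintro _ ⟨n, rfl⟩; exact (L n).le_of_opNorm_le (hL n) v⟩⟩, hLZ v⟩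
      map_add' := fun v w => by ext n : 3; exact map_add (L n) v w
      map_smul' := fun c v => by ext n : 3; exact map_smul (L n) c v }
    C fun v => by
      have hC : 0 ≤ C := (norm_nonneg (L 0)).trans (hL 0)
      exact lp.norm_le_of_forall_le (mul_nonneg hC (norm_nonneg v)) fun n =>
        (L n).le_of_opNorm_le (hL n) v

@[simp]
theorem coord_mkCLM (L : ℕ → E →L[ℝ] C(K, ℝ)) (C : ℝ) (hL) (hLZ) (v : E) (n : ℕ) :
    coord n (mkCLM (Cal := Cal) L C hL hLZ v) = L n v := rfl

def evalSeqCLM (x : ℕ → K) (h1 : (1 : C(K, ℝ)) ∈ Zspan K Cal) : C(K, ℝ) →L[ℝ] Xplus K Cal :=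
  mkCLM (fun n => (ContinuousMap.evalCLM ℝ (x n)).smulRight 1) 1
    (fun n => by
      rw [ContinuousLinearMap.norm_smulRight_apply]
      exact mul_le_one₀ (ContinuousMap.norm_evalCLM_le _) (norm_nonneg _)
        ((ContinuousMap.norm_le _ zero_le_one).2 fun _ => by simp))
    fun f => by simp [infDist_zero_of_mem ((Zspan K Cal).smul_mem _ h1)]

end Xplus

section Coefficients

variable {K : Type*} [TopologicalSpace K] [CompactSpace K] {Cal : Set (Set K)}
  {θ : ℕ → C(K, ℝ) →L[ℝ] ℝ}

def coeffs (θ : ℕ → C(K, ℝ) →L[ℝ] ℝ) (hθ : ∀ n, ‖θ n‖ ≤ 1)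
    (hθZ : ∀ n, ∀ z ∈ Zspan K Cal, θ n z = 0) : Xplus K Cal →L[ℝ] C₀(ℕ, ℝ) :=
  ZeroAtInftyContinuousMap.mkCLM (fun n => θ n ∘L Xplus.coord n) 1
    (fun n => (ContinuousLinearMap.opNorm_comp_le _ _).trans
      (mul_le_one₀ (hθ n) (norm_nonneg (Xplus.coord (Cal := Cal) n)) (Xplus.norm_coord_le n)))
    fun F => squeeze_zero_norm (fun n => abs_apply_le_infDist (hθ n) (hθZ n) _)
      (Xplus.tendsto_infDist_coord F)

theorem exists_comp_coeffs_eq_id (hθ : ∀ n, ‖θ n‖ = 1)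
    (hθZ : ∀ n, ∀ z ∈ Zspan K Cal, θ n z = 0) :
    ∃ J : C₀(ℕ, ℝ) →L[ℝ] Xplus K Cal, coeffs θ (fun n => (hθ n).le) hθZ ∘L J = .id ℝ _ := by
  choose k hθk hk using fun n => (θ n).exists_apply_eq_one_norm_le_two (hθ n)
  set L : ℕ → C₀(ℕ, ℝ) →L[ℝ] C(K, ℝ) :=
    fun n => (ZeroAtInftyContinuousMap.evalCLM n).smulRight (k n)
  have hL : ∀ n, ‖L n‖ ≤ 2 := fun n => by
    rw [ContinuousLinearMap.norm_smulRight_apply]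
    simpa using mul_le_mul (ZeroAtInftyContinuousMap.norm_evalCLM_le n) (hk n) (norm_nonneg _)
      zero_le_one
  have hLZ : ∀ a, Tendsto (fun n => infDist (L n a) (Zspan K Cal : Set C(K, ℝ))) atTop (𝓝 0) := by
    intro a
    refine squeeze_zero (fun n => infDist_nonneg) (fun n => ?_)
      (by simpa using a.tendsto_atTop_zero.abs.const_mul 2)
    calc infDist (L n a) (Zspan K Cal : Set C(K, ℝ)) ≤ ‖L n a‖ := by
          simpa using infDist_le_dist_of_mem (x := L n a) (Zspan K Cal).zero_mem
      _ ≤ 2 * |a n| := by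
          simpa [L, norm_smul, mul_comm] using mul_le_mul_of_nonneg_left (hk n) (abs_nonneg (a n))
  refine ⟨Xplus.mkCLM L 2 hL hLZ, ContinuousLinearMap.ext fun a => ?_⟩
  ext n
  simp [coeffs, L, hθk n]

end Coefficients

open ZeroAtInfty in
theorem lambda_theta_operators_general
    (K : Type*) [TopologicalSpace K] [CompactSpace K]
    (B : Set (Set K))
    (hBuniv : (Set.univ : Set K) ∈ B)
    (hBcompl : ∀ b ∈ B, bᶜ ∈ B)
    (j : Set K → Set K)
    (hjunion : ∀ b ∈ B, ∀ c ∈ B, j (b ∪ c) = j b ∪ j c)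
    (hjcompl : ∀ b ∈ B, j bᶜ = (j b)ᶜ)
    (g : ℕ → C(K, ℝ)) (hgdisj : ∀ n m, n ≠ m → g n * g m = 0) (hgnorm : ∀ n, ‖g n‖ = 1)
    (x : ℕ → K)
    (θ : ℕ → C(K, ℝ) →L[ℝ] ℝ) (hθnorm : ∀ n, ‖θ n‖ = 1)
    (hθZ : ∀ n : ℕ, ∀ z ∈ Zspan K {b ∈ B | j b = b}, θ n z = 0) :
    (∃ Λ : C(K, ℝ) →L[ℝ] ↥(Xplus K {b ∈ B | j b = b}),
      ∀ (f : C(K, ℝ)) (n : ℕ), ((Λ f : lp (fun _ : ℕ => C(K, ℝ)) ⊤) n) = f (x n) • (1 : C(K, ℝ))) ∧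
    (∀ F : ↥(Xplus K {b ∈ B | j b = b}), ∃ u : C(K, ℝ),
      Tendsto (fun N => ∑ n ∈ Finset.range N, θ n ((F : lp (fun _ : ℕ => C(K, ℝ)) ⊤) n) • g n) atTop (𝓝 u)) ∧
    (∃ Θ : ↥(Xplus K {b ∈ B | j b = b}) →L[ℝ] C(K, ℝ),
      (∀ F : ↥(Xplus K {b ∈ B | j b = b}),
        Tendsto (fun N => ∑ n ∈ Finset.range N, θ n ((F : lp (fun _ : ℕ => C(K, ℝ)) ⊤) n) • g n) atTop (𝓝 (Θ F))) ∧
      Nonempty (↥(LinearMap.range (Θ : ↥(Xplus K {b ∈ B | j b = b}) →ₗ[ℝ] C(K, ℝ))) ≃L[ℝ] C₀(ℕ, ℝ))) ∧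
    (∃ P : ↥(Xplus K {b ∈ B | j b = b}) →L[ℝ] ↥(Xplus K {b ∈ B | j b = b}), P ∘L P = P ∧
      Nonempty (↥(LinearMap.range (P : ↥(Xplus K {b ∈ B | j b = b}) →ₗ[ℝ] ↥(Xplus K {b ∈ B | j b = b}))) ≃L[ℝ] C₀(ℕ, ℝ))) ∧
    ¬ IsGrothendieckSpace ↥(Xplus K {b ∈ B | j b = b}) := by
  have hg : Pairwise fun n m => g n * g m = 0 := hgdisj
  have h1 : (1 : C(K, ℝ)) ∈ Zspan K {b ∈ B | j b = b} := one_mem_Zspan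
    ⟨hBuniv, map_univ_of_map_union_of_map_compl hBuniv hBcompl hjunion hjcompl⟩
  set T := coeffs θ (fun n => (hθnorm n).le) hθZ
  obtain ⟨J, hTJ⟩ := exists_comp_coeffs_eq_id hθnorm hθZ
  have hT : Function.Surjective T := fun a => ⟨J a, congrArg (· a) hTJ⟩
  set S := disjointSeriesIsometry hg hgnorm
  have hΘ : ∀ F : Xplus K {b ∈ B | j b = b}, Tendsto
      (fun N => ∑ n ∈ Finset.range N, θ n ((F : lp (fun _ : ℕ => C(K, ℝ)) ⊤) n) • g n)
      atTop (𝓝 (S (T F))) := fun F =>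
    (summable_smul_of_tendsto_zero hg (fun n => (hgnorm n).le)
      (T F).tendsto_atTop_zero).hasSum.tendsto_sum_nat
  exact ⟨⟨Xplus.evalSeqCLM x h1, fun f n => rfl⟩, fun F => ⟨_, hΘ F⟩,
    ⟨S.toContinuousLinearMap ∘L T, hΘ, nonempty_range_comp_equiv_of_surjective S T hT⟩,
    exists_idempotent_range_equiv_of_comp_eq_id T J hTJ,
    fun hX => ZeroAtInftyContinuousMap.not_isGrothendieckSpace (hX.of_comp_eq_id T J hTJ)⟩

open ZeroAtInfty in
/-- The operators `Λ : C(K) → X₊` and `Θ : X₊ → C(K)` are well defined and bounded; the image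
of `Θ` is isomorphic to `c₀`, `X₊` has a complemented copy of `c₀` and `X₊` is not a
Grothendieck space. -/
theorem lambda_theta_operators
    (K : Type*) [TopologicalSpace K] [CompactSpace K] [T2Space K]
    [TotallyDisconnectedSpace K] [TopologicalSpace.SeparableSpace K]
    (hperf : Perfect (Set.univ : Set K))
    (K₁ K₂ : Set K) (hK₁ : IsClopen K₁) (hK₂ : IsClopen K₂)
    (hdisjK : Disjoint K₁ K₂) (hcover : K₁ ∪ K₂ = Set.univ)
    (hops : ∀ T : C(K, ℝ) →L[ℝ] C(K, ℝ), ∃ g : C(K, ℝ), ∃ S : C(K, ℝ) →L[ℝ] C(K, ℝ),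
      IsWeaklyCompactOp S ∧ ∀ f : C(K, ℝ), T f = g * f + S f)
    (hnolinf : ¬ ∃ (T : lp (fun _ : ℕ => ℝ) ⊤ →L[ℝ] C(K, ℝ)) (c : ℝ), 0 < c ∧
      ∀ f : lp (fun _ : ℕ => ℝ) ⊤, c * ‖f‖ ≤ ‖T f‖)
    (B : Set (Set K)) (hBclopen : ∀ b ∈ B, IsClopen b)
    (hBempty : (∅ : Set K) ∈ B) (hBuniv : (Set.univ : Set K) ∈ B)
    (hBunion : ∀ b ∈ B, ∀ c ∈ B, b ∪ c ∈ B) (hBcompl : ∀ b ∈ B, bᶜ ∈ B)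
    (hK₁B : K₁ ∈ B) (hK₂B : K₂ ∈ B)
    (hBdense : ∀ a : Set K, IsClopen a → a.Nonempty → ∃ b ∈ B, b.Nonempty ∧ b ⊆ a)
    (j : Set K → Set K) (hjB : ∀ b ∈ B, j b ∈ B)
    (hjunion : ∀ b ∈ B, ∀ c ∈ B, j (b ∪ c) = j b ∪ j c)
    (hjcompl : ∀ b ∈ B, j bᶜ = (j b)ᶜ)
    (hjinv : ∀ b ∈ B, j (j b) = b)
    (hjK₁ : j K₁ = K₂)
    (hsup : ∀ a : ℕ → Set K, (∀ n, IsClopen (a n)) →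
      (∀ m n, m ≠ n → Disjoint (a m) (a n)) →
      ∃ M : Set ℕ, M.Infinite ∧ ∃ s : Set K, IsClopen s ∧ (∀ n ∈ M, a n ⊆ s) ∧
        ∀ t : Set K, IsClopen t → (∀ n ∈ M, a n ⊆ t) → s ⊆ t)
    (g : ℕ → C(K, ℝ)) (hgdisj : ∀ n m, n ≠ m → g n * g m = 0) (hgnorm : ∀ n, ‖g n‖ = 1)
    (x : ℕ → K) (hx : DenseRange x)
    (θ : ℕ → C(K, ℝ) →L[ℝ] ℝ) (hθnorm : ∀ n, ‖θ n‖ = 1)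
    (hθZ : ∀ n : ℕ, ∀ z ∈ Zspan K {b ∈ B | j b = b}, θ n z = 0) :
    (∃ Λ : C(K, ℝ) →L[ℝ] ↥(Xplus K {b ∈ B | j b = b}),
      ∀ (f : C(K, ℝ)) (n : ℕ), ((Λ f : lp (fun _ : ℕ => C(K, ℝ)) ⊤) n) = f (x n) • (1 : C(K, ℝ))) ∧
    (∀ F : ↥(Xplus K {b ∈ B | j b = b}), ∃ u : C(K, ℝ),
      Tendsto (fun N => ∑ n ∈ Finset.range N, θ n ((F : lp (fun _ : ℕ => C(K, ℝ)) ⊤) n) • g n) atTop (𝓝 u)) ∧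
    (∃ Θ : ↥(Xplus K {b ∈ B | j b = b}) →L[ℝ] C(K, ℝ),
      (∀ F : ↥(Xplus K {b ∈ B | j b = b}),
        Tendsto (fun N => ∑ n ∈ Finset.range N, θ n ((F : lp (fun _ : ℕ => C(K, ℝ)) ⊤) n) • g n) atTop (𝓝 (Θ F))) ∧
      Nonempty (↥(LinearMap.range (Θ : ↥(Xplus K {b ∈ B | j b = b}) →ₗ[ℝ] C(K, ℝ))) ≃L[ℝ] C₀(ℕ, ℝ))) ∧
    (∃ P : ↥(Xplus K {b ∈ B | j b = b}) →L[ℝ] ↥(Xplus K {b ∈ B | j b = b}), P ∘L P = P ∧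
      Nonempty (↥(LinearMap.range (P : ↥(Xplus K {b ∈ B | j b = b}) →ₗ[ℝ] ↥(Xplus K {b ∈ B | j b = b}))) ≃L[ℝ] C₀(ℕ, ℝ))) ∧
    ¬ IsGrothendieckSpace ↥(Xplus K {b ∈ B | j b = b}) :=
  lambda_theta_operators_general K B hBuniv hBcompl j hjunion hjcompl g hgdisj hgnorm x θ hθnorm hθZ
end
end

section
/- Under the Setup: let T : C(K) → X₊ be a bounded linear operator and let (f_m) be a bounded sequence of pairwise disjoint functions in C(K) (f_m·f_{m'} = 0 for m ≠ m'). Then for every ε > 0 there is k ∈ ℕ such that for all n > k and all m ∈ ℕ, dist(Pₙ(T(f_m)), Z) ≤ ε. -/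
open Filter Metric Topology BoundedContinuousFunction

set_option maxHeartbeats 1000000
set_option synthInstance.maxHeartbeats 400000

noncomputable section

/-!
Suppose the conclusion fails. Then there are `nⱼ → ∞` and distinct `mⱼ` with
`dist (P_{nⱼ} (T f_{mⱼ}), Z) > ε`; composing `P_{nⱼ} ∘ T` with norming functionals of
`C(K) ⧸ Z` gives a bounded weak*-null sequence `ζⱼ` in `C(K)*` with `ζⱼ (f_{mⱼ}) > ε`, and
approximating `f_{mⱼ}` by locally constant functions yields disjoint clopen sets `cⱼ` with
`|ζⱼ (χ_{cⱼ})| > δ`. This contradicts the subsequential completeness of the clopen algebra: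
split the indices into infinitely many infinite blocks and take a supremum `S_r` of a
subsequence of the `cⱼ` in each block. As `ζⱼ (χ_{S_r}) → 0`, for some `j` in each block the
variation of `ζⱼ` on `S_r \ cⱼ` is at least `δ / 2`; keeping one such `j` per block and
iterating produces, for a fixed functional, arbitrarily many disjoint clopen sets of
variation `δ / 2`, which is impossible since these variations add up to at most `‖ζⱼ‖`.
-/

section ClopenIndicator

variable {K : Type*} [TopologicalSpace K]

/-- Junk value `0` unless `b` is clopen. -/
noncomputable def clopenIndicator (b : Set K) : C(K, ℝ) :=
  open Classical in
  if hb : IsClopen b then LocallyConstant.charFn ℝ hb else 0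

theorem clopenIndicator_apply {b : Set K} (hb : IsClopen b) (x : K) :
    clopenIndicator b x = b.indicator 1 x := by
  simp [clopenIndicator, hb, ← LocallyConstant.coe_charFn ℝ hb]

theorem clopenIndicator_union {b c : Set K} (hb : IsClopen b) (hc : IsClopen c)
    (hbc : Disjoint b c) : clopenIndicator (b ∪ c) = clopenIndicator b + clopenIndicator c := by
  ext x
  simp [clopenIndicator_apply, hb, hc, hb.union hc, Set.indicator_union_of_disjoint hbc]

theorem norm_clopenIndicator_le [CompactSpace K] (b : Set K) : ‖clopenIndicator b‖ ≤ 1 := by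
  by_cases hb : IsClopen b
  · refine (ContinuousMap.norm_le _ zero_le_one).2 fun x => ?_
    by_cases hx : x ∈ b <;> simp [clopenIndicator_apply hb, hx]
  · simp [clopenIndicator, hb]

end ClopenIndicator

section Variation

variable {K : Type*} [TopologicalSpace K] [CompactSpace K]

/-- For clopen `b` this is the total variation `|μ|(b)` of the measure representing `ζ`. -/
noncomputable def variation (ζ : StrongDual ℝ C(K, ℝ)) (b : Set K) : ℝ :=
  sSup (ζ '' {g | ‖g‖ ≤ 1 ∧ ∀ x ∉ b, g x = 0})

variable (ζ : StrongDual ℝ C(K, ℝ))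

theorem le_variation {b : Set K} {g : C(K, ℝ)} (hg : ‖g‖ ≤ 1) (hgb : ∀ x ∉ b, g x = 0) :
    ζ g ≤ variation ζ b :=
  le_csSup ⟨‖ζ‖, Set.forall_mem_image.2 fun _ h => (le_abs_self _).trans (ζ.unit_le_opNorm _ h.1)⟩
    ⟨g, ⟨hg, hgb⟩, rfl⟩

theorem variation_nonneg (b : Set K) : 0 ≤ variation ζ b := by
  simpa using le_variation ζ (b := b) (g := 0) (by simp) fun _ _ => rfl

theorem variation_le_norm (b : Set K) : variation ζ b ≤ ‖ζ‖ :=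
  csSup_le ⟨_, 0, ⟨by simp, fun _ _ => rfl⟩, rfl⟩
    (Set.forall_mem_image.2 fun _ h => (le_abs_self _).trans (ζ.unit_le_opNorm _ h.1))

theorem abs_apply_clopenIndicator_le_variation {b : Set K} (hb : IsClopen b) :
    |ζ (clopenIndicator b)| ≤ variation ζ b := by
  have hout : ∀ x ∉ b, clopenIndicator b x = 0 := fun x hx => by
    simp [clopenIndicator_apply hb, hx]
  refine abs_le.2 ⟨?_, le_variation ζ (norm_clopenIndicator_le b) hout⟩
  have := le_variation ζ (b := b) (g := -clopenIndicator b)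
    (by simpa using norm_clopenIndicator_le b) fun x hx => by simp [hout x hx]
  simp only [map_neg] at this
  linarith

theorem variation_add_le_variation_union {b c : Set K} (hbc : Disjoint b c) :
    variation ζ b + variation ζ c ≤ variation ζ (b ∪ c) := by
  refine le_of_forall_pos_le_add fun η hη => ?_
  have hne : ∀ d : Set K, (ζ '' {g | ‖g‖ ≤ 1 ∧ ∀ x ∉ d, g x = 0}).Nonempty :=
    fun _ => ⟨_, 0, ⟨by simp, fun _ _ => rfl⟩, rfl⟩
  obtain ⟨_, ⟨g, ⟨hg, hgb⟩, rfl⟩, hζg⟩ :=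
    exists_lt_of_lt_csSup (hne b) (show variation ζ b - η / 2 < variation ζ b by linarith)
  obtain ⟨_, ⟨h, ⟨hh, hhc⟩, rfl⟩, hζh⟩ :=
    exists_lt_of_lt_csSup (hne c) (show variation ζ c - η / 2 < variation ζ c by linarith)
  have hsum : ‖g + h‖ ≤ 1 := by
    refine (ContinuousMap.norm_le _ zero_le_one).2 fun x => ?_
    by_cases hxb : x ∈ b
    · have hxc : x ∉ c := Set.disjoint_left.1 hbc hxb
      simpa [hhc x hxc] using (g.norm_coe_le_norm x).trans hg
    · simpa [hgb x hxb] using (h.norm_coe_le_norm x).trans hh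
  have := le_variation ζ (b := b ∪ c) hsum fun x hx => by
    simp [hgb x fun h => hx (Or.inl h), hhc x fun h => hx (Or.inr h)]
  rw [map_add] at this
  linarith

theorem sum_variation_le_norm {ι : Type*} (s : Finset ι) {d : ι → Set K}
    (hd : (s : Set ι).PairwiseDisjoint d) : ∑ i ∈ s, variation ζ (d i) ≤ ‖ζ‖ := by
  classical
  suffices ∑ i ∈ s, variation ζ (d i) ≤ variation ζ (⋃ i ∈ s, d i) from
    this.trans (variation_le_norm ζ _)
  induction s using Finset.induction_on with
  | empty => simpa using variation_nonneg ζ ∅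
  | insert a s ha ih =>
    rw [Finset.sum_insert ha, Finset.set_biUnion_insert]
    have hdisj : Disjoint (d a) (⋃ i ∈ s, d i) :=
      Set.disjoint_iUnion₂_right.2 fun i hi =>
        hd (by simp) (by simp [hi]) fun h => ha (h ▸ hi)
    have := ih (hd.subset (by simp))
    linarith [variation_add_le_variation_union ζ hdisj]

end Variation

section LocallyConstant

variable {K : Type*} [TopologicalSpace K]

theorem LocallyConstant.isClopen_preimage (ℓ : LocallyConstant K ℝ) (W : Set ℝ) :
    IsClopen (ℓ ⁻¹' W) :=
  ⟨⟨ℓ.isLocallyConstant Wᶜ⟩, ℓ.isLocallyConstant W⟩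

theorem LocallyConstant.clopenIndicator_preimage (ℓ : LocallyConstant K ℝ) (W : Set ℝ) :
    clopenIndicator (ℓ ⁻¹' W) = ((ℓ.map (W.indicator 1) : LocallyConstant K ℝ) : C(K, ℝ)) := by
  ext x
  by_cases hx : ℓ x ∈ W <;> simp [clopenIndicator_apply (ℓ.isClopen_preimage W), hx]

variable [CompactSpace K]

theorem LocallyConstant.map_eq_sum_smul_clopenIndicator (ℓ : LocallyConstant K ℝ) (φ : ℝ → ℝ) :
    (ℓ.map φ : C(K, ℝ)) =
      ∑ v ∈ ℓ.range_finite.toFinset, φ v • clopenIndicator (ℓ ⁻¹' {v}) := by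
  ext x
  rw [ContinuousMap.sum_apply, Finset.sum_eq_single (ℓ x)]
  · simp [clopenIndicator_apply (ℓ.isClopen_preimage _)]
  · intro v _ hv
    simp [clopenIndicator_apply (ℓ.isClopen_preimage _), Ne.symm hv]
  · simp

theorem LocallyConstant.exists_abs_apply_le (ζ : StrongDual ℝ C(K, ℝ)) (ℓ : LocallyConstant K ℝ) :
    ∃ P : Set K, IsClopen P ∧ P ⊆ {x | ℓ x ≠ 0} ∧
      |ζ ℓ| ≤ 2 * ‖(ℓ : C(K, ℝ))‖ * |ζ (clopenIndicator P)| := by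
  set ν : ℝ → ℝ := fun v => ζ (clopenIndicator (ℓ ⁻¹' {v}))
  have hζ : ∀ φ : ℝ → ℝ, ζ (ℓ.map φ) = ∑ v ∈ ℓ.range_finite.toFinset, φ v * ν v := fun φ => by
    simp [ℓ.map_eq_sum_smul_clopenIndicator φ, ν]
  -- a Hahn decomposition of `ζ` relative to the level sets of `ℓ`
  set pos : Set ℝ := {v | v ≠ 0 ∧ 0 ≤ ν v}
  set neg : Set ℝ := {v | v ≠ 0 ∧ ν v < 0}
  have hpos : ζ (clopenIndicator (ℓ ⁻¹' pos)) =
      ∑ v ∈ ℓ.range_finite.toFinset, pos.indicator 1 v * ν v := by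
    rw [ℓ.clopenIndicator_preimage, hζ]
  have hneg : ζ (clopenIndicator (ℓ ⁻¹' neg)) =
      ∑ v ∈ ℓ.range_finite.toFinset, neg.indicator 1 v * ν v := by
    rw [ℓ.clopenIndicator_preimage, hζ]
  have hsign : ∀ v ≠ 0, (pos.indicator 1 v - neg.indicator 1 v) * ν v = |ν v| := by
    intro v hv
    by_cases hν : 0 ≤ ν v
    · simp [pos, neg, hv, hν, abs_of_nonneg hν]
    · simp [pos, neg, hv, not_le.1 hν, abs_of_neg (not_le.1 hν)]
  have hsplit : |ζ ℓ| ≤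
      ‖(ℓ : C(K, ℝ))‖ * (ζ (clopenIndicator (ℓ ⁻¹' pos)) - ζ (clopenIndicator (ℓ ⁻¹' neg))) := by
    rw [hpos, hneg, ← Finset.sum_sub_distrib, Finset.mul_sum, show ζ ℓ = ζ (ℓ.map id) from rfl, hζ]
    refine (Finset.abs_sum_le_sum_abs _ _).trans (Finset.sum_le_sum fun v hv => ?_)
    obtain ⟨x, rfl⟩ := (Set.Finite.mem_toFinset _).1 hv
    by_cases h0 : ℓ x = 0
    · simp [h0, pos, neg]
    rw [← sub_mul, hsign _ h0, id_eq, abs_mul]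
    exact mul_le_mul_of_nonneg_right ((ℓ : C(K, ℝ)).norm_coe_le_norm x) (abs_nonneg _)
  have hsub : ∀ W : Set ℝ, W ⊆ {0}ᶜ → ℓ ⁻¹' W ⊆ {x | ℓ x ≠ 0} := fun W hW x hx => hW hx
  rcases le_total |ζ (clopenIndicator (ℓ ⁻¹' neg))| |ζ (clopenIndicator (ℓ ⁻¹' pos))| with h | h
  · refine ⟨ℓ ⁻¹' pos, ℓ.isClopen_preimage _, hsub _ fun v hv => hv.1, ?_⟩
    nlinarith [norm_nonneg (ℓ : C(K, ℝ)), le_abs_self (ζ (clopenIndicator (ℓ ⁻¹' pos))),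
      neg_abs_le (ζ (clopenIndicator (ℓ ⁻¹' neg)))]
  · refine ⟨ℓ ⁻¹' neg, ℓ.isClopen_preimage _, hsub _ fun v hv => hv.1, ?_⟩
    nlinarith [norm_nonneg (ℓ : C(K, ℝ)), le_abs_self (ζ (clopenIndicator (ℓ ⁻¹' pos))),
      neg_abs_le (ζ (clopenIndicator (ℓ ⁻¹' neg)))]

variable [T2Space K] [TotallyDisconnectedSpace K]

theorem LocallyConstant.exists_norm_sub_lt (g : C(K, ℝ)) {η : ℝ} (hη : 0 < η) :
    ∃ ℓ : LocallyConstant K ℝ, ‖g - ℓ‖ < η := by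
  have hsep : (LocallyConstant.toContinuousMapAlgHom ℝ :
      LocallyConstant K ℝ →ₐ[ℝ] C(K, ℝ)).range.SeparatesPoints := by
    intro x y hxy
    obtain ⟨U, hU, hxU, hyU⟩ := exists_isClopen_of_totally_separated hxy
    refine ⟨_, ⟨_, ⟨LocallyConstant.charFn ℝ hU, rfl⟩, rfl⟩, ?_⟩
    simp [LocallyConstant.coe_charFn, hxU, Set.notMem_of_mem_compl hyU]
  obtain ⟨_, ⟨ℓ, rfl⟩, hℓ⟩ := Metric.mem_closure_iff.1
    (ContinuousMap.continuousMap_mem_subalgebra_closure_of_separatesPoints _ hsep g) η hη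
  exact ⟨ℓ, by rwa [← dist_eq_norm]⟩

theorem ContinuousMap.exists_locallyConstant_approx (g : C(K, ℝ)) {η : ℝ} (hη : 0 < η) :
    ∃ ℓ : LocallyConstant K ℝ, ‖g - ℓ‖ ≤ 2 * η ∧ ‖(ℓ : C(K, ℝ))‖ ≤ ‖g‖ + η ∧
      ∀ x, ℓ x ≠ 0 → g x ≠ 0 := by
  obtain ⟨ℓ, hℓ⟩ := LocallyConstant.exists_norm_sub_lt g hη
  have hclose : ∀ x, |g x - ℓ x| < η := fun x =>
    ((g - ℓ).norm_coe_le_norm x).trans_lt hℓ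
  -- cut `ℓ` off where it is smaller than `η`
  refine ⟨ℓ.map fun v => if η < |v| then v else 0, ?_, ?_, fun x hx hgx => ?_⟩
  · refine (ContinuousMap.norm_le _ (by positivity)).2 fun x => ?_
    have := hclose x
    simp only [ContinuousMap.sub_apply, LocallyConstant.coe_continuousMap,
      LocallyConstant.map_apply, Function.comp_apply, Real.norm_eq_abs]
    split_ifs with h
    · linarith
    · rw [sub_zero]
      linarith [abs_sub_abs_le_abs_sub (g x) (ℓ x), not_lt.1 h]
  · refine (ContinuousMap.norm_le _ (by positivity)).2 fun x => ?_
    have := hclose x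
    simp only [LocallyConstant.coe_continuousMap, LocallyConstant.map_apply,
      Function.comp_apply, Real.norm_eq_abs]
    split_ifs
    · linarith [abs_sub_abs_le_abs_sub (ℓ x) (g x), abs_sub_comm (g x) (ℓ x),
        g.norm_coe_le_norm x, Real.norm_eq_abs (g x)]
    · rw [abs_zero]
      positivity
  · have := hclose x
    simp only [LocallyConstant.map_apply, Function.comp_apply] at hx
    split_ifs at hx with h
    · rw [hgx, zero_sub, abs_neg] at this
      linarith
    · exact hx rfl

theorem exists_isClopen_subset_support_le_abs_apply (ζ : StrongDual ℝ C(K, ℝ)) {R C ε : ℝ}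
    (hζ : ‖ζ‖ ≤ R) {g : C(K, ℝ)} (hg : ‖g‖ ≤ C) (hε : 0 < ε) (hζg : ε ≤ |ζ g|) :
    ∃ P : Set K, IsClopen P ∧ P ⊆ {x | g x ≠ 0} ∧ ε / (4 * (C + 1)) ≤ |ζ (clopenIndicator P)| := by
  have hR : 0 ≤ R := (norm_nonneg ζ).trans hζ
  have hC : 0 ≤ C := (norm_nonneg g).trans hg
  set η := min 1 (ε / (4 * (R + 1)))
  have hη : 0 < η := by positivity
  have hηR : 2 * R * η ≤ ε / 2 := by
    have : (R + 1) * η ≤ ε / 4 := by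
      rw [← le_div_iff₀' (by positivity), div_div]
      exact min_le_right _ _
    nlinarith
  obtain ⟨ℓ, hgℓ, hℓ, hsupp⟩ := g.exists_locallyConstant_approx hη
  obtain ⟨P, hP, hPℓ, hζℓ⟩ := ℓ.exists_abs_apply_le ζ
  refine ⟨P, hP, fun x hx => hsupp x (hPℓ hx), ?_⟩
  have happrox : |ζ g - ζ ℓ| ≤ ε / 2 := by
    rw [← map_sub]
    calc |ζ (g - ℓ)| ≤ ‖ζ‖ * ‖g - ℓ‖ := ζ.le_opNorm _
      _ ≤ R * (2 * η) := by gcongr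
      _ ≤ ε / 2 := by linarith
  have hℓC : ‖(ℓ : C(K, ℝ))‖ ≤ C + 1 := hℓ.trans (by linarith [min_le_left 1 (ε / (4 * (R + 1)))])
  rw [div_le_iff₀ (by positivity)]
  nlinarith [abs_sub_abs_le_abs_sub (ζ g) (ζ ℓ), abs_nonneg (ζ (clopenIndicator P))]

end LocallyConstant

section SubseqComplete

variable {K : Type*} [TopologicalSpace K]

def IsClopenSup (a : ℕ → Set K) (M : Set ℕ) (s : Set K) : Prop :=
  IsClopen s ∧ (∀ n ∈ M, a n ⊆ s) ∧ ∀ t : Set K, IsClopen t → (∀ n ∈ M, a n ⊆ t) → s ⊆ t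

/-- Haydon's subsequential completeness property of the Boolean algebra of clopen sets. -/
def SubseqComplete (K : Type*) [TopologicalSpace K] : Prop :=
  ∀ a : ℕ → Set K, (∀ n, IsClopen (a n)) → (∀ m n, m ≠ n → Disjoint (a m) (a n)) →
    ∃ M : Set ℕ, M.Infinite ∧ ∃ s : Set K, IsClopenSup a M s

theorem IsClopenSup.disjoint {a : ℕ → Set K} {M : Set ℕ} {s e : Set K} (hs : IsClopenSup a M s)
    (he : IsClopen e) (hea : ∀ n ∈ M, Disjoint e (a n)) : Disjoint e s := by
  have : s ⊆ s \ e := hs.2.2 _ (hs.1.diff he) fun n hn =>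
    Set.subset_sdiff.2 ⟨hs.2.1 n hn, (hea n hn).symm⟩
  exact Set.disjoint_right.2 fun x hx => (this hx).2

variable [CompactSpace K]

theorem eventually_le_variation_sdiff {ξ : ℕ → StrongDual ℝ C(K, ℝ)} {a : ℕ → Set K}
    {S : Set K} {δ : ℝ} (hδ : 0 < δ) (hS : IsClopen S) (ha : ∀ i, IsClopen (a i))
    (hval : ∀ i, δ < |ξ i (clopenIndicator (a i))|)
    (hnull : Tendsto (fun i => ξ i (clopenIndicator S)) atTop (𝓝 0)) :
    ∀ᶠ i in atTop, a i ⊆ S → δ / 2 ≤ variation (ξ i) (S \ a i) := by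
  filter_upwards [hnull.eventually (Metric.ball_mem_nhds _ (half_pos hδ))] with i hi haS
  rw [Real.dist_0_eq_abs] at hi
  have hsplit : clopenIndicator S = clopenIndicator (a i) + clopenIndicator (S \ a i) := by
    rw [← clopenIndicator_union (ha i) (hS.diff (ha i)) Set.disjoint_sdiff_right,
      Set.union_sdiff_cancel haS]
  have := abs_apply_clopenIndicator_le_variation (ξ i) (hS.diff (ha i))
  rw [hsplit, map_add] at hi
  have htri := abs_add_le (ξ i (clopenIndicator (a i)) + ξ i (clopenIndicator (S \ a i)))
    (-ξ i (clopenIndicator (S \ a i)))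
  rw [add_neg_cancel_right, abs_neg] at htri
  linarith [hval i]

end SubseqComplete

section Exhaustion

variable {K : Type*} [TopologicalSpace K] [CompactSpace K]

/-- Stage `t` of the exhaustion: for every `r`, the functional `ζ (live r)` has variation at
least `κ` on each of `t` disjoint clopen sets that avoid all the live atoms `c (live r')`. -/
structure ChunkConfig (ζ : ℕ → StrongDual ℝ C(K, ℝ)) (c : ℕ → Set K) (κ : ℝ) (t : ℕ) where
  live : ℕ → ℕ
  injective_live : Function.Injective live
  chunk : ℕ → ℕ → Set K
  isClopen_chunk : ∀ r, ∀ s < t, IsClopen (chunk r s)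
  le_variation_chunk : ∀ r, ∀ s < t, κ ≤ variation (ζ (live r)) (chunk r s)
  disjoint_chunk : ∀ r, ∀ s < t, ∀ s' < t, s ≠ s' → Disjoint (chunk r s) (chunk r s')
  disjoint_chunk_atom : ∀ r, ∀ s < t, ∀ r', Disjoint (chunk r s) (c (live r'))

variable {ζ : ℕ → StrongDual ℝ C(K, ℝ)} {c : ℕ → Set K} {κ : ℝ} {t : ℕ}

theorem ChunkConfig.natCast_mul_le (cfg : ChunkConfig ζ c κ t) {R : ℝ} (hR : ∀ j, ‖ζ j‖ ≤ R) :
    t * κ ≤ R := by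
  have hdisj : ((Finset.range t : Finset ℕ) : Set ℕ).PairwiseDisjoint (cfg.chunk 0) :=
    fun s hs s' hs' hss' => cfg.disjoint_chunk 0 s (by simpa using hs) s' (by simpa using hs') hss'
  calc (t : ℝ) * κ = ∑ s ∈ Finset.range t, κ := by simp
    _ ≤ ∑ s ∈ Finset.range t, variation (ζ (cfg.live 0)) (cfg.chunk 0 s) :=
      Finset.sum_le_sum fun s hs => cfg.le_variation_chunk 0 s (Finset.mem_range.1 hs)
    _ ≤ ‖ζ (cfg.live 0)‖ := sum_variation_le_norm _ _ hdisj
    _ ≤ R := hR _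

theorem ChunkConfig.nonempty_succ (hsup : SubseqComplete K)
    (hnull : ∀ g, Tendsto (fun j => ζ j g) atTop (𝓝 0)) (hc : ∀ j, IsClopen (c j))
    (hcd : ∀ j k, j ≠ k → Disjoint (c j) (c k)) {δ : ℝ} (hδ : 0 < δ)
    (hval : ∀ j, δ < |ζ j (clopenIndicator (c j))|) (cfg : ChunkConfig ζ c (δ / 2) t) :
    Nonempty (ChunkConfig ζ c (δ / 2) (t + 1)) := by
  -- split the live indices into the blocks `r`, indexed by `i ↦ live (pair r i)`
  have hinj : ∀ r, Function.Injective fun i => cfg.live (Nat.pair r i) := fun r i i' h =>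
    (Nat.pair_eq_pair.1 (cfg.injective_live h)).2
  choose M hM S hS using fun r => hsup (fun i => c (cfg.live (Nat.pair r i))) (fun _ => hc _)
    fun i i' hii' => hcd _ _ ((hinj r).ne hii')
  have hgood : ∀ r, ∃ i ∈ M r,
      δ / 2 ≤ variation (ζ (cfg.live (Nat.pair r i))) (S r \ c (cfg.live (Nat.pair r i))) := by
    intro r
    obtain ⟨N, hN⟩ := eventually_atTop.1 <| eventually_le_variation_sdiff hδ (hS r).1
      (fun _ => hc _) (fun _ => hval _) ((hnull _).comp (hinj r).nat_tendsto_atTop)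
    obtain ⟨i, hi, hNi⟩ := (hM r).exists_gt N
    exact ⟨i, hi, hN i hNi.le ((hS r).2.1 i hi)⟩
  choose i hiM hi using hgood
  set p : ℕ → ℕ := fun r => Nat.pair r (i r)
  have hchunk_S : ∀ q, ∀ s < t, ∀ r, Disjoint (cfg.chunk q s) (S r) := fun q s hs r =>
    (hS r).disjoint (cfg.isClopen_chunk q s hs) fun _ _ => cfg.disjoint_chunk_atom q s hs _
  have hatom_S : ∀ r r', r' ≠ r → Disjoint (c (cfg.live (p r'))) (S r) := fun r r' hr =>
    (hS r).disjoint (hc _) fun i' _ => hcd _ _ <| cfg.injective_live.ne fun h =>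
      hr (Nat.pair_eq_pair.1 h).1
  have hlast : ∀ s < t + 1, ¬ s < t → s = t := fun s hs hst => by omega
  refine ⟨{
    live := fun r => cfg.live (p r)
    injective_live := fun r r' h => (Nat.pair_eq_pair.1 (cfg.injective_live h)).1
    chunk := fun r s => if s < t then cfg.chunk (p r) s else S r \ c (cfg.live (p r))
    isClopen_chunk := fun r s hs => ?_
    le_variation_chunk := fun r s hs => ?_
    disjoint_chunk := fun r s hs s' hs' hss' => ?_
    disjoint_chunk_atom := fun r s hs r' => ?_ }⟩
  · split_ifs with hst
    · exact cfg.isClopen_chunk _ s hst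
    · exact (hS r).1.diff (hc _)
  · split_ifs with hst
    · exact cfg.le_variation_chunk _ s hst
    · exact hi r
  · split_ifs with hst hst' hst'
    · exact cfg.disjoint_chunk _ s hst s' hst' hss'
    · exact (hchunk_S _ s hst r).mono_right Set.sdiff_subset
    · exact ((hchunk_S _ s' hst' r).mono_right Set.sdiff_subset).symm
    · exact absurd ((hlast s hs hst).trans (hlast s' hs' hst').symm) hss'
  · split_ifs with hst
    · exact cfg.disjoint_chunk_atom _ s hst _
    · rcases eq_or_ne r' r with rfl | hr
      · exact Set.disjoint_sdiff_left
      · exact ((hatom_S r r' hr).symm.mono_left Set.sdiff_subset)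

theorem SubseqComplete.exists_abs_apply_clopenIndicator_le (hsup : SubseqComplete K)
    (hnull : ∀ g, Tendsto (fun j => ζ j g) atTop (𝓝 0)) {R : ℝ} (hR : ∀ j, ‖ζ j‖ ≤ R)
    (hc : ∀ j, IsClopen (c j)) (hcd : ∀ j k, j ≠ k → Disjoint (c j) (c k)) {δ : ℝ}
    (hδ : 0 < δ) : ∃ j, |ζ j (clopenIndicator (c j))| ≤ δ := by
  by_contra! hval
  have hcfg : ∀ t, Nonempty (ChunkConfig ζ c (δ / 2) t) := by
    intro t
    induction t with
    | zero => exact ⟨⟨id, Function.injective_id, fun _ _ => ∅, by simp, by simp, by simp, by simp⟩⟩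
    | succ t ih => exact ih.elim (ChunkConfig.nonempty_succ hsup hnull hc hcd hδ hval)
  obtain ⟨t, ht⟩ := exists_nat_gt (2 * R / δ)
  have := (hcfg t).some.natCast_mul_le hR
  rw [div_lt_iff₀ hδ] at ht
  linarith

end Exhaustion

section Grothendieck

variable {K : Type*} [TopologicalSpace K] [CompactSpace K] [T2Space K] [TotallyDisconnectedSpace K]

theorem SubseqComplete.tendsto_apply_of_disjoint (hsup : SubseqComplete K)
    {ζ : ℕ → StrongDual ℝ C(K, ℝ)} (hnull : ∀ g, Tendsto (fun j => ζ j g) atTop (𝓝 0))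
    {g : ℕ → C(K, ℝ)} (hg : ∃ C, ∀ j, ‖g j‖ ≤ C) (hdisj : ∀ i j, i ≠ j → g i * g j = 0) :
    Tendsto (fun j => ζ j (g j)) atTop (𝓝 0) := by
  obtain ⟨R, hR⟩ := banach_steinhaus fun f => by
    obtain ⟨C, hC⟩ := (hnull f).norm.bddAbove_range
    exact ⟨C, fun j => hC ⟨j, rfl⟩⟩
  obtain ⟨C, hC⟩ := hg
  have hC0 : 0 ≤ C := (norm_nonneg _).trans (hC 0)
  rw [Metric.tendsto_atTop]
  by_contra! h
  obtain ⟨ε, hε, h⟩ := h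
  obtain ⟨φ, hφ, hφε⟩ := Nat.exists_strictMono_subsequence fun N => by
    obtain ⟨n, hn, hεn⟩ := h (N + 1)
    exact ⟨n, hn, by rwa [Real.dist_0_eq_abs] at hεn⟩
  choose P hP hPg hζP using fun j =>
    exists_isClopen_subset_support_le_abs_apply (ζ (φ j)) (hR _) (hC (φ j)) hε (hφε j)
  have hPdisj : ∀ j k, j ≠ k → Disjoint (P j) (P k) := fun j k hjk =>
    Set.disjoint_left.2 fun x hxj hxk => by
      have := congrArg (· x) (hdisj _ _ (hφ.injective.ne hjk))
      simp only [ContinuousMap.mul_apply, ContinuousMap.zero_apply, mul_eq_zero] at this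
      exact this.elim (hPg j hxj) (hPg k hxk)
  obtain ⟨j, hj⟩ := hsup.exists_abs_apply_clopenIndicator_le
    (fun f => (hnull f).comp hφ.tendsto_atTop) (fun j => hR (φ j)) hP hPdisj
    (δ := ε / (8 * (C + 1))) (by positivity)
  have := hζP j
  have : ε / (8 * (C + 1)) < ε / (4 * (C + 1)) := by
    gcongr
    linarith
  linarith

end Grothendieck

theorem exists_tendsto_atTop_strictMono_lt {a : ℕ → ℕ → ℝ} {ε : ℝ}
    (ha : ∀ m, Tendsto (fun n => a n m) atTop (𝓝 0)) (hε : 0 < ε)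
    (h : ∀ k, ∃ n > k, ∃ m, ε < a n m) :
    ∃ n m : ℕ → ℕ, Tendsto n atTop atTop ∧ StrictMono m ∧ ∀ j, ε < a (n j) (m j) := by
  have hlarge : ∀ N, ∃ n ≥ N, ∃ m ≥ N, ε < a n m := by
    intro N
    obtain ⟨n₀, hn₀⟩ := eventually_atTop.1 <| (eventually_all_finset (Finset.range N)).2
      fun m _ => (ha m).eventually (gt_mem_nhds hε)
    obtain ⟨n, hn, m, hm⟩ := h (max n₀ N)
    refine ⟨n, by omega, m, ?_, hm⟩
    by_contra! hmN
    exact (hn₀ n (by omega) m (Finset.mem_range.2 hmN)).not_gt hm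
  choose n hn m hm hlt using hlarge
  obtain ⟨φ, hφ, hmφ⟩ := strictMono_subseq_of_tendsto_atTop (tendsto_atTop_mono hm tendsto_id)
  exact ⟨n ∘ φ, m ∘ φ, (tendsto_atTop_mono hn tendsto_id).comp hφ.tendsto_atTop, hmφ,
    fun j => hlt (φ j)⟩

theorem SubseqComplete.eventually_forall_norm_apply_le {K V : Type*} [TopologicalSpace K]
    [CompactSpace K] [T2Space K] [TotallyDisconnectedSpace K] [SeminormedAddCommGroup V]
    [NormedSpace ℝ V] (hsup : SubseqComplete K) {u : ℕ → C(K, ℝ) →L[ℝ] V}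
    (hu : ∀ g, Tendsto (fun n => u n g) atTop (𝓝 0)) {f : ℕ → C(K, ℝ)}
    (hbdd : ∃ C, ∀ m, ‖f m‖ ≤ C) (hdisj : ∀ m m', m ≠ m' → f m * f m' = 0) :
    ∀ ε : ℝ, 0 < ε → ∃ k : ℕ, ∀ n > k, ∀ m, ‖u n (f m)‖ ≤ ε := by
  intro ε hε
  by_contra! h
  obtain ⟨n, m, hn, hm, hlt⟩ :=
    exists_tendsto_atTop_strictMono_lt
      (fun m => tendsto_zero_iff_norm_tendsto_zero.1 (hu (f m))) hε h
  -- norming functionals turn the vectors `u (n j) (f (m j))` into numbers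
  choose ξ hξ hξu using fun j => exists_dual_vector'' ℝ (u (n j) (f (m j)))
  have hnull : ∀ g, Tendsto (fun j => (ξ j).comp (u (n j)) g) atTop (𝓝 0) := fun g =>
    squeeze_zero_norm (fun j => (ξ j).le_of_opNorm_le_of_le (hξ j) le_rfl |>.trans_eq (one_mul _))
      ((tendsto_zero_iff_norm_tendsto_zero.1 (hu g)).comp hn)
  have := hsup.tendsto_apply_of_disjoint hnull (g := f ∘ m)
    (hbdd.imp fun C hC j => hC (m j)) fun i j hij => hdisj _ _ (hm.injective.ne hij)
  obtain ⟨j, hj⟩ := (this.eventually (gt_mem_nhds hε)).exists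
  simp only [ContinuousLinearMap.comp_apply, Function.comp_apply, hξu] at hj
  exact lt_asymm (hlt j) (by exact_mod_cast hj)

theorem uniform_smallness_of_distances_general
    (K : Type*) [TopologicalSpace K] [CompactSpace K] [T2Space K]
    [TotallyDisconnectedSpace K]
    (B : Set (Set K))
    (j : Set K → Set K)
    (hsup : ∀ a : ℕ → Set K, (∀ n, IsClopen (a n)) →
      (∀ m n, m ≠ n → Disjoint (a m) (a n)) →
      ∃ M : Set ℕ, M.Infinite ∧ ∃ s : Set K, IsClopen s ∧ (∀ n ∈ M, a n ⊆ s) ∧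
        ∀ t : Set K, IsClopen t → (∀ n ∈ M, a n ⊆ t) → s ⊆ t)
    (T : C(K, ℝ) →L[ℝ] ↥(Xplus K {b ∈ B | j b = b}))
    (f : ℕ → C(K, ℝ)) (hbdd : ∃ C : ℝ, ∀ m, ‖f m‖ ≤ C)
    (hdisj : ∀ m m', m ≠ m' → f m * f m' = 0) :
    ∀ ε : ℝ, 0 < ε → ∃ k : ℕ, ∀ n > k, ∀ m : ℕ,
      Metric.infDist ((T (f m) : lp (fun _ : ℕ => C(K, ℝ)) ⊤) n)
        ((Zspan K {b ∈ B | j b = b} : Submodule ℝ C(K, ℝ)) : Set C(K, ℝ)) ≤ ε := by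
  set Z := Zspan K {b ∈ B | j b = b}
  -- `dist (Pₙ (T g), Z)` is the norm of `Pₙ (T g)` in the quotient `C(K) ⧸ Z`
  let u : ℕ → C(K, ℝ) →L[ℝ] C(K, ℝ) ⧸ Z := fun n =>
    Z.mkQL ∘L lp.evalCLM ℝ (fun _ : ℕ => C(K, ℝ)) ⊤ n ∘L (Xplus K _).subtypeL ∘L T
  have hu : ∀ g n, ‖u n g‖ = infDist ((T g : lp (fun _ : ℕ => C(K, ℝ)) ⊤) n) Z := fun g n =>
    QuotientAddGroup.norm_mk (S := Z.toAddSubgroup) _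
  have hnull : ∀ g, Tendsto (fun n => u n g) atTop (𝓝 0) := fun g =>
    squeeze_zero_norm (E := C(K, ℝ) ⧸ Z) (fun n => (hu g n).le) (T g).2
  simpa only [hu] using
    SubseqComplete.eventually_forall_norm_apply_le (V := C(K, ℝ) ⧸ Z) hsup hnull hbdd hdisj

/-- Uniformity lemma: for `T : C(K) → X₊` and a bounded pairwise disjoint sequence `(f_m)`,
the distances `dist (Pₙ (T f_m), Z)` are uniformly small for large `n`. -/
theorem uniform_smallness_of_distances
    (K : Type*) [TopologicalSpace K] [CompactSpace K] [T2Space K]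
    [TotallyDisconnectedSpace K] [TopologicalSpace.SeparableSpace K]
    (hperf : Perfect (Set.univ : Set K))
    (K₁ K₂ : Set K) (hK₁ : IsClopen K₁) (hK₂ : IsClopen K₂)
    (hdisjK : Disjoint K₁ K₂) (hcover : K₁ ∪ K₂ = Set.univ)
    (hops : ∀ T : C(K, ℝ) →L[ℝ] C(K, ℝ), ∃ g : C(K, ℝ), ∃ S : C(K, ℝ) →L[ℝ] C(K, ℝ),
      IsWeaklyCompactOp S ∧ ∀ f : C(K, ℝ), T f = g * f + S f)
    (hnolinf : ¬ ∃ (T : lp (fun _ : ℕ => ℝ) ⊤ →L[ℝ] C(K, ℝ)) (c : ℝ), 0 < c ∧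
      ∀ f : lp (fun _ : ℕ => ℝ) ⊤, c * ‖f‖ ≤ ‖T f‖)
    (B : Set (Set K)) (hBclopen : ∀ b ∈ B, IsClopen b)
    (hBempty : (∅ : Set K) ∈ B) (hBuniv : (Set.univ : Set K) ∈ B)
    (hBunion : ∀ b ∈ B, ∀ c ∈ B, b ∪ c ∈ B) (hBcompl : ∀ b ∈ B, bᶜ ∈ B)
    (hK₁B : K₁ ∈ B) (hK₂B : K₂ ∈ B)
    (hBdense : ∀ a : Set K, IsClopen a → a.Nonempty → ∃ b ∈ B, b.Nonempty ∧ b ⊆ a)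
    (j : Set K → Set K) (hjB : ∀ b ∈ B, j b ∈ B)
    (hjunion : ∀ b ∈ B, ∀ c ∈ B, j (b ∪ c) = j b ∪ j c)
    (hjcompl : ∀ b ∈ B, j bᶜ = (j b)ᶜ)
    (hjinv : ∀ b ∈ B, j (j b) = b)
    (hjK₁ : j K₁ = K₂)
    (hsup : ∀ a : ℕ → Set K, (∀ n, IsClopen (a n)) →
      (∀ m n, m ≠ n → Disjoint (a m) (a n)) →
      ∃ M : Set ℕ, M.Infinite ∧ ∃ s : Set K, IsClopen s ∧ (∀ n ∈ M, a n ⊆ s) ∧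
        ∀ t : Set K, IsClopen t → (∀ n ∈ M, a n ⊆ t) → s ⊆ t)
    (T : C(K, ℝ) →L[ℝ] ↥(Xplus K {b ∈ B | j b = b}))
    (f : ℕ → C(K, ℝ)) (hbdd : ∃ C : ℝ, ∀ m, ‖f m‖ ≤ C)
    (hdisj : ∀ m m', m ≠ m' → f m * f m' = 0) :
    ∀ ε : ℝ, 0 < ε → ∃ k : ℕ, ∀ n > k, ∀ m : ℕ,
      Metric.infDist ((T (f m) : lp (fun _ : ℕ => C(K, ℝ)) ⊤) n)
        ((Zspan K {b ∈ B | j b = b} : Submodule ℝ C(K, ℝ)) : Set C(K, ℝ)) ≤ ε :=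
  uniform_smallness_of_distances_general K B j hsup T f hbdd hdisj

end
end

section
/- Let K' and K'' be perfect compact Hausdorff spaces and let i : K'' → K' be a homeomorphism. Let φ, ψ ∈ C(K') and let S : C(K') → C(K'') be a weakly compact bounded linear operator such that for every f ∈ C(K'), (φ·f)∘i = (ψ·f)∘i + S(f). Then φ = ψ and S = 0. -/
open Topology Filter

noncomputable section

set_option maxHeartbeats 1000000
set_option synthInstance.maxHeartbeats 400000

/-- One step of the recursive construction: inside any open set `W` containing `x0`
we can find a point `x ≠ x0`, an open set `V ∋ x` with closure inside `W`, and a smaller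
open neighborhood `W'` of `x0` with closure inside `W` and disjoint from `closure V`. -/
lemma step_aux {K : Type*} [TopologicalSpace K] [CompactSpace K] [T2Space K]
    (hperf : Perfect (Set.univ : Set K)) (x0 : K) (W : Set K) (hWo : IsOpen W) (hx0 : x0 ∈ W) :
    ∃ (x : K) (V W' : Set K), IsOpen V ∧ x ∈ V ∧ closure V ⊆ W ∧
      IsOpen W' ∧ x0 ∈ W' ∧ closure W' ⊆ W ∧ Disjoint (closure W') (closure V) := by
  have hacc : AccPt x0 (Filter.principal (Set.univ : Set K)) := hperf.2 x0 (Set.mem_univ _)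
  rw [accPt_iff_nhds] at hacc
  obtain ⟨x, hxmem, hxne⟩ := hacc W (hWo.mem_nhds hx0)
  have hxW : x ∈ W \ {x0} := ⟨hxmem.1, hxne⟩
  obtain ⟨V, hVo, hxV, hVW⟩ := normal_exists_closure_subset (isClosed_singleton (x := x))
    (hWo.sdiff isClosed_singleton) (Set.singleton_subset_iff.2 hxW)
  have hx0' : x0 ∈ W \ closure V := ⟨hx0, fun hmem => (hVW hmem).2 rfl⟩
  obtain ⟨W', hW'o, hx0W', hW'sub⟩ := normal_exists_closure_subset (isClosed_singleton (x := x0))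
    (hWo.sdiff isClosed_closure) (Set.singleton_subset_iff.2 hx0')
  refine ⟨x, V, W', hVo, Set.singleton_subset_iff.1 hxV, hVW.trans Set.diff_subset,
    hW'o, Set.singleton_subset_iff.1 hx0W', (hW'sub.trans Set.diff_subset), ?_⟩
  exact Set.disjoint_left.2 fun a ha hmem => (hW'sub ha).2 hmem

/-- In a perfect compact Hausdorff space, inside any nonempty open set `U` we can find a
sequence of points `x n` lying in pairwise disjoint open subsets `V n` of `U`, together with
a cluster point `z` of the sequence avoiding all the `V n`. -/
lemma exists_seq_aux {K : Type*} [TopologicalSpace K] [CompactSpace K] [T2Space K]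
    (hperf : Perfect (Set.univ : Set K)) (x0 : K) (U : Set K) (hUo : IsOpen U) (hx0 : x0 ∈ U) :
    ∃ (x : ℕ → K) (V : ℕ → Set K) (z : K),
      (∀ n, IsOpen (V n)) ∧ (∀ n, x n ∈ V n) ∧ (∀ n, V n ⊆ U) ∧
      (Pairwise fun m n => Disjoint (V m) (V n)) ∧ (∀ n, z ∉ V n) ∧
      MapClusterPt z atTop x := by
  have hstep := fun (W : {W : Set K // IsOpen W ∧ x0 ∈ W}) =>
    step_aux hperf x0 W.1 W.2.1 W.2.2
  choose xf Vf Wf hVo hxV hVsub hWo hx0W hWsub hdisj using hstep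
  let Wc : ℕ → {W : Set K // IsOpen W ∧ x0 ∈ W} := fun n =>
    Nat.rec ⟨U, hUo, hx0⟩ (fun _ p => ⟨Wf p, hWo p, hx0W p⟩) n
  have hWc_succ : ∀ n, (Wc (n + 1)).1 = Wf (Wc n) := fun n => rfl
  set x : ℕ → K := fun n => xf (Wc n) with hxdef
  set V : ℕ → Set K := fun n => Vf (Wc n) with hVdef
  have hclWsub : ∀ n, closure (Wc (n + 1)).1 ⊆ (Wc n).1 := fun n => hWsub (Wc n)
  have hanti : ∀ m n, m ≤ n → (Wc n).1 ⊆ (Wc m).1 := by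
    intro m n hmn
    induction n with
    | zero => simp_all
    | succ k ih =>
      rcases Nat.lt_or_ge m (k + 1) with hlt | hge
      · exact (subset_closure.trans (hclWsub k)).trans (ih (Nat.lt_succ_iff.1 hlt))
      · have : m = k + 1 := le_antisymm hmn hge
        subst this; exact subset_rfl
  have hclV : ∀ n, closure (V n) ⊆ (Wc n).1 := fun n => hVsub (Wc n)
  have hdisj' : ∀ n, Disjoint (closure (Wc (n + 1)).1) (closure (V n)) := fun n => hdisj (Wc n)
  have hVU : ∀ n, V n ⊆ U := fun n =>
    subset_closure.trans ((hclV n).trans (hanti 0 n (Nat.zero_le n)))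
  have hVdisj : ∀ m n, m < n → Disjoint (V m) (V n) := by
    intro m n hmn
    have h1 : V n ⊆ closure (Wc (m + 1)).1 :=
      subset_closure.trans <| (hclV n).trans <| (hanti (m + 1) n hmn).trans subset_closure
    exact (Disjoint.mono h1 subset_closure (hdisj' m)).symm
  -- the tail of the sequence lies in `Wc (n+1)`
  have htail : ∀ n k, n + 1 ≤ k → x k ∈ (Wc (n + 1)).1 := by
    intro n k hk
    apply hanti (n + 1) k hk
    apply hclV k
    exact subset_closure (hxV (Wc k))
  obtain ⟨z, hz⟩ := exists_clusterPt_of_compactSpace (Filter.map x atTop)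
  have hzcl : MapClusterPt z atTop x := hz
  refine ⟨x, V, z, fun n => hVo (Wc n), fun n => hxV (Wc n), hVU, ?_, ?_, hzcl⟩
  · intro m n hmn
    rcases lt_or_gt_of_ne hmn with hlt | hlt
    · exact hVdisj m n hlt
    · exact (hVdisj n m hlt).symm
  · intro n hmem
    have hle : Filter.map x atTop ≤ Filter.principal (Wc (n + 1)).1 := by
      rw [Filter.le_principal_iff, Filter.mem_map]
      exact Filter.mem_of_superset (Filter.mem_atTop (n + 1)) fun k hk => htail n k hk
    have hzc : z ∈ closure (Wc (n + 1)).1 :=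
      mem_closure_iff_clusterPt.2 (hzcl.clusterPt.mono hle)
    exact Set.disjoint_left.1 (hdisj' n) hzc (subset_closure hmem)

/-- A cluster point of a convergent real sequence equals the limit. -/
lemma clusterPt_unique_of_tendsto {α : Type*} [TopologicalSpace α] [T2Space α] {a b : α}
    {u : ℕ → α} (h1 : MapClusterPt a atTop u) (h2 : Tendsto u atTop (𝓝 b)) : a = b := by
  have : ClusterPt a (𝓝 b) := h1.clusterPt.mono h2
  exact t2_iff_nhds.1 ‹T2Space α› this

/-- If `K'`, `K''` are perfect compact Hausdorff spaces, `i : K'' → K'` a homeomorphism,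
`φ, ψ ∈ C(K')`, `S : C(K') → C(K'')` weakly compact, and `(φ·f)∘i = (ψ·f)∘i + S f` for
every `f`, then `φ = ψ` and `S = 0`. -/
theorem multiplication_decomposition_unique
    (K' K'' : Type*) [TopologicalSpace K'] [CompactSpace K'] [T2Space K']
    [TopologicalSpace K''] [CompactSpace K''] [T2Space K'']
    (hperf' : Perfect (Set.univ : Set K')) (hperf'' : Perfect (Set.univ : Set K''))
    (i : K'' ≃ₜ K') (φ ψ : C(K', ℝ)) (S : C(K', ℝ) →L[ℝ] C(K'', ℝ))
    (hS : IsWeaklyCompactOp S)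
    (h : ∀ f : C(K', ℝ), (φ * f).comp (i : C(K'', K')) = (ψ * f).comp (i : C(K'', K')) + S f) :
    φ = ψ ∧ S = 0 := by
  set g : C(K', ℝ) := φ - ψ with hg
  -- pointwise formula for S
  have hSf : ∀ (f : C(K', ℝ)) (y : K''), S f y = g (i y) * f (i y) := by
    intro f y
    have hf := h f
    have := congrArg (fun F : C(K'', ℝ) => F y) hf
    simp only [ContinuousMap.comp_apply, ContinuousMap.add_apply, ContinuousMap.mul_apply,
      ContinuousMap.coe_coe] at this
    have : S f y = φ (i y) * f (i y) - ψ (i y) * f (i y) := by linarith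
    rw [this, hg]
    simp only [ContinuousMap.sub_apply]
    ring
  -- main claim: g = 0
  have hkey : φ = ψ := by
    by_contra hne
    have : ∃ x0 : K', g x0 ≠ 0 := by
      by_contra hz
      push_neg at hz
      apply hne
      ext t
      have := hz t
      simp only [hg, ContinuousMap.sub_apply, sub_eq_zero] at this
      exact this
    obtain ⟨x0, hgx0⟩ := this
    set c : ℝ := |g x0| / 2 with hc
    have hcpos : 0 < c := by positivity
    set U : Set K' := {t | c < |g t|} with hU
    have hUo : IsOpen U := by
      have : Continuous fun t => |g t| := g.continuous.abs
      exact isOpen_lt continuous_const this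
    have hx0U : x0 ∈ U := by
      simp only [hU, Set.mem_setOf_eq, hc]
      have : 0 < |g x0| := abs_pos.2 hgx0
      linarith
    obtain ⟨x, V, z, hVo, hxV, hVU, hVdisj, hzV, hzcl⟩ :=
      exists_seq_aux hperf' x0 U hUo hx0U
    -- bump functions
    have hbump : ∀ n, ∃ f : C(K', ℝ), Set.EqOn f 0 (V n)ᶜ ∧ f (x n) = 1 ∧
        ∀ t, f t ∈ Set.Icc (0 : ℝ) 1 := by
      intro n
      obtain ⟨f, hf0, hf1, hf01⟩ := exists_continuous_zero_one_of_isClosed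
        (hVo n).isClosed_compl isClosed_singleton
        (by simp [Set.disjoint_left]; intro a ha hb; exact ha (hb ▸ hxV n))
      exact ⟨f, hf0, by simpa using hf1 rfl, hf01⟩
    choose b hb0 hb1 hb01 using hbump
    -- support facts
    have hbV : ∀ n t, t ∉ V n → b n t = 0 := fun n t ht => hb0 n ht
    have hb_one_supp : ∀ (t : K') (m n : ℕ), m ≠ n → t ∈ V m → b n t = 0 := by
      intro t m n hmn htm
      exact hbV n t fun htn => Set.disjoint_left.1 (hVdisj hmn) htm htn
    -- partial sums
    set FN : ℕ → C(K', ℝ) := fun N => ∑ n ∈ Finset.range N, b n with hFN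
    have hFN_apply : ∀ N t, FN N t = ∑ n ∈ Finset.range N, b n t := by
      intro N t
      simp [hFN]
    have hFN_mem : ∀ N t, FN N t ∈ Set.Icc (0 : ℝ) 1 := by
      intro N t
      rw [hFN_apply]
      by_cases hex : ∃ m, t ∈ V m
      · obtain ⟨m, hm⟩ := hex
        by_cases hmN : m ∈ Finset.range N
        · rw [Finset.sum_eq_single_of_mem m hmN
            (fun n _ hn => hb_one_supp t m n (Ne.symm hn) hm)]
          exact hb01 m t
        · rw [Finset.sum_eq_zero fun n hn =>
            hb_one_supp t m n (fun he => hmN (by rwa [he])) hm]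
          exact ⟨le_refl 0, zero_le_one⟩
      · push_neg at hex
        have : ∀ n ∈ Finset.range N, b n t = 0 := fun n _ => hbV n t (hex n)
        rw [Finset.sum_eq_zero this]
        exact ⟨le_refl 0, zero_le_one⟩
    have hFN_norm : ∀ N, ‖FN N‖ ≤ 1 := by
      intro N
      rw [ContinuousMap.norm_le _ zero_le_one]
      intro t
      have := hFN_mem N t
      rw [Real.norm_eq_abs, abs_le]
      constructor <;> [linarith [this.1]; exact this.2]
    -- pointwise limit function
    have hsummable : ∀ t : K', Summable fun n => b n t := by
      intro t
      by_cases hex : ∃ m, t ∈ V m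
      · obtain ⟨m, hm⟩ := hex
        apply summable_of_ne_finset_zero (s := {m})
        intro n hn
        exact hb_one_supp t m n (fun he => hn (by simp [he])) hm
      · push_neg at hex
        apply summable_of_ne_finset_zero (s := (∅ : Finset ℕ))
        intro n _
        exact hbV n t (hex n)
    set F : K' → ℝ := fun t => ∑' n, b n t with hF
    have hFtend : ∀ t, Tendsto (fun N => FN N t) atTop (𝓝 (F t)) := by
      intro t
      have := (hsummable t).hasSum.tendsto_sum_nat
      simpa only [hFN_apply] using this
    have hFx : ∀ n, F (x n) = 1 := by
      intro n
      show (∑' m, b m (x n)) = 1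
      rw [tsum_eq_single n]
      · exact hb1 n
      · intro m hm
        exact hb_one_supp (x n) n m (Ne.symm hm) (hxV n)
    have hFz : F z = 0 := by
      show (∑' m, b m z) = 0
      convert tsum_zero with n
      exact hbV n z (hzV n)
    -- the weak cluster point
    set u : ℕ → WeakSpace ℝ C(K'', ℝ) := fun N => toWeakSpace ℝ C(K'', ℝ) (S (FN N)) with hu
    have humem : ∀ N, u N ∈ toWeakSpace ℝ C(K'', ℝ) '' closure (S '' Metric.closedBall 0 1) := by
      intro N
      exact ⟨S (FN N), subset_closure ⟨FN N, by
        simpa [Metric.mem_closedBall, dist_zero_right] using hFN_norm N, rfl⟩, rfl⟩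
    have hle : Filter.map u atTop ≤
        Filter.principal (toWeakSpace ℝ C(K'', ℝ) '' closure (S '' Metric.closedBall 0 1)) := by
      rw [Filter.le_principal_iff, Filter.mem_map]
      exact Filter.mem_of_superset Filter.univ_mem fun N _ => humem N
    obtain ⟨w, hwmem, hw⟩ := hS.exists_clusterPt (f := Filter.map u atTop) hle
    have hwcl : MapClusterPt w atTop u := hw
    set hcont : C(K'', ℝ) := (toWeakSpace ℝ C(K'', ℝ)).symm w with hhcont
    -- evaluation of the weak cluster point
    have hval : ∀ y : K'', hcont y = g (i y) * F (i y) := by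
      intro y
      set Ly : C(K'', ℝ) →L[ℝ] ℝ := ContinuousMap.evalCLM ℝ y with hLy
      have hclw0 := hwcl.continuousAt_comp
        (WeakBilin.eval_continuous (topDualPairing ℝ C(K'', ℝ)).flip Ly).continuousAt
      have hclw : MapClusterPt (hcont y) atTop (fun N => S (FN N) y) := hclw0
      have htend : Tendsto (fun N => S (FN N) y) atTop (𝓝 (g (i y) * F (i y))) := by
        have : ∀ N, S (FN N) y = g (i y) * FN N (i y) := fun N => hSf (FN N) y
        simp only [this]
        exact (hFtend (i y)).const_mul _
      exact clusterPt_unique_of_tendsto hclw htend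
    -- contradiction via discontinuity at z
    set y' : ℕ → K'' := fun n => i.symm (x n) with hy'
    have hval_n : ∀ n, hcont (y' n) = g (x n) := by
      intro n
      rw [hval (y' n)]
      simp only [hy', Homeomorph.apply_symm_apply]
      rw [hFx n, mul_one]
    have hval_z : hcont (i.symm z) = 0 := by
      rw [hval (i.symm z)]
      simp only [Homeomorph.apply_symm_apply]
      rw [hFz, mul_zero]
    have hclz : MapClusterPt (i.symm z) atTop y' :=
      hzcl.continuousAt_comp (i.symm.continuous.continuousAt)
    have hclhz : MapClusterPt (hcont (i.symm z)) atTop (fun n => hcont (y' n)) :=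
      hclz.continuousAt_comp hcont.continuous.continuousAt
    rw [hval_z] at hclhz
    have hball : Metric.ball (0 : ℝ) c ∈ 𝓝 (0 : ℝ) := Metric.ball_mem_nhds 0 hcpos
    have hfreq := (mapClusterPt_iff_frequently.1 hclhz) _ hball
    obtain ⟨n, hn⟩ := hfreq.exists
    rw [hval_n n] at hn
    have hxnU : x n ∈ U := hVU n (hxV n)
    simp only [hU, Set.mem_setOf_eq] at hxnU
    rw [Metric.mem_ball, Real.dist_eq, sub_zero] at hn
    linarith
  refine ⟨hkey, ?_⟩
  ext f y
  have := hSf f y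
  rw [hg, hkey] at this
  simpa using this
end
end

section
/- Let V = c₀({1,2}×ℕ) be the Banach space of real-valued functions on the discrete set {1,2}×ℕ which vanish at infinity, with the supremum norm; let V₁ = {f ∈ V : f(2,n) = 0 for all n}, V₂ = {f ∈ V : f(1,n) = 0 for all n}, and let e_{(i,n)} denote the standard unit vectors. Suppose T : V → V is a bounded linear operator such that T(V₁) ⊆ V₁, T(V₂) ⊆ V₂, T(e_{(1,0)}) = 0, the restriction of T to the hyperplane {f ∈ V₁ : f(1,0) = 0} is an isomorphism onto V₁, and the restriction of T to V₂ is an isomorphism onto V₂. Then there exist ε > 0, a sequence (f_k) of finitely supported elements of V with pairwise disjoint supports satisfying f_k(1,n) = f_k(2,n) for all n ∈ ℕ and all k, and pairwise distinct natural numbers m_k, such that |T(f_k)(1,m_k) − T(f_k)(2,m_k)| > ε for every k. -/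
open Topology Filter ZeroAtInfty

noncomputable section

set_option maxHeartbeats 1000000
set_option synthInstance.maxHeartbeats 400000

namespace DetectingShiftsAux

abbrev V := C₀(Fin 2 × ℕ, ℝ)

lemma apply_le_norm (f : V) (j : Fin 2 × ℕ) : |f j| ≤ ‖f‖ := by
  rw [← ZeroAtInftyContinuousMap.norm_toBCF_eq_norm]
  exact f.toBCF.norm_coe_le_norm j

lemma norm_le_of (f : V) (C : ℝ) (h0 : 0 ≤ C) (h : ∀ j, |f j| ≤ C) : ‖f‖ ≤ C := by
  rw [← ZeroAtInftyContinuousMap.norm_toBCF_eq_norm]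
  exact BoundedContinuousFunction.norm_le h0 |>.2 h

lemma finite_large (f : V) {δ : ℝ} (hδ : 0 < δ) : {j | δ ≤ |f j|}.Finite := by
  have h := f.zero_at_infty'
  rw [cocompact_eq_cofinite] at h
  have : ∀ᶠ j in cofinite, f j ∈ Metric.ball (0:ℝ) δ := h (Metric.ball_mem_nhds 0 hδ)
  rw [eventually_cofinite] at this
  apply this.subset
  intro j hj
  simp only [Set.mem_setOf_eq, Metric.mem_ball, Real.dist_eq, sub_zero] at *
  linarith

def evalL (j : Fin 2 × ℕ) : V →ₗ[ℝ] ℝ where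
  toFun f := f j
  map_add' f g := by simp
  map_smul' c f := by simp

def sw : Fin 2 × ℕ ≃ Fin 2 × ℕ := (Equiv.swap 0 1).prodCongr (Equiv.refl ℕ)

lemma sw_apply (i : Fin 2) (n : ℕ) : sw (i, n) = (Equiv.swap 0 1 i, n) := rfl

lemma sw_sw (j : Fin 2 × ℕ) : sw (sw j) = j := by
  obtain ⟨i, n⟩ := j
  simp [sw_apply, Equiv.swap_apply_self]

def swf (f : V) : V := by
  refine ⟨⟨fun j => f (sw j), continuous_of_discreteTopology⟩, ?_⟩
  rw [cocompact_eq_cofinite, tendsto_def]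
  intro s hs
  have h := f.zero_at_infty'
  rw [cocompact_eq_cofinite, tendsto_def] at h
  have := h s hs
  rw [mem_cofinite] at this ⊢
  have : ((fun j => f (sw j)) ⁻¹' s)ᶜ = sw ⁻¹' ({x | f x ∈ s}ᶜ) := rfl
  rw [this]
  exact (h s hs).preimage (sw.injective.injOn)

lemma swf_apply (f : V) (j : Fin 2 × ℕ) : swf f j = f (sw j) := rfl

lemma swf_apply0 (f : V) (n : ℕ) : swf f (0, n) = f (1, n) := by
  rw [swf_apply, sw_apply, Equiv.swap_apply_left]

lemma swf_apply1 (f : V) (n : ℕ) : swf f (1, n) = f (0, n) := by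
  rw [swf_apply, sw_apply, Equiv.swap_apply_right]

def σL : V →ₗ[ℝ] V where
  toFun := swf
  map_add' f g := by ext j; simp [swf_apply]
  map_smul' c f := by ext j; simp [swf_apply]

lemma norm_swf_le (f : V) : ‖swf f‖ ≤ ‖f‖ :=
  norm_le_of _ _ (norm_nonneg f) (fun j => (swf_apply f j) ▸ apply_le_norm f (sw j))

def W₁ : Submodule ℝ V where
  carrier := {f | ∀ n, f (1, n) = 0}
  add_mem' hf hg := by intro n; simp only [ZeroAtInftyContinuousMap.coe_add, Pi.add_apply]; rw [hf n, hg n]; ring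
  zero_mem' := by intro n; rfl
  smul_mem' c f hf := by intro n; simp only [ZeroAtInftyContinuousMap.coe_smul, Pi.smul_apply]; rw [hf n]; simp

section withE
variable (e : Fin 2 × ℕ → V) (he : ∀ (i j : Fin 2 × ℕ), e i j = if j = i then 1 else 0)

def J : (ℕ →₀ ℝ) →ₗ[ℝ] V :=
  Finsupp.lsum ℝ (fun n => LinearMap.toSpanSingleton ℝ V (e (0, n) + e (1, n)))

lemma J_apply (he : ∀ (i j : Fin 2 × ℕ), e i j = if j = i then 1 else 0) (x : ℕ →₀ ℝ) (i : Fin 2) (n : ℕ) : J e x (i, n) = x n := by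
  have : J e x (i, n) = evalL (i, n) (J e x) := rfl
  rw [this]
  rw [J, Finsupp.lsum_apply]
  rw [Finsupp.sum, map_sum]
  have key : ∀ n' ∈ x.support, evalL (i,n) (LinearMap.toSpanSingleton ℝ V (e (0, n') + e (1, n')) (x n'))
      = if n' = n then x n' else 0 := by
    intro n' _
    simp only [LinearMap.toSpanSingleton_apply, evalL, LinearMap.coe_mk, AddHom.coe_mk,
      ZeroAtInftyContinuousMap.coe_smul, ZeroAtInftyContinuousMap.coe_add, Pi.smul_apply,
      Pi.add_apply, he, Prod.mk.injEq, smul_eq_mul]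
    rcases eq_or_ne n' n with h | h
    · subst h
      fin_cases i <;> simp
    · simp [h, Ne.symm h]
  rw [Finset.sum_congr rfl key, Finset.sum_ite_eq' x.support n (fun n' => x n')]
  split
  · rfl
  · next h => exact (Finsupp.notMem_support_iff.mp h).symm
end withE

lemma greedy {P : Finset ℕ → Finset ℕ → (ℕ →₀ ℝ) → ℕ → Prop}
    (h : ∀ S M, ∃ x m, P S M x m) :
    ∃ (x : ℕ → (ℕ →₀ ℝ)) (m : ℕ → ℕ),
      ∀ k, P ((Finset.range k).biUnion (fun l => (x l).support))
            ((Finset.range k).image m) (x k) (m k) := by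
  have h' : ∀ S M : Finset ℕ, ∃ p : (ℕ →₀ ℝ) × ℕ, P S M p.1 p.2 := by
    intro S M; obtain ⟨x, m, hx⟩ := h S M; exact ⟨(x, m), hx⟩
  let pick : Finset ℕ × Finset ℕ → (ℕ →₀ ℝ) × ℕ := fun s => (h' s.1 s.2).choose
  let st : ℕ → Finset ℕ × Finset ℕ := fun k =>
    Nat.rec (∅, ∅) (fun _ s => (s.1 ∪ (pick s).1.support, insert (pick s).2 s.2)) k
  have hst : ∀ k, st (k+1) = ((st k).1 ∪ (pick (st k)).1.support, insert (pick (st k)).2 (st k).2) :=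
    fun k => rfl
  refine ⟨fun k => (pick (st k)).1, fun k => (pick (st k)).2, ?_⟩
  have key : ∀ k, st k = ((Finset.range k).biUnion (fun l => (pick (st l)).1.support),
      (Finset.range k).image (fun l => (pick (st l)).2)) := by
    intro k
    induction k with
    | zero => rfl
    | succ k ih =>
      rw [hst k, Finset.range_add_one, Finset.biUnion_insert, Finset.image_insert, ih]
      simp only [Prod.mk.injEq]
      exact ⟨Finset.union_comm _ _, trivial⟩
  intro k
  have h1 : (Finset.range k).biUnion (fun l => (pick (st l)).1.support) = (st k).1 := by
    rw [key k]
  have h2 : (Finset.range k).image (fun l => (pick (st l)).2) = (st k).2 := by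
    rw [key k]
  rw [h1, h2]
  exact (h' (st k).1 (st k).2).choose_spec

lemma σL_apply (f : V) : σL f = swf f := rfl

lemma evalL_apply (j : Fin 2 × ℕ) (f : V) : evalL j f = f j := rfl

lemma swf_swf (f : V) : swf (swf f) = f := by
  ext j
  rw [swf_apply, swf_apply, sw_sw]

lemma swf_add (f g : V) : swf (f + g) = swf f + swf g := map_add σL f g

lemma swf_sub (f g : V) : swf (f - g) = swf f - swf g := map_sub σL f g

lemma swf_zero : swf (0 : V) = 0 := map_zero σL

lemma norm_eq_zero_of (f : V) (h : ‖f‖ ≤ 0) : f = 0 := norm_le_zero_iff.mp h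

-- row-zero embedding of a finsupp
def row (e : Fin 2 × ℕ → V) (x : ℕ →₀ ℝ) : V := ∑ n ∈ x.support, x n • e (0, n)

lemma row_apply (e : Fin 2 × ℕ → V) (he : ∀ (i j : Fin 2 × ℕ), e i j = if j = i then 1 else 0)
    (x : ℕ →₀ ℝ) (i : Fin 2) (n : ℕ) :
    row e x (i, n) = if i = 0 then x n else 0 := by
  have hcoe : row e x (i, n) = ∑ n' ∈ x.support, x n' * (e (0, n') (i, n)) := by
    rw [← evalL_apply, row, map_sum]
    refine Finset.sum_congr rfl (fun n' _ => ?_)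
    rw [map_smul, evalL_apply]; rfl
  rw [hcoe]
  rcases eq_or_ne i 0 with hi | hi
  · subst hi
    simp only [he, Prod.mk.injEq, true_and, mul_ite, mul_one, mul_zero, if_true]
    rw [Finset.sum_ite_eq x.support n (fun n' => x n')]
    split
    · rfl
    · next h => exact (Finsupp.notMem_support_iff.mp h).symm
  · have hi1 : i = 1 := by omega
    subst hi1
    simp only [he, Prod.mk.injEq]
    rw [if_neg (by decide)]
    refine Finset.sum_eq_zero (fun n' _ => ?_)
    rw [if_neg (by simp), mul_zero]

lemma fin2 (i : Fin 2) : i = 0 ∨ i = 1 := by omega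

lemma J_decomp (e : Fin 2 × ℕ → V) (he : ∀ (i j : Fin 2 × ℕ), e i j = if j = i then 1 else 0)
    (x : ℕ →₀ ℝ) : J e x = row e x + swf (row e x) := by
  ext ⟨i, n⟩
  simp only [ZeroAtInftyContinuousMap.coe_add, Pi.add_apply]
  rcases fin2 i with rfl | rfl
  · rw [J_apply e he, row_apply e he, swf_apply0, row_apply e he]
    simp
  · rw [J_apply e he, row_apply e he, swf_apply1, row_apply e he]
    simp

lemma lemmaK (T : V →L[ℝ] V) (e : Fin 2 × ℕ → V)
    (he : ∀ (i j : Fin 2 × ℕ), e i j = if j = i then 1 else 0)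
    (hTV₁ : ∀ f : V, (∀ n, f (1, n) = 0) → ∀ n, T f (1, n) = 0)
    (hTV₂ : ∀ f : V, (∀ n, f (0, n) = 0) → ∀ n, T f (0, n) = 0)
    (S₀ M₀ : Finset ℕ)
    (hzero : ∀ (x : ℕ →₀ ℝ), (∀ n ∈ S₀, x n = 0) → ∀ m ∉ M₀,
      T (J e x) ((0:Fin 2), m) - T (J e x) ((1:Fin 2), m) = 0)
    (f : V) (hf1 : ∀ n, f (1, n) = 0) (hfS : ∀ n ∈ S₀, f (0, n) = 0) :
    ∀ m ∉ M₀, T f ((0:Fin 2), m) - T (swf f) ((1:Fin 2), m) = 0 := by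
  intro m hm
  have key : ∀ δ : ℝ, 0 < δ → |T f ((0:Fin 2), m) - T (swf f) ((1:Fin 2), m)| ≤ 2 * ‖T‖ * δ := by
    intro δ hδ
    -- build the truncation
    set K := (finite_large f hδ).toFinset with hK
    set B : Finset ℕ := K.image Prod.snd with hB
    set g : ℕ → ℝ := fun n => if δ ≤ |f (0, n)| then f (0, n) else 0 with hg
    have hsupp : ∀ n : ℕ, g n ≠ 0 → n ∈ B := by
      intro n hn
      rw [hg] at hn
      by_cases h : δ ≤ |f (0, n)|
      · refine Finset.mem_image.2 ⟨((0:Fin 2), n), ?_, rfl⟩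
        rw [hK, Set.Finite.mem_toFinset]
        exact h
      · simp [h] at hn
    set x : ℕ →₀ ℝ := Finsupp.onFinset B g hsupp with hx
    have hxap : ∀ n, x n = g n := fun n => rfl
    have hxS : ∀ n ∈ S₀, x n = 0 := by
      intro n hn
      rw [hxap, hg]
      simp only [hfS n hn, abs_zero]
      rw [if_neg (by linarith)]
    set r := row e x with hr
    have hr1 : ∀ n, r (1, n) = 0 := by
      intro n; rw [hr, row_apply e he]; simp
    have hsw0 : ∀ n, swf r (0, n) = 0 := fun n => (swf_apply0 r n).trans (hr1 n)
    -- the value for the truncation vanishes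
    have htrunc : T r ((0:Fin 2), m) - T (swf r) ((1:Fin 2), m) = 0 := by
      have h1 : T (J e x) ((0:Fin 2), m) = T r ((0:Fin 2), m) := by
        rw [J_decomp e he x, ← hr, map_add]
        simp only [ZeroAtInftyContinuousMap.coe_add, Pi.add_apply]
        rw [hTV₂ (swf r) hsw0 m, add_zero]
      have h2 : T (J e x) ((1:Fin 2), m) = T (swf r) ((1:Fin 2), m) := by
        rw [J_decomp e he x, ← hr, map_add]
        simp only [ZeroAtInftyContinuousMap.coe_add, Pi.add_apply]
        rw [hTV₁ r hr1 m, zero_add]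
      rw [← h1, ← h2]
      exact hzero x hxS m hm
    -- the remainder is small
    have hnear : ‖f - r‖ ≤ δ := by
      apply norm_le_of _ _ (le_of_lt hδ)
      rintro ⟨i, n⟩
      simp only [ZeroAtInftyContinuousMap.coe_sub, Pi.sub_apply]
      rcases fin2 i with rfl | rfl
      · rw [row_apply e he, if_pos rfl, hxap]
        simp only [hg]
        by_cases h : δ ≤ |f (0, n)|
        · rw [if_pos h]; simpa using le_of_lt hδ
        · rw [if_neg h, sub_zero]
          exact le_of_not_ge h
      · rw [hf1 n, row_apply e he]
        norm_num
        exact le_of_lt hδ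
    calc |T f ((0:Fin 2), m) - T (swf f) ((1:Fin 2), m)|
        = |(T (f - r) ((0:Fin 2), m) - T (swf (f - r)) ((1:Fin 2), m))
            + (T r ((0:Fin 2), m) - T (swf r) ((1:Fin 2), m))| := by
          rw [swf_sub, map_sub, map_sub]
          simp only [ZeroAtInftyContinuousMap.coe_sub, Pi.sub_apply]
          ring_nf
      _ ≤ |T (f - r) ((0:Fin 2), m) - T (swf (f - r)) ((1:Fin 2), m)| + 0 := by
          rw [htrunc, add_zero, abs_sub_comm]
          simpa using abs_sub (T (f - r) ((0:Fin 2), m)) (T (swf (f - r)) ((1:Fin 2), m))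
      _ ≤ 2 * ‖T‖ * δ := by
          rw [add_zero]
          have b1 : |T (f - r) ((0:Fin 2), m)| ≤ ‖T‖ * δ := by
            refine le_trans (apply_le_norm _ _) (le_trans (T.le_opNorm _) ?_)
            exact mul_le_mul_of_nonneg_left hnear (norm_nonneg T)
          have b2 : |T (swf (f - r)) ((1:Fin 2), m)| ≤ ‖T‖ * δ := by
            refine le_trans (apply_le_norm _ _) (le_trans (T.le_opNorm _) ?_)
            refine mul_le_mul_of_nonneg_left (le_trans (norm_swf_le _) hnear) (norm_nonneg T)
          calc |T (f - r) ((0:Fin 2), m) - T (swf (f - r)) ((1:Fin 2), m)|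
              ≤ |T (f - r) ((0:Fin 2), m)| + |T (swf (f - r)) ((1:Fin 2), m)| := abs_sub _ _
            _ ≤ ‖T‖ * δ + ‖T‖ * δ := add_le_add b1 b2
            _ = 2 * ‖T‖ * δ := by ring
  by_contra hne
  have hpos : 0 < |T f ((0:Fin 2), m) - T (swf f) ((1:Fin 2), m)| := abs_pos.2 hne
  set c := |T f ((0:Fin 2), m) - T (swf f) ((1:Fin 2), m)| with hc
  have := key (c / (2 * ‖T‖ + 1)) (by positivity)
  have hTn : 0 ≤ ‖T‖ := norm_nonneg T
  have hd : (0:ℝ) < c / (2 * ‖T‖ + 1) := by positivity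
  have hdc : c / (2 * ‖T‖ + 1) * (2 * ‖T‖ + 1) = c := div_mul_cancel₀ _ (by positivity)
  nlinarith [this, hd, hdc]

lemma fd_range {K M ι : Type*} [Field K] [AddCommGroup M] [Module K M] [Fintype ι]
    (Φ : M →ₗ[K] (ι → K)) (Fm : M →ₗ[K] M) (h : LinearMap.ker Φ ≤ LinearMap.ker Fm) :
    FiniteDimensional K (LinearMap.range Fm) := by
  have h1 : FiniteDimensional K (M ⧸ LinearMap.ker Φ) :=
    LinearEquiv.finiteDimensional (Φ.quotKerEquivRange).symm
  have h2 : LinearMap.range Fm = LinearMap.range (Submodule.liftQ (LinearMap.ker Φ) Fm h) :=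
    (Submodule.range_liftQ _ _ _).symm
  rw [h2]
  infer_instance

lemma abstract_contra {K M : Type*} [Field K] [AddCommGroup M] [Module K M]
    (C Fm : M →ₗ[K] M) (hCF : ∀ f, C f = f + Fm f)
    (e₀ : M) (he₀ : e₀ ≠ 0) (hCe₀ : C e₀ = 0) (hCsurj : Function.Surjective C)
    (hFfd : FiniteDimensional K (LinearMap.range Fm)) : False := by
  set Mfd : Submodule K M := LinearMap.range Fm ⊔ Submodule.span K {e₀} with hMfd
  have hMfdfd : FiniteDimensional K Mfd := by infer_instance
  have hCM : ∀ u ∈ Mfd, C u ∈ Mfd := by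
    intro u hu
    rw [hCF]
    exact Submodule.add_mem _ hu
      (le_sup_left (α := Submodule K M) (LinearMap.mem_range_self Fm u))
  set Cres : Mfd →ₗ[K] Mfd := C.restrict hCM with hCres
  have he₀M : e₀ ∈ Mfd :=
    le_sup_right (α := Submodule K M) (Submodule.mem_span_singleton_self e₀)
  have hCresninj : ¬ Function.Injective Cres := by
    intro hinj
    have h1 : Cres ⟨e₀, he₀M⟩ = 0 := Subtype.ext (by show C e₀ = 0; exact hCe₀)
    have h2 : (⟨e₀, he₀M⟩ : Mfd) = 0 := by
      apply hinj
      rw [h1, map_zero]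
    exact he₀ (congrArg Subtype.val h2)
  have hCresnsurj : ¬ Function.Surjective Cres := by
    intro hsurj
    exact hCresninj ((LinearMap.injective_iff_surjective).mpr hsurj)
  rw [Function.Surjective] at hCresnsurj
  push_neg at hCresnsurj
  obtain ⟨v, hv⟩ := hCresnsurj
  obtain ⟨x, hx⟩ := hCsurj (v : M)
  have hFx : Fm x ∈ Mfd :=
    le_sup_left (α := Submodule K M) (LinearMap.mem_range_self Fm x)
  have hxM : x ∈ Mfd := by
    have hxv : x + Fm x = (v : M) := by rw [← hCF x, hx]
    rw [eq_sub_of_add_eq hxv]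
    exact Submodule.sub_mem _ v.2 hFx
  exact hv ⟨x, hxM⟩ (Subtype.ext (by show C x = (v : M); exact hx))

lemma abstract_contra2 {K M ι : Type _} [Field K] [AddCommGroup M] [Module K M] [Fintype ι]
    (C Fm : M →ₗ[K] M) (Φ : M →ₗ[K] (ι → K)) (hYF : LinearMap.ker Φ ≤ LinearMap.ker Fm)
    (hCF : ∀ f, C f = f + Fm f)
    (e₀ : M) (he₀ : e₀ ≠ 0) (hCe₀ : C e₀ = 0) (hCsurj : Function.Surjective C) : False :=
  abstract_contra C Fm hCF e₀ he₀ hCe₀ hCsurj (fd_range Φ Fm hYF)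

lemma mem_W₁ (f : V) : f ∈ W₁ ↔ ∀ n, f (1, n) = 0 := Iff.rfl

section algebra
variable (T : V →L[ℝ] V)

def bT' : V →ₗ[ℝ] V := σL ∘ₗ (T : V →ₗ[ℝ] V) ∘ₗ σL

lemma bT'_apply (f : V) : bT' T f = swf (T (swf f)) := by
  simp only [bT', LinearMap.comp_apply, σL_apply, ContinuousLinearMap.coe_coe]

lemma main_contra
    (e : Fin 2 × ℕ → V)
    (he : ∀ (i j : Fin 2 × ℕ), e i j = if j = i then 1 else 0)
    (hTV₁ : ∀ f : V, (∀ n, f (1, n) = 0) → ∀ n, T f (1, n) = 0)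
    (hTV₂ : ∀ f : V, (∀ n, f (0, n) = 0) → ∀ n, T f (0, n) = 0)
    (hTe : T (e (0, 0)) = 0)
    (hontoV₁ : ∀ g : V, (∀ n, g (1, n) = 0) →
      ∃ f : V, (∀ n, f (1, n) = 0) ∧ f (0, 0) = 0 ∧ T f = g)
    (hontoV₂ : ∀ g : V, (∀ n, g (0, n) = 0) →
      ∃ f : V, (∀ n, f (0, n) = 0) ∧ T f = g)
    (hbelowV₂ : ∃ c : ℝ, 0 < c ∧ ∀ f : V, (∀ n, f (0, n) = 0) → c * ‖f‖ ≤ ‖T f‖)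
    (S₀ M₀ : Finset ℕ)
    (hK : ∀ f : V, (∀ n, f (1, n) = 0) → (∀ n ∈ S₀, f (0, n) = 0) →
      ∀ m ∉ M₀, T f ((0:Fin 2), m) - T (swf f) ((1:Fin 2), m) = 0) : False := by
  classical
  -- the two operators on W₁
  have haW : ∀ f ∈ W₁, (T : V →ₗ[ℝ] V) f ∈ W₁ := fun f hf => hTV₁ f hf
  have hbW : ∀ f ∈ W₁, bT' T f ∈ W₁ := by
    intro f hf n
    rw [bT'_apply, swf_apply1]
    exact hTV₂ (swf f) (fun n' => (swf_apply0 f n').trans (hf n')) n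
  set a : W₁ →ₗ[ℝ] W₁ := LinearMap.restrict _ haW with ha
  set b : W₁ →ₗ[ℝ] W₁ := LinearMap.restrict _ hbW with hb
  have ha_apply : ∀ f : W₁, (a f : V) = T f := fun f => rfl
  have hb_apply : ∀ f : W₁, (b f : V) = swf (T (swf f)) := fun f => bT'_apply T f
  -- the difference operator d
  have hdW : ∀ f ∈ W₁, ((T : V →ₗ[ℝ] V) - bT' T) f ∈ W₁ := by
    intro f hf
    have : ((T : V →ₗ[ℝ] V) - bT' T) f = (T : V →ₗ[ℝ] V) f - bT' T f := rfl
    rw [this]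
    exact Submodule.sub_mem _ (haW f hf) (hbW f hf)
  set d : W₁ →ₗ[ℝ] W₁ := LinearMap.restrict _ hdW with hd
  have hd_apply : ∀ f : W₁, (d f : V) = T f - swf (T (swf (f : V))) := by
    intro f
    show ((T : V →ₗ[ℝ] V) - bT' T) (f : V) = _
    rw [LinearMap.sub_apply, bT'_apply]
    rfl
  -- b is bijective
  have hbinj : Function.Injective b := by
    intro f g hfg
    obtain ⟨c, hc, hbel⟩ := hbelowV₂
    have h1 : swf (T (swf (f : V))) = swf (T (swf (g : V))) := by
      rw [← hb_apply, ← hb_apply, hfg]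
    have h2 : T (swf (f : V)) = T (swf (g : V)) := by
      have := congrArg swf h1
      rwa [swf_swf, swf_swf] at this
    have h3 : T (swf ((f : V) - g)) = 0 := by
      rw [swf_sub, map_sub, h2, sub_self]
    have h4 : ∀ n, swf ((f : V) - g) ((0:Fin 2), n) = 0 := by
      intro n
      rw [swf_apply0]
      simp only [ZeroAtInftyContinuousMap.coe_sub, Pi.sub_apply]
      rw [f.2 n, g.2 n, sub_self]
    have h5 := hbel _ h4
    rw [h3, norm_zero] at h5
    have h6 : swf ((f : V) - g) = 0 := by
      apply norm_eq_zero_of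
      nlinarith [norm_nonneg (swf ((f : V) - g))]
    have h7 : (f : V) - g = 0 := by
      have := congrArg swf h6
      rwa [swf_swf, swf_zero] at this
    exact Subtype.ext (by rw [← sub_eq_zero]; exact h7)
  have hbsurj : Function.Surjective b := by
    intro g
    have hg0 : ∀ n, swf (g : V) ((0:Fin 2), n) = 0 := fun n => (swf_apply0 _ n).trans (g.2 n)
    obtain ⟨h, hh0, hTh⟩ := hontoV₂ (swf (g : V)) hg0
    refine ⟨⟨swf h, fun n => (swf_apply1 h n).trans (hh0 n)⟩, ?_⟩
    apply Subtype.ext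
    rw [hb_apply]
    show swf (T (swf (swf h))) = (g : V)
    rw [swf_swf, hTh, swf_swf]
  set bE : W₁ ≃ₗ[ℝ] W₁ := LinearEquiv.ofBijective b ⟨hbinj, hbsurj⟩ with hbE
  -- C and F
  set C : W₁ →ₗ[ℝ] W₁ := (bE.symm : W₁ →ₗ[ℝ] W₁) ∘ₗ a with hC
  set F : W₁ →ₗ[ℝ] W₁ := (bE.symm : W₁ →ₗ[ℝ] W₁) ∘ₗ d with hF
  have hCF : ∀ f : W₁, C f = f + F f := by
    intro f
    have h1 : a f = b f + d f := by
      apply Subtype.ext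
      rw [Submodule.coe_add, ha_apply, hb_apply, hd_apply]
      abel
    rw [hC, LinearMap.comp_apply, h1, map_add]
    congr 1
    exact bE.symm_apply_apply f
  -- C kills e₀
  have he₀W : e (0, 0) ∈ W₁ := by
    intro n
    rw [he, if_neg (by simp)]
  set e₀ : W₁ := ⟨e (0, 0), he₀W⟩ with he₀
  have he₀ne : e₀ ≠ 0 := by
    intro h
    have h2 : e (0, 0) ((0:Fin 2), 0) = 0 := by
      have := congrArg (fun u : W₁ => (u : V) ((0:Fin 2), 0)) h
      simpa using this
    rw [he] at h2
    simp at h2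
  have hae₀ : a e₀ = 0 := by
    apply Subtype.ext
    rw [ha_apply]
    show T (e (0,0)) = 0
    exact hTe
  have hCe₀ : C e₀ = 0 := by
    rw [hC, LinearMap.comp_apply, hae₀, map_zero]
  -- C is surjective
  have hasurj : Function.Surjective a := by
    intro g
    obtain ⟨f, hf1, _, hTf⟩ := hontoV₁ (g : V) g.2
    exact ⟨⟨f, hf1⟩, Subtype.ext hTf⟩
  have hCsurj : Function.Surjective C := by
    intro g
    obtain ⟨f, hf⟩ := hasurj (bE g)
    exact ⟨f, by rw [hC, LinearMap.comp_apply, hf]; exact bE.symm_apply_apply g⟩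
  -- the finite-codimension subspace Y = ker Φ
  set Φ : W₁ →ₗ[ℝ] ((↥S₀ ⊕ ↥M₀) → ℝ) := LinearMap.pi
    (fun k => Sum.elim
      (fun (n : ↥S₀) => evalL ((0:Fin 2), n.1) ∘ₗ W₁.subtype)
      (fun (m : ↥M₀) => evalL ((0:Fin 2), m.1) ∘ₗ W₁.subtype ∘ₗ d) k) with hΦ
  -- ker Φ is contained in the kernel of F
  have hYd : LinearMap.ker Φ ≤ LinearMap.ker d := by
    intro f hf
    rw [LinearMap.mem_ker] at hf ⊢
    apply Subtype.ext
    rw [hd_apply]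
    show T (f : V) - swf (T (swf (f : V))) = (0 : V)
    ext ⟨i, n⟩
    simp only [ZeroAtInftyContinuousMap.coe_sub, Pi.sub_apply,
      ZeroAtInftyContinuousMap.coe_zero, Pi.zero_apply]
    rcases fin2 i with rfl | rfl
    · rw [swf_apply0]
      by_cases hn : n ∈ M₀
      · have h3 := congrFun hf (Sum.inr ⟨n, hn⟩)
        simp only [hΦ, LinearMap.pi_apply, Sum.elim_inr, LinearMap.comp_apply,
          Submodule.subtype_apply, Pi.zero_apply, evalL_apply] at h3
        rw [hd_apply] at h3
        simp only [ZeroAtInftyContinuousMap.coe_sub, Pi.sub_apply] at h3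
        rw [swf_apply0] at h3
        exact h3
      · have hfS : ∀ n' ∈ S₀, (f : V) ((0:Fin 2), n') = 0 := by
          intro n' hn'
          have h4 := congrFun hf (Sum.inl ⟨n', hn'⟩)
          simp only [hΦ, LinearMap.pi_apply, Sum.elim_inl, LinearMap.comp_apply,
            Submodule.subtype_apply, Pi.zero_apply, evalL_apply] at h4
          exact h4
        exact hK (f : V) f.2 hfS n hn
    · rw [swf_apply1]
      have h1 : T (f : V) ((1:Fin 2), n) = 0 := hTV₁ (f : V) f.2 n
      have h2 : T (swf (f : V)) ((0:Fin 2), n) = 0 := by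
        apply hTV₂
        intro n'
        rw [swf_apply0]
        exact f.2 n'
      rw [h1, h2, sub_self]
  have hYF : LinearMap.ker Φ ≤ LinearMap.ker F := by
    intro f hf
    rw [LinearMap.mem_ker]
    rw [hF, LinearMap.comp_apply, hYd hf, map_zero]
  exact abstract_contra2 C F Φ hYF hCF e₀ he₀ne hCe₀ hCsurj

end algebra

end DetectingShiftsAux

open DetectingShiftsAux

/-- Detecting shifts: let `V = c₀({1,2} × ℕ)` (here the two-point index set is `Fin 2`, with
`0` playing the role of `1` and `1` the role of `2`), `V₁ = {f : f(2,·) = 0}`,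
`V₂ = {f : f(1,·) = 0}`.  If `T : V → V` preserves `V₁` and `V₂`, kills `e_{(1,0)}`, maps the
hyperplane `{f ∈ V₁ : f(1,0) = 0}` isomorphically onto `V₁` and maps `V₂` isomorphically onto
`V₂`, then there are `ε > 0`, finitely supported `f_k` with pairwise disjoint supports and
`f_k(1,n) = f_k(2,n)` for all `n`, and pairwise distinct `m_k`, with
`|T(f_k)(1,m_k) − T(f_k)(2,m_k)| > ε` for all `k`. -/
theorem detecting_shifts
    (T : C₀(Fin 2 × ℕ, ℝ) →L[ℝ] C₀(Fin 2 × ℕ, ℝ))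
    (e : Fin 2 × ℕ → C₀(Fin 2 × ℕ, ℝ))
    (he : ∀ (i j : Fin 2 × ℕ), e i j = if j = i then 1 else 0)
    (hTV₁ : ∀ f : C₀(Fin 2 × ℕ, ℝ), (∀ n, f (1, n) = 0) → ∀ n, T f (1, n) = 0)
    (hTV₂ : ∀ f : C₀(Fin 2 × ℕ, ℝ), (∀ n, f (0, n) = 0) → ∀ n, T f (0, n) = 0)
    (hTe : T (e (0, 0)) = 0)
    (hontoV₁ : ∀ g : C₀(Fin 2 × ℕ, ℝ), (∀ n, g (1, n) = 0) →
      ∃ f : C₀(Fin 2 × ℕ, ℝ), (∀ n, f (1, n) = 0) ∧ f (0, 0) = 0 ∧ T f = g)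
    (hbelowV₁ : ∃ c : ℝ, 0 < c ∧ ∀ f : C₀(Fin 2 × ℕ, ℝ),
      (∀ n, f (1, n) = 0) → f (0, 0) = 0 → c * ‖f‖ ≤ ‖T f‖)
    (hontoV₂ : ∀ g : C₀(Fin 2 × ℕ, ℝ), (∀ n, g (0, n) = 0) →
      ∃ f : C₀(Fin 2 × ℕ, ℝ), (∀ n, f (0, n) = 0) ∧ T f = g)
    (hbelowV₂ : ∃ c : ℝ, 0 < c ∧ ∀ f : C₀(Fin 2 × ℕ, ℝ),
      (∀ n, f (0, n) = 0) → c * ‖f‖ ≤ ‖T f‖) :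
    ∃ (ε : ℝ), 0 < ε ∧ ∃ (F : ℕ → C₀(Fin 2 × ℕ, ℝ)) (m : ℕ → ℕ),
      (∀ k, {i : Fin 2 × ℕ | F k i ≠ 0}.Finite) ∧
      (∀ k l, k ≠ l → ∀ i : Fin 2 × ℕ, F k i = 0 ∨ F l i = 0) ∧
      (∀ k n, F k (0, n) = F k (1, n)) ∧
      Function.Injective m ∧
      ∀ k, ε < |T (F k) (0, m k) - T (F k) (1, m k)| := by
  by_cases hP : ∀ S M : Finset ℕ, ∃ (x : ℕ →₀ ℝ) (m : ℕ),
      m ∉ M ∧ (∀ n ∈ S, x n = 0) ∧ 1 < |T (J e x) (0, m) - T (J e x) (1, m)|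
  · obtain ⟨x, m, hx⟩ := greedy hP
    have hdisj : ∀ l k, l < k → ∀ i : Fin 2 × ℕ, J e (x k) i = 0 ∨ J e (x l) i = 0 := by
      intro l k hlk ⟨i, n⟩
      by_cases hn : x l n = 0
      · right; rw [J_apply e he, hn]
      · left
        rw [J_apply e he]
        exact (hx k).2.1 n (Finset.mem_biUnion.2 ⟨l, Finset.mem_range.2 hlk,
          Finsupp.mem_support_iff.2 hn⟩)
    refine ⟨1, one_pos, fun k => J e (x k), m, ?_, ?_, ?_, ?_, fun k => (hx k).2.2⟩
    · intro k
      apply (Set.finite_univ.prod (x k).support.finite_toSet).subset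
      rintro ⟨i, n⟩ h
      simp only [Set.mem_setOf_eq, J_apply e he] at h
      exact ⟨trivial, Finsupp.mem_support_iff.2 h⟩
    · intro k l hkl i
      rcases lt_or_gt_of_ne hkl with h | h
      · exact (hdisj k l h i).symm
      · exact hdisj l k h i
    · intro k n; rw [J_apply e he, J_apply e he]
    · intro a b hab
      by_contra hne
      rcases lt_or_gt_of_ne hne with h | h
      · exact (hx b).1 (Finset.mem_image.2 ⟨a, Finset.mem_range.2 h, hab⟩)
      · exact (hx a).1 (Finset.mem_image.2 ⟨b, Finset.mem_range.2 h, hab.symm⟩)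
  · exfalso
    push_neg at hP
    obtain ⟨S₀, M₀, hsmall⟩ := hP
    have hzero : ∀ (x : ℕ →₀ ℝ), (∀ n ∈ S₀, x n = 0) → ∀ m ∉ M₀,
        T (J e x) ((0:Fin 2), m) - T (J e x) ((1:Fin 2), m) = 0 := by
      intro x hxS m hm
      by_contra hc
      set c := T (J e x) ((0:Fin 2), m) - T (J e x) ((1:Fin 2), m) with hcdef
      have habs : 0 < |c| := abs_pos.2 hc
      have hx2 : ∀ n ∈ S₀, ((2 / |c|) • x) n = 0 := by
        intro n hn
        simp [hxS n hn]
      have hval := hsmall ((2 / |c|) • x) m hm hx2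
      have h2 : T (J e ((2 / |c|) • x)) ((0:Fin 2), m) - T (J e ((2 / |c|) • x)) ((1:Fin 2), m)
          = (2 / |c|) * c := by
        rw [map_smul, map_smul]
        simp only [ZeroAtInftyContinuousMap.coe_smul, Pi.smul_apply, smul_eq_mul]
        rw [hcdef]
        ring
      rw [h2, abs_mul, abs_of_pos (by positivity : (0:ℝ) < 2 / |c|)] at hval
      rw [div_mul_cancel₀ _ (ne_of_gt habs)] at hval
      linarith
    exact main_contra T e he hTV₁ hTV₂ hTe hontoV₁ hontoV₂ hbelowV₂ S₀ M₀
      (fun f hf1 hfS => lemmaK T e he hTV₁ hTV₂ S₀ M₀ hzero f hf1 hfS)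
end
end
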